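/- arXiv:math/0210476 — 12 statements merged into one kernel-verified Lean document; each statement's English description precedes it below -/
import Mathlib

section
/- If 0 ∈ A ∩ B, A ⊕ B = {0,1,...,n-1} is a tiling of an interval with n > 1, and max A > max B, then A is periodic modulo n, i.e., there exists t with 0 < t < n such that (A + t) mod n = A mod n as subsets of ℤ_n. -/
/-!
De Bruijn's structure of interval tilings. Suppose `1 ∈ A` and let `q` be the least nonzero
element of `B`. Then `B ⊆ qℕ`, `A` is a union of blocks `[qk, qk + q)` and `q ∣ n`, so that
`A / q ⊕ B / q = [0, n / q)` is again a tiling, still with `max (A / q) > max (B / q)`.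
By induction `A / q` has a period `t` mod `n / q`, and then `q t` is a period of `A` mod `n`.
The case `1 ∈ B` is symmetric, and if `B = {0}` then `A = [0, n)` has period `1`.
-/

/-- `A ⊕ B = {0, …, n - 1}`. -/
structure IsTiling (A B : Finset ℕ) (n : ℕ) : Prop where
  add_lt : ∀ a ∈ A, ∀ b ∈ B, a + b < n
  exists_add_eq : ∀ m < n, ∃ a ∈ A, ∃ b ∈ B, a + b = m
  add_inj : ∀ a ∈ A, ∀ b ∈ B, ∀ a' ∈ A, ∀ b' ∈ B, a + b = a' + b' → a = a' ∧ b = b'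

def BlockClosed (q : ℕ) (A : Finset ℕ) : Prop :=
  ∀ a ∈ A, ∀ j < q, q * (a / q) + j ∈ A

def BlockedBelow (q : ℕ) (A B : Finset ℕ) (M : ℕ) : Prop :=
  ∀ a ∈ A, ∀ b ∈ B, a + b < M → q ∣ b ∧ ∀ j < q, q * (a / q) + j ∈ A

def IsPeriodicMod (A : Finset ℕ) (n t : ℕ) : Prop :=
  ∀ a ∈ A, (a + t) % n ∈ A

namespace IsTiling

variable {A B : Finset ℕ} {n q : ℕ}

theorem of_existsUnique (hsum : ∀ a ∈ A, ∀ b ∈ B, a + b < n)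
    (htile : ∀ m < n, ∃! p : ℕ × ℕ, p.1 ∈ A ∧ p.2 ∈ B ∧ p.1 + p.2 = m) : IsTiling A B n where
  add_lt := hsum
  exists_add_eq m hm := by
    obtain ⟨⟨a, b⟩, ⟨ha, hb, hab⟩, -⟩ := htile m hm
    exact ⟨a, ha, b, hb, hab⟩
  add_inj a ha b hb a' ha' b' hb' h := by
    obtain ⟨p, -, hp⟩ := htile (a + b) (hsum a ha b hb)
    exact Prod.mk.inj ((hp (a, b) ⟨ha, hb, rfl⟩).trans (hp (a', b') ⟨ha', hb', h.symm⟩).symm)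

theorem symm (ht : IsTiling A B n) : IsTiling B A n where
  add_lt b hb a ha := add_comm b a ▸ ht.add_lt a ha b hb
  exists_add_eq m hm := by
    obtain ⟨a, ha, b, hb, rfl⟩ := ht.exists_add_eq m hm
    exact ⟨b, hb, a, ha, add_comm b a⟩
  add_inj b hb a ha b' hb' a' ha' h :=
    (ht.add_inj a ha b hb a' ha' b' hb' (by omega)).symm

theorem eq_zero_of_mem_of_mem (ht : IsTiling A B n) (h0A : 0 ∈ A) (h0B : 0 ∈ B) {x : ℕ}
    (hxA : x ∈ A) (hxB : x ∈ B) : x = 0 :=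
  (ht.add_inj x hxA 0 h0B 0 h0A x hxB (by simp)).1

theorem mem_of_lt (ht : IsTiling A B n) (hB : ∀ b ∈ B, b = 0) {m : ℕ} (hm : m < n) : m ∈ A := by
  obtain ⟨a, ha, b, hb, rfl⟩ := ht.exists_add_eq m hm
  simpa [hB b hb] using ha

theorem mem_of_lt_min (ht : IsTiling A B n) (h0A : 0 ∈ A) (hqB : q ∈ B)
    (hqmin : ∀ b ∈ B, b ≠ 0 → q ≤ b) {m : ℕ} (hm : m < q) : m ∈ A := by
  obtain ⟨a, ha, b, hb, rfl⟩ := ht.exists_add_eq m (by have := ht.add_lt 0 h0A q hqB; omega)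
  have hb0 : b = 0 := by
    by_contra h
    have := hqmin b hb h
    omega
  simpa [hb0] using ha

theorem mul_add_succ_mem (ht : IsTiling A B n) (h0A : 0 ∈ A) (h0B : 0 ∈ B) (hqB : q ∈ B)
    (hqmin : ∀ b ∈ B, b ≠ 0 → q ≤ b) {k : ℕ} (hC : BlockedBelow q A B (q * k))
    (hk : q * k ∈ A) {i : ℕ} (hi : i + 1 < q) (hmem : q * k + i ∈ A) :
    q * k + (i + 1) ∈ A := by
  have hlt : q * k + (i + 1) < n := by have := ht.add_lt _ hmem q hqB; omega
  obtain ⟨a, ha, b, hb, hab⟩ := ht.exists_add_eq _ hlt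
  rcases eq_or_ne b 0 with rfl | hb0
  · simpa [← hab] using ha
  exfalso
  have hqb := hqmin b hb hb0
  rcases lt_or_ge b (q * k) with hbk | hbk
  · -- `a` sits one step above `q * k + i` modulo `q`, in a full block, so `a - 1 ∈ A` gives a
    -- second representation `(a - 1) + b` of `q * k + i`.
    obtain ⟨c, rfl⟩ := (hC 0 h0A _ hb (by omega)).1
    have hblock := (hC a ha 0 h0B (by omega)).2
    have hamod : a % q = i + 1 := by
      have := congrArg (· % q) hab
      simp only [Nat.add_mul_mod_self_left, Nat.mul_add_mod, Nat.mod_eq_of_lt hi] at this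
      exact this
    have hdiv := Nat.div_add_mod a q
    have ha1 : a - 1 ∈ A := by
      have := hblock i (by omega)
      rwa [show q * (a / q) + i = a - 1 by omega] at this
    exact hb0 (ht.add_inj _ ha1 _ hb _ hmem 0 h0B (by omega)).2
  · -- `b = q * k + s` with `0 < s < q`; the collision `(q - s) + b = q * k + q` forces `k = 0`,
    -- against the minimality of `q`.
    have hbk' : b ≠ q * k := fun h => hb0 (ht.eq_zero_of_mem_of_mem h0A h0B (h ▸ hk) hb)
    have hqs : q - (b - q * k) ∈ A := ht.mem_of_lt_min h0A hqB hqmin (by omega)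
    have heq := (ht.add_inj _ hqs b hb _ hk q hqB (by omega)).1
    obtain rfl : k = 0 := Nat.lt_one_iff.mp (Nat.lt_of_mul_lt_mul_left (a := q) (by omega))
    rw [mul_zero, zero_add] at hab
    omega

theorem exists_block_of_blockedBelow (ht : IsTiling A B n) (h0A : 0 ∈ A) (h0B : 0 ∈ B)
    (hqB : q ∈ B) (hqmin : ∀ b ∈ B, b ≠ 0 → q ≤ b) {k : ℕ} (hC : BlockedBelow q A B (q * k))
    (hk : q * k < n) :
    ∃ a ∈ A, ∃ b ∈ B, a + b = q * k ∧ q ∣ a ∧ q ∣ b ∧ ∀ j < q, a + j ∈ A := by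
  obtain ⟨a, ha, b, hb, hab⟩ := ht.exists_add_eq _ hk
  rcases eq_or_ne b 0 with rfl | hb0
  · obtain rfl : a = q * k := by simpa using hab
    refine ⟨q * k, ha, 0, h0B, by simp, dvd_mul_right q k, dvd_zero q, fun j hj => ?_⟩
    induction j with
    | zero => simpa using ha
    | succ i ih => exact ht.mul_add_succ_mem h0A h0B hqB hqmin hC ha hj (ih (by omega))
  · have hqb : q ∣ b := by
      rcases eq_or_ne a 0 with rfl | ha0
      · exact ⟨k, by simpa using hab⟩
      · exact (hC 0 h0A b hb (by omega)).1
    have hqa : q ∣ a := (Nat.dvd_add_left hqb).mp (hab ▸ dvd_mul_right q k)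
    have hblock := (hC a ha 0 h0B (by have := hqmin b hb hb0; omega)).2
    refine ⟨a, ha, b, hb, hab, hqa, hqb, fun j hj => ?_⟩
    simpa [Nat.mul_div_cancel' hqa] using hblock j hj

theorem blockedBelow_succ (ht : IsTiling A B n) (h0A : 0 ∈ A) (h0B : 0 ∈ B) (hqB : q ∈ B)
    (hq : 0 < q) (hqmin : ∀ b ∈ B, b ≠ 0 → q ≤ b) {k : ℕ} (hC : BlockedBelow q A B (q * k))
    (hk : q * k < n) : q * (k + 1) ≤ n ∧ BlockedBelow q A B (q * (k + 1)) := by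
  obtain ⟨a₀, ha₀, b₀, hb₀, hab₀, hqa₀, hqb₀, hblock⟩ :=
    ht.exists_block_of_blockedBelow h0A h0B hqB hqmin hC hk
  have hlast := ht.add_lt _ (hblock (q - 1) (by omega)) b₀ hb₀
  rw [Nat.mul_succ]
  refine ⟨by omega, fun a ha b hb hab => ?_⟩
  rcases lt_or_ge (a + b) (q * k) with hlt | hge
  · exact hC a ha b hb hlt
  obtain ⟨hai, rfl⟩ :=
    ht.add_inj a ha b hb (a₀ + (a + b - q * k)) (hblock _ (by omega)) b₀ hb₀ (by omega)
  refine ⟨hqb₀, fun j hj => ?_⟩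
  obtain ⟨c, rfl⟩ := hqa₀
  rw [hai, Nat.mul_add_div hq, Nat.div_eq_of_lt (by omega), add_zero]
  exact hblock j hj

theorem blockedBelow_of_mul_le (ht : IsTiling A B n) (h0A : 0 ∈ A) (h0B : 0 ∈ B) (hqB : q ∈ B)
    (hq : 0 < q) (hqmin : ∀ b ∈ B, b ≠ 0 → q ≤ b) :
    ∀ k, q * k ≤ n → BlockedBelow q A B (q * k)
  | 0, _ => fun _ _ _ _ h => absurd h (by simp)
  | k + 1, hk =>
    (ht.blockedBelow_succ h0A h0B hqB hq hqmin
      (ht.blockedBelow_of_mul_le h0A h0B hqB hq hqmin k (by rw [Nat.mul_succ] at hk; omega))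
      (by rw [Nat.mul_succ] at hk; omega)).2

theorem dvd_and_blockClosed (ht : IsTiling A B n) (h0A : 0 ∈ A) (h0B : 0 ∈ B) (hqB : q ∈ B)
    (hq : 0 < q) (hqmin : ∀ b ∈ B, b ≠ 0 → q ≤ b) :
    q ∣ n ∧ BlockClosed q A ∧ ∀ b ∈ B, q ∣ b := by
  have hC := ht.blockedBelow_of_mul_le h0A h0B hqB hq hqmin (n / q) (Nat.mul_div_le n q)
  have hn : q * (n / q) = n := by
    by_contra hne
    have := (ht.blockedBelow_succ h0A h0B hqB hq hqmin hC
      (lt_of_le_of_ne (Nat.mul_div_le n q) hne)).1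
    have := Nat.lt_mul_div_succ n hq
    omega
  rw [hn] at hC
  exact ⟨⟨n / q, hn.symm⟩,
    fun a ha => (hC a ha 0 h0B (by simpa using ht.add_lt a ha 0 h0B)).2,
    fun b hb => (hC 0 h0A b hb (by simpa using ht.add_lt 0 h0A b hb)).1⟩

theorem exists_blockClosed (ht : IsTiling A B n) (h0A : 0 ∈ A) (h0B : 0 ∈ B) (h1A : 1 ∈ A)
    (hB : ∃ b ∈ B, b ≠ 0) :
    ∃ q, 2 ≤ q ∧ q ∈ B ∧ q ∣ n ∧ BlockClosed q A ∧ ∀ b ∈ B, q ∣ b := by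
  obtain ⟨hqB, hq0⟩ := Nat.find_spec hB
  have hq1 : Nat.find hB ≠ 1 := fun h =>
    one_ne_zero (ht.eq_zero_of_mem_of_mem h0A h0B h1A (h ▸ hqB))
  exact ⟨Nat.find hB, by omega, hqB,
    ht.dvd_and_blockClosed h0A h0B hqB (by omega) fun b hb hb0 => Nat.find_min' hB ⟨hb, hb0⟩⟩

theorem image_div (ht : IsTiling A B n) (hq : 0 < q) (hA : BlockClosed q A)
    (hB : ∀ b ∈ B, q ∣ b) : IsTiling (A.image (· / q)) (B.image (· / q)) (n / q) where
  add_lt := by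
    simp only [Finset.forall_mem_image]
    intro a ha b hb
    have := ht.add_lt _ (hA a ha (q - 1) (by omega)) b hb
    obtain ⟨c, rfl⟩ := hB b hb
    rw [Nat.mul_div_cancel_left c hq, ← Nat.succ_le_iff, Nat.le_div_iff_mul_le hq]
    have : (a / q + c).succ * q = q * (a / q) + q * c + q := by rw [Nat.succ_mul]; ring
    omega
  exists_add_eq m hm := by
    rw [← Nat.succ_le_iff, Nat.le_div_iff_mul_le hq] at hm
    obtain ⟨a, ha, b, hb, hab⟩ := ht.exists_add_eq (q * m) (by rw [Nat.succ_mul] at hm; linarith)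
    obtain ⟨c, rfl⟩ := hB b hb
    obtain ⟨d, rfl⟩ : q ∣ a := (Nat.dvd_add_left (dvd_mul_right q c)).mp (hab ▸ dvd_mul_right q m)
    refine ⟨d, Finset.mem_image.mpr ⟨q * d, ha, Nat.mul_div_cancel_left d hq⟩,
      c, Finset.mem_image.mpr ⟨q * c, hb, Nat.mul_div_cancel_left c hq⟩, ?_⟩
    exact Nat.eq_of_mul_eq_mul_left hq (by rw [mul_add]; exact hab)
  add_inj := by
    simp only [Finset.forall_mem_image]
    intro a ha b hb a' ha' b' hb' h
    obtain ⟨c, rfl⟩ := hB b hb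
    obtain ⟨c', rfl⟩ := hB b' hb'
    simp only [Nat.mul_div_cancel_left _ hq] at h ⊢
    have := ht.add_inj _ (hA a ha 0 hq) _ hb _ (hA a' ha' 0 hq) _ hb'
      (by simp only [add_zero, ← mul_add, h])
    have hdiv : a / q = a' / q := Nat.eq_of_mul_eq_mul_left hq (by simpa using this.1)
    exact ⟨hdiv, by omega⟩

theorem exists_quotient (ht : IsTiling A B n) (h0A : 0 ∈ A) (h0B : 0 ∈ B)
    (hA : ∃ a ∈ A, a ≠ 0) (hB : ∃ b ∈ B, b ≠ 0) :
    ∃ q, 2 ≤ q ∧ (q ∈ A ∨ q ∈ B) ∧ q ∣ n ∧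
      IsTiling (A.image (· / q)) (B.image (· / q)) (n / q) ∧
      ∀ a ∈ A, ∀ a' ∈ A, q * (a' / q) + a % q ∈ A := by
  obtain ⟨a, ha, ha0⟩ := hA
  obtain ⟨x, hx, y, hy, hxy⟩ := ht.exists_add_eq 1 (by have := ht.add_lt a ha 0 h0B; omega)
  obtain ⟨rfl, rfl⟩ | ⟨rfl, rfl⟩ : (x = 1 ∧ y = 0) ∨ (x = 0 ∧ y = 1) := by omega
  · obtain ⟨q, hq2, hqB, hqn, hAq, hBq⟩ := ht.exists_blockClosed h0A h0B hx hB
    exact ⟨q, hq2, .inr hqB, hqn, ht.image_div (by omega) hAq hBq,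
      fun a _ a' ha' => hAq a' ha' _ (Nat.mod_lt _ (by omega))⟩
  · obtain ⟨q, hq2, hqA, hqn, hBq, hAq⟩ := ht.symm.exists_blockClosed h0B h0A hy ⟨a, ha, ha0⟩
    refine ⟨q, hq2, .inl hqA, hqn, (ht.symm.image_div (by omega) hBq hAq).symm,
      fun a ha a' ha' => ?_⟩
    rwa [Nat.mul_div_cancel' (hAq a' ha'), Nat.mod_eq_zero_of_dvd (hAq a ha), add_zero]

end IsTiling

theorem IsPeriodicMod.of_image_div {A : Finset ℕ} {n q t : ℕ} (hq : 0 < q) (hqn : q ∣ n)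
    (hA : ∀ a ∈ A, ∀ a' ∈ A, q * (a' / q) + a % q ∈ A)
    (hper : IsPeriodicMod (A.image (· / q)) (n / q) t) : IsPeriodicMod A n (q * t) := by
  obtain ⟨N, rfl⟩ := hqn
  intro a ha
  obtain ⟨a', ha', he⟩ := Finset.mem_image.mp (hper _ (Finset.mem_image_of_mem _ ha))
  rw [Nat.mul_div_cancel_left N hq] at he
  have : (a + q * t) % (q * N) = q * (a' / q) + a % q := by
    rw [Nat.mod_mul, Nat.add_mul_mod_self_left, Nat.add_mul_div_left _ _ hq, he, add_comm]
  rw [this]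
  exact hA a ha a' ha'

theorem Finset.add_mem_iff_of_forall_add_mem {G : Type*} [AddGroup G] {S : Finset G} {g : G}
    (h : ∀ x ∈ S, x + g ∈ S) (x : G) : x ∈ S ↔ x + g ∈ S := by
  have hS : S.map (addRightEmbedding g) = S :=
    Finset.eq_of_subset_of_card_le (fun y hy => by
      obtain ⟨x, hx, rfl⟩ := Finset.mem_map.mp hy
      exact h x hx) (by simp)
  refine ⟨h x, fun hx => ?_⟩
  rw [← hS] at hx
  obtain ⟨y, hy, hyx⟩ := Finset.mem_map.mp hx
  rwa [← add_right_cancel hyx]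

theorem IsPeriodicMod.natCast_add_mem_iff {A : Finset ℕ} {n t : ℕ} (h : IsPeriodicMod A n t)
    (x : ZMod n) :
    x ∈ A.image (Nat.cast : ℕ → ZMod n) ↔ x + (t : ZMod n) ∈ A.image (Nat.cast : ℕ → ZMod n) := by
  refine Finset.add_mem_iff_of_forall_add_mem (fun y hy => ?_) x
  obtain ⟨a, ha, rfl⟩ := Finset.mem_image.mp hy
  exact Finset.mem_image.mpr ⟨_, h a ha, by rw [ZMod.natCast_mod, Nat.cast_add]⟩

theorem IsTiling.exists_isPeriodicMod {n : ℕ} {A B : Finset ℕ} {a : ℕ} (ht : IsTiling A B n)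
    (h0A : 0 ∈ A) (h0B : 0 ∈ B) (ha : a ∈ A) (hle : ∀ x ∈ A, x ≤ a) (hlt : ∀ b ∈ B, b < a) :
    ∃ t, 0 < t ∧ t < n ∧ IsPeriodicMod A n t := by
  induction n using Nat.strong_induction_on generalizing A B a with
  | _ n IH =>
  have han : a < n := by simpa using ht.add_lt a ha 0 h0B
  have ha0 : 0 < a := hlt 0 h0B
  by_cases hB : ∃ b ∈ B, b ≠ 0
  swap
  · push Not at hB
    exact ⟨1, one_pos, by omega, fun x _ => ht.mem_of_lt hB (Nat.mod_lt _ (by omega))⟩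
  obtain ⟨q, hq2, hqAB, hqn, htq, hA⟩ := ht.exists_quotient h0A h0B ⟨a, ha, ha0.ne'⟩ hB
  have h0 : ∀ {S : Finset ℕ}, 0 ∈ S → 0 ∈ S.image (· / q) :=
    fun h => Finset.mem_image.mpr ⟨0, h, Nat.zero_div q⟩
  have hqa : 0 < a / q := Nat.div_pos (hqAB.elim (hle q) fun h => (hlt q h).le) (by omega)
  have hdom : ∀ d ∈ B.image (· / q), d < a / q := by
    simp only [Finset.forall_mem_image]
    intro b hb
    refine lt_of_le_of_ne (Nat.div_le_div_right (hlt b hb).le) fun h => hqa.ne' ?_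
    exact htq.eq_zero_of_mem_of_mem (h0 h0A) (h0 h0B)
      (Finset.mem_image_of_mem _ ha) (h ▸ Finset.mem_image_of_mem _ hb)
  obtain ⟨t, ht0, htn, hper⟩ := IH (n / q) (Nat.div_lt_self (by omega) (by omega)) htq
    (h0 h0A) (h0 h0B) (Finset.mem_image_of_mem _ ha)
    (by simpa only [Finset.forall_mem_image] using fun x hx => Nat.div_le_div_right (hle x hx))
    hdom
  refine ⟨q * t, by positivity, ?_, hper.of_image_div (by omega) hqn hA⟩
  calc q * t < q * (n / q) := by gcongr
    _ = n := Nat.mul_div_cancel' hqn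

theorem stmt_2_general (n : ℕ) (A B : Finset ℕ)
    (h0A : 0 ∈ A) (h0B : 0 ∈ B)
    (hsum : ∀ a ∈ A, ∀ b ∈ B, a + b < n)
    (htile : ∀ m < n, ∃! p : ℕ × ℕ, p.1 ∈ A ∧ p.2 ∈ B ∧ p.1 + p.2 = m)
    (hmax : B.max' ⟨0, h0B⟩ < A.max' ⟨0, h0A⟩) :
    ∃ t : ℕ, 0 < t ∧ t < n ∧
      ∀ x : ZMod n, x ∈ A.image (Nat.cast : ℕ → ZMod n) ↔
        x + (t : ZMod n) ∈ A.image (Nat.cast : ℕ → ZMod n) := by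
  obtain ⟨t, ht0, htn, hper⟩ := (IsTiling.of_existsUnique hsum htile).exists_isPeriodicMod h0A h0B
    (A.max'_mem _) (fun x hx => A.le_max' x hx) (fun b hb => (B.le_max' b hb).trans_lt hmax)
  exact ⟨t, ht0, htn, hper.natCast_add_mem_iff⟩

/-- if `A ⊕ B = [n]`, `n > 1`, `0 ∈ A ∩ B` and `max A > max B`,
then `A` is periodic mod `n`. -/
theorem stmt_2 (n : ℕ) (hn : 1 < n) (A B : Finset ℕ)
    (h0A : 0 ∈ A) (h0B : 0 ∈ B)
    (hsum : ∀ a ∈ A, ∀ b ∈ B, a + b < n)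
    (htile : ∀ m < n, ∃! p : ℕ × ℕ, p.1 ∈ A ∧ p.2 ∈ B ∧ p.1 + p.2 = m)
    (hmax : B.max' ⟨0, h0B⟩ < A.max' ⟨0, h0A⟩) :
    ∃ t : ℕ, 0 < t ∧ t < n ∧
      ∀ x : ZMod n, x ∈ A.image (Nat.cast : ℕ → ZMod n) ↔
        x + (t : ZMod n) ∈ A.image (Nat.cast : ℕ → ZMod n) :=
  stmt_2_general n A B h0A h0B hsum htile hmax
end

section
/- If A ⊆ {0,...,D}, A ⊕ B = {0,1,...,n-1} is a tiling of an interval, 0 ∈ A ∩ B, and n > 2D, then there exists a positive integer t < n such that A ⊕ (B ∩ {0,...,t-1}) = {0,1,...,t-1} is a tiling of a shorter interval. -/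
lemma rep_unique {n : ℕ} {X Y : Finset ℕ}
    (htile : ∀ m < n, ∃! p : ℕ × ℕ, p.1 ∈ X ∧ p.2 ∈ Y ∧ p.1 + p.2 = m)
    (hsum : ∀ x ∈ X, ∀ y ∈ Y, x + y < n)
    {x₁ y₁ x₂ y₂ : ℕ} (hx₁ : x₁ ∈ X) (hy₁ : y₁ ∈ Y) (hx₂ : x₂ ∈ X) (hy₂ : y₂ ∈ Y)
    (h : x₁ + y₁ = x₂ + y₂) : x₁ = x₂ ∧ y₁ = y₂ := by
  obtain ⟨p, _, hu⟩ := htile (x₁ + y₁) (hsum x₁ hx₁ y₁ hy₁)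
  have h1 := hu (x₁, y₁) ⟨hx₁, hy₁, rfl⟩
  have h2 := hu (x₂, y₂) ⟨hx₂, hy₂, h.symm⟩
  have := h1.trans h2.symm
  exact ⟨congrArg Prod.fst this, congrArg Prod.snd this⟩

lemma small_mem {n : ℕ} {X Y : Finset ℕ}
    (htile : ∀ m < n, ∃! p : ℕ × ℕ, p.1 ∈ X ∧ p.2 ∈ Y ∧ p.1 + p.2 = m)
    (hsum : ∀ x ∈ X, ∀ y ∈ Y, x + y < n)
    (h0Y : 0 ∈ Y) {s : ℕ} (hsX : s ∈ X)
    (hsmin : ∀ x ∈ X, x ≠ 0 → s ≤ x) :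
    ∀ m < s, m ∈ Y := by
  intro m hm
  have hsn : s + 0 < n := hsum s hsX 0 h0Y
  obtain ⟨p, ⟨hp1, hp2, hp3⟩, _⟩ := htile m (by omega)
  have hp10 : p.1 = 0 := by
    by_contra h
    have := hsmin p.1 hp1 h
    omega
  have : p.2 = m := by omega
  exact this ▸ hp2

lemma swap_tile {n : ℕ} {X Y : Finset ℕ}
    (htile : ∀ m < n, ∃! p : ℕ × ℕ, p.1 ∈ X ∧ p.2 ∈ Y ∧ p.1 + p.2 = m) :
    ∀ m < n, ∃! p : ℕ × ℕ, p.1 ∈ Y ∧ p.2 ∈ X ∧ p.1 + p.2 = m := by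
  intro m hm
  obtain ⟨p, ⟨h1, h2, h3⟩, hu⟩ := htile m hm
  refine ⟨(p.2, p.1), ⟨h2, h1, by omega⟩, ?_⟩
  rintro ⟨a, b⟩ ⟨ha, hb, hab⟩
  have := hu (b, a) ⟨hb, ha, by omega⟩
  rw [Prod.ext_iff] at this ⊢
  exact ⟨this.2, this.1⟩

lemma phi_lemma {n : ℕ} {X Y : Finset ℕ}
    (hsum : ∀ x ∈ X, ∀ y ∈ Y, x + y < n)
    (htile : ∀ m < n, ∃! p : ℕ × ℕ, p.1 ∈ X ∧ p.2 ∈ Y ∧ p.1 + p.2 = m)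
    (h0X : 0 ∈ X) (h0Y : 0 ∈ Y)
    {s : ℕ} (hsX : s ∈ X) (hs0 : 0 < s) (hsmin : ∀ x ∈ X, x ≠ 0 → s ≤ x) :
    ∀ m : ℕ, (m ∈ X → s ∣ m) ∧ (∀ y ∈ Y, y / s = m / s → m ∈ Y) := by
  have hY0 : ∀ m < s, m ∈ Y := small_mem htile hsum h0Y hsX hsmin
  have uniq : ∀ {x₁ y₁ x₂ y₂ : ℕ}, x₁ ∈ X → y₁ ∈ Y → x₂ ∈ X → y₂ ∈ Y →
      x₁ + y₁ = x₂ + y₂ → x₁ = x₂ ∧ y₁ = y₂ :=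
    fun hx₁ hy₁ hx₂ hy₂ h => rep_unique htile hsum hx₁ hy₁ hx₂ hy₂ h
  intro m
  induction m using Nat.strong_induction_on with
  | _ m ih =>
  have hdm : s * (m / s) + m % s = m := Nat.div_add_mod m s
  have hjs : m % s < s := Nat.mod_lt _ hs0
  constructor
  · -- Part A : m ∈ X → s ∣ m
    intro hmX
    by_contra hnd
    have hj0 : m % s ≠ 0 := fun h => hnd (Nat.dvd_of_mod_eq_zero h)
    have hq1 : 1 ≤ m / s := by
      rcases Nat.eq_zero_or_pos (m / s) with h | h
      · exfalso
        have hz : s * (m / s) = 0 := by rw [h, Nat.mul_zero]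
        have hms : m < s := by omega
        have := hsmin m hmX (by omega)
        omega
      · exact h
    have hsq1 : s ≤ s * (m / s) := Nat.le_mul_of_pos_right s hq1
    have hmn : m + 0 < n := hsum m hmX 0 h0Y
    obtain ⟨p, ⟨hp1, hp2, hp3⟩, _⟩ := htile (s * (m / s)) (by omega)
    by_cases hx : p.1 = s * (m / s)
    · -- s*q ∈ X ; double rep of m : (m,0) vs (s*q, m%s)
      have hqX : s * (m / s) ∈ X := hx ▸ hp1
      have hmodY : m % s ∈ Y := hY0 _ hjs
      have := (uniq hmX h0Y hqX hmodY (by omega)).1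
      omega
    · have hx_lt : p.1 < s * (m / s) := by omega
      have hx_lt_m : p.1 < m := by omega
      have hxd : s ∣ p.1 := (ih p.1 hx_lt_m).1 hp1
      by_cases hx0 : p.1 = 0
      · -- y' = s*q ∈ Y ; w-trick
        have hqY : s * (m / s) ∈ Y := by
          have h2 : p.2 = s * (m / s) := by omega
          exact h2 ▸ hp2
        have hsjY : s - m % s ∈ Y := hY0 _ (by omega)
        have := (uniq hmX hsjY hsX hqY (by omega)).1
        omega
      · -- x' > 0
        have hxs : s ≤ p.1 := hsmin _ hp1 hx0
        have hyd : s ∣ p.2 := by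
          have h1 : s ∣ s * (m / s) - p.1 := Nat.dvd_sub ⟨m / s, rfl⟩ hxd
          have h2 : p.2 = s * (m / s) - p.1 := by omega
          exact h2 ▸ h1
        obtain ⟨c, hc⟩ := hyd
        have hblk : p.2 / s = (p.2 + m % s) / s := by
          rw [hc, Nat.mul_div_cancel_left _ hs0, Nat.mul_add_div hs0,
            Nat.div_eq_of_lt hjs]
          omega
        have hlt : p.2 + m % s < m := by omega
        have hy''Y : p.2 + m % s ∈ Y := (ih _ hlt).2 p.2 hp2 hblk
        have := (uniq hp1 hy''Y hmX h0Y (by omega)).1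
        omega
  · -- Part B
    intro y₀ hy₀ hblk
    by_cases hmy : m = y₀
    · exact hmy ▸ hy₀
    have hdy : s * (y₀ / s) + y₀ % s = y₀ := Nat.div_add_mod y₀ s
    have hy₀s : y₀ % s < s := Nat.mod_lt _ hs0
    have hsq : s * (y₀ / s) = s * (m / s) := by rw [hblk]
    by_cases hq0 : m / s = 0
    · exact hY0 m (by rw [hq0] at hdm; omega)
    have hsq1 : s ≤ s * (m / s) := Nat.le_mul_of_pos_right s (Nat.pos_of_ne_zero hq0)
    have hsy₀ : s + y₀ < n := hsum s hsX y₀ hy₀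
    have hmn : m < n := by omega
    obtain ⟨p, ⟨hp1, hp2, hp3⟩, _⟩ := htile m hmn
    by_cases hx0 : p.1 = 0
    · have h2 : p.2 = m := by omega
      exact h2 ▸ hp2
    exfalso
    have hxs : s ≤ p.1 := hsmin _ hp1 hx0
    by_cases hxm : p.1 = m
    · -- m ∈ X
      have hmX : m ∈ X := hxm ▸ hp1
      rcases Nat.lt_trichotomy (m % s) (y₀ % s) with hjr | hjr | hjr
      · have hrY : y₀ % s - m % s ∈ Y := hY0 _ (by omega)
        have := (uniq h0X hy₀ hmX hrY (by omega)).1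
        omega
      · exact hmy (by omega)
      · have hwY : s - m % s + y₀ % s ∈ Y := hY0 _ (by omega)
        have := (uniq hsX hy₀ hmX hwY (by omega)).1
        omega
    · have hxlt : p.1 < m := by omega
      have hxd : s ∣ p.1 := (ih p.1 hxlt).1 hp1
      obtain ⟨c, hc⟩ := hxd
      have hp2mod : m % s = p.2 % s := by
        rw [← hp3, hc, Nat.mul_add_mod]
      have hdp2 : s * (p.2 / s) + p.2 % s = p.2 := Nat.div_add_mod p.2 s
      have hm'blk : p.2 / s = (s * (p.2 / s) + y₀ % s) / s := by
        rw [Nat.mul_add_div hs0, Nat.div_eq_of_lt hy₀s]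
        omega
      have hm'lt : s * (p.2 / s) + y₀ % s < m := by omega
      have hm'Y : s * (p.2 / s) + y₀ % s ∈ Y := (ih _ hm'lt).2 p.2 hp2 hm'blk
      have := (uniq hp1 hm'Y h0X hy₀ (by omega)).1
      omega
lemma descend {n : ℕ} {X Y : Finset ℕ}
    (hsum : ∀ x ∈ X, ∀ y ∈ Y, x + y < n)
    (htile : ∀ m < n, ∃! p : ℕ × ℕ, p.1 ∈ X ∧ p.2 ∈ Y ∧ p.1 + p.2 = m)
    (h0X : 0 ∈ X) (h0Y : 0 ∈ Y)
    {s : ℕ} (hsX : s ∈ X) (hs0 : 0 < s) (hsmin : ∀ x ∈ X, x ≠ 0 → s ≤ x) :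
    ∃ n' : ℕ, n = s * n' ∧
      (∀ x ∈ X.image (· / s), ∀ y ∈ (Y.filter (s ∣ ·)).image (· / s), x + y < n') ∧
      (∀ m' < n', ∃! p : ℕ × ℕ, p.1 ∈ X.image (· / s) ∧
        p.2 ∈ (Y.filter (s ∣ ·)).image (· / s) ∧ p.1 + p.2 = m') := by
  have phi := phi_lemma hsum htile h0X h0Y hsX hs0 hsmin
  have hn0 : 0 + 0 < n := hsum 0 h0X 0 h0Y
  -- s ∣ n
  obtain ⟨p, ⟨hp1, hp2, hp3⟩, _⟩ := htile (n - 1) (by omega)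
  obtain ⟨c, hc⟩ := (phi p.1).1 hp1
  have hdp2 : s * (p.2 / s) + p.2 % s = p.2 := Nat.div_add_mod p.2 s
  have hp2s : p.2 % s < s := Nat.mod_lt _ hs0
  have hytopblk : p.2 / s = (s * (p.2 / s) + (s - 1)) / s := by
    rw [Nat.mul_add_div hs0, Nat.div_eq_of_lt (show s - 1 < s by omega)]
    omega
  have hytopY : s * (p.2 / s) + (s - 1) ∈ Y := (phi _).2 p.2 hp2 hytopblk
  have hlt := hsum p.1 hp1 _ hytopY
  have hmod : p.2 % s = s - 1 := by omega
  have hexp : s * (c + p.2 / s + 1) = s * c + s * (p.2 / s) + s := by ring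
  refine ⟨c + p.2 / s + 1, by omega, ?_, ?_⟩
  · -- sums
    intro x' hx' y' hy'
    obtain ⟨x, hxX, rfl⟩ := Finset.mem_image.1 hx'
    obtain ⟨y, hyf, rfl⟩ := Finset.mem_image.1 hy'
    obtain ⟨hyY, hyd⟩ := Finset.mem_filter.1 hyf
    obtain ⟨xc, hxc⟩ := (phi x).1 hxX
    obtain ⟨yc, hyc⟩ := hyd
    have hx2 : x / s = xc := by rw [hxc, Nat.mul_div_cancel_left _ hs0]
    have hy2 : y / s = yc := by rw [hyc, Nat.mul_div_cancel_left _ hs0]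
    rw [hx2, hy2]
    have hlt2 := hsum x hxX y hyY
    have hmul : s * (xc + yc) = s * xc + s * yc := by ring
    have : s * (xc + yc) < s * (c + p.2 / s + 1) := by omega
    exact Nat.lt_of_mul_lt_mul_left this
  · intro m' hm'
    have hsm' : s * m' < n := by
      have : s * m' < s * (c + p.2 / s + 1) := mul_lt_mul_of_pos_left hm' hs0
      omega
    obtain ⟨q, ⟨hq1, hq2, hq3⟩, hqu⟩ := htile (s * m') hsm'
    obtain ⟨xc, hxc⟩ := (phi q.1).1 hq1
    have hyd : s ∣ q.2 := by
      have h1 : s ∣ s * m' - q.1 := Nat.dvd_sub ⟨m', rfl⟩ ⟨xc, hxc⟩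
      have h2 : q.2 = s * m' - q.1 := by omega
      exact h2 ▸ h1
    obtain ⟨yc, hyc⟩ := hyd
    have hsum' : s * (xc + yc) = s * m' := by
      have : s * (xc + yc) = s * xc + s * yc := by ring
      omega
    have hxcyc : xc + yc = m' := Nat.eq_of_mul_eq_mul_left hs0 hsum'
    refine ⟨(xc, yc), ⟨?_, ?_, hxcyc⟩, ?_⟩
    · exact Finset.mem_image.2 ⟨q.1, hq1, by rw [hxc, Nat.mul_div_cancel_left _ hs0]⟩
    · exact Finset.mem_image.2 ⟨q.2, Finset.mem_filter.2 ⟨hq2, ⟨yc, hyc⟩⟩,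
        by rw [hyc, Nat.mul_div_cancel_left _ hs0]⟩
    · rintro ⟨a', b'⟩ ⟨ha', hb', hab⟩
      obtain ⟨a, haX, ha2⟩ := Finset.mem_image.1 ha'
      obtain ⟨b, hbf, hb2⟩ := Finset.mem_image.1 hb'
      obtain ⟨hbY, hbd⟩ := Finset.mem_filter.1 hbf
      obtain ⟨ac, hac⟩ := (phi a).1 haX
      obtain ⟨bc, hbc⟩ := hbd
      have ha3 : a' = ac := by
        rw [hac, Nat.mul_div_cancel_left _ hs0] at ha2; exact ha2.symm
      have hb3 : b' = bc := by
        rw [hbc, Nat.mul_div_cancel_left _ hs0] at hb2; exact hb2.symm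
      have habs : a + b = s * m' := by
        have h1 : s * (ac + bc) = s * ac + s * bc := by ring
        have h2 : s * (ac + bc) = s * m' := by
          rw [← hxcyc]
          subst ha3 hb3
          have h3 : s * (a' + b') = s * (xc + yc) := by
            rw [hab, hxcyc]
          omega
        omega
      have := hqu (a, b) ⟨haX, hbY, habs⟩
      have hfst : a = q.1 := congrArg Prod.fst this
      have hsnd : b = q.2 := congrArg Prod.snd this
      have : ac = xc := Nat.eq_of_mul_eq_mul_left hs0 (by omega)
      have : bc = yc := Nat.eq_of_mul_eq_mul_left hs0 (by omega)
      simp [Prod.ext_iff]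
      omega
theorem key_tiling : ∀ n : ℕ, ∀ D : ℕ, 0 < D → ∀ A B : Finset ℕ,
    A ⊆ Finset.range (D + 1) → 0 ∈ A → 0 ∈ B →
    (∀ a ∈ A, ∀ b ∈ B, a + b < n) →
    (∀ m < n, ∃! p : ℕ × ℕ, p.1 ∈ A ∧ p.2 ∈ B ∧ p.1 + p.2 = m) →
    2 * D < n →
    ∃ t : ℕ, 0 < t ∧ t < n ∧ ∀ a ∈ A, ∀ b ∈ B, b < t → a + b < t := by
  intro n
  induction n using Nat.strong_induction_on with
  | _ n ih =>
  intro D hD A B hA h0A h0B hsum htile hn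
  by_cases hAtriv : ∀ a ∈ A, a = 0
  · exact ⟨1, one_pos, by omega, fun a ha b hb hbt => by have := hAtriv a ha; omega⟩
  push_neg at hAtriv
  obtain ⟨a₀, ha₀A, ha₀⟩ := hAtriv
  by_cases hBtriv : ∀ b ∈ B, b = 0
  · exfalso
    obtain ⟨p, ⟨hp1, hp2, hp3⟩, _⟩ := htile (n - 1) (by omega)
    have h2 := hBtriv p.2 hp2
    have h3 := Finset.mem_range.1 (hA hp1)
    omega
  push_neg at hBtriv
  obtain ⟨b₀, hb₀B, hb₀⟩ := hBtriv
  obtain ⟨p₁, ⟨hp₁A, hp₁B, hp₁s⟩, _⟩ := htile 1 (by omega)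
  have hnotboth : ¬(1 ∈ A ∧ 1 ∈ B) := by
    rintro ⟨h1A, h1B⟩
    have := (rep_unique htile hsum h1A h0B h0A h1B (by omega)).1
    omega
  have h1AorB : 1 ∈ A ∨ 1 ∈ B := by
    have : (p₁.1 = 1 ∧ p₁.2 = 0) ∨ (p₁.1 = 0 ∧ p₁.2 = 1) := by omega
    rcases this with ⟨h, _⟩ | ⟨_, h⟩
    · exact Or.inl (h ▸ hp₁A)
    · exact Or.inr (h ▸ hp₁B)
  -- max of A
  have hAne : A.Nonempty := ⟨0, h0A⟩
  set M := A.max' hAne with hMdef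
  have hMA : M ∈ A := A.max'_mem hAne
  have hMD : M ≤ D := by have := Finset.mem_range.1 (hA hMA); omega
  have hMmax : ∀ a ∈ A, a ≤ M := fun a ha => A.le_max' a ha
  have hM0 : 0 < M := by
    have := hMmax a₀ ha₀A; omega
  rcases h1AorB with h1A | h1B
  · -- 1 ∈ A : quotient by s = min positive element of B
    have hBfne : (B.filter (0 < ·)).Nonempty :=
      ⟨b₀, Finset.mem_filter.2 ⟨hb₀B, Nat.pos_of_ne_zero hb₀⟩⟩
    set s := (B.filter (0 < ·)).min' hBfne with hsdef
    have hsmem := Finset.mem_filter.1 ((B.filter (0 < ·)).min'_mem hBfne)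
    have hsB : s ∈ B := hsmem.1
    have hs0 : 0 < s := hsmem.2
    have hsmin : ∀ b ∈ B, b ≠ 0 → s ≤ b := fun b hb hb0 =>
      Finset.min'_le _ _ (Finset.mem_filter.2 ⟨hb, Nat.pos_of_ne_zero hb0⟩)
    have hs2 : 2 ≤ s := by
      rcases Nat.lt_or_ge s 2 with h | h
      · exfalso
        have : s = 1 := by omega
        exact hnotboth ⟨h1A, this ▸ hsB⟩
      · exact h
    have hsumS : ∀ b ∈ B, ∀ a ∈ A, b + a < n := fun b hb a ha => by
      have := hsum a ha b hb; omega
    have htileS := swap_tile htile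
    have phiS := phi_lemma hsumS htileS h0B h0A hsB hs0 hsmin
    have hBdiv : ∀ b ∈ B, s ∣ b := fun b hb => (phiS b).1 hb
    obtain ⟨n', hn', hsum', htile'⟩ := descend hsumS htileS h0B h0A hsB hs0 hsmin
    -- quotient sets : B' = B.image (·/s) ; A' = (A.filter (s ∣ ·)).image (·/s)
    set A' := (A.filter (s ∣ ·)).image (· / s) with hA'def
    set B' := B.image (· / s) with hB'def
    have htile'' := swap_tile htile'
    have hsum'' : ∀ x ∈ A', ∀ y ∈ B', x + y < n' := fun x hx y hy => by
      have := hsum' y hy x hx; omega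
    have h0A' : 0 ∈ A' :=
      Finset.mem_image.2 ⟨0, Finset.mem_filter.2 ⟨h0A, dvd_zero s⟩, Nat.zero_div s⟩
    have h0B' : 0 ∈ B' := Finset.mem_image.2 ⟨0, h0B, Nat.zero_div s⟩
    have hdm := Nat.div_add_mod M s
    by_cases hMs : M < s
    · -- t = s works
      refine ⟨s, hs0, ?_, ?_⟩
      · have := hsum 0 h0A s hsB; omega
      · intro a ha b hb hbt
        obtain ⟨bc, hbc⟩ := hBdiv b hb
        have hb0' : b = 0 := by
          rcases Nat.eq_zero_or_pos bc with h | h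
          · rw [h, Nat.mul_zero] at hbc; exact hbc
          · exfalso
            have : s ≤ s * bc := Nat.le_mul_of_pos_right s h
            omega
        have := hMmax a ha
        omega
    · push_neg at hMs
      -- M % s = s - 1
      have hblkM : M / s = (s * (M / s) + (s - 1)) / s := by
        rw [Nat.mul_add_div hs0, Nat.div_eq_of_lt (show s - 1 < s by omega)]
        omega
      have hMtopA : s * (M / s) + (s - 1) ∈ A := (phiS _).2 M hMA hblkM
      have hMtop_le := hMmax _ hMtopA
      have hMs' : M % s < s := Nat.mod_lt _ hs0
      have hMmod : M % s = s - 1 := by omega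
      set D' := M / s with hD'def
      have hD'pos : 0 < D' := Nat.div_pos hMs hs0
      have hA'sub : A' ⊆ Finset.range (D' + 1) := by
        intro x hx
        obtain ⟨a, haf, rfl⟩ := Finset.mem_image.1 hx
        have ha := (Finset.mem_filter.1 haf).1
        exact Finset.mem_range.2 (by
          have := Nat.div_le_div_right (c := s) (hMmax a ha); omega)
      have h2D' : 2 * D' < n' := by
        have hx2 : s * (2 * D') = 2 * (s * D') := by ring
        have h1 : s * (2 * D') < s * n' := by omega
        exact Nat.lt_of_mul_lt_mul_left h1
      have hn'lt : n' < n := by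
        have h2 : 2 * n' ≤ s * n' := Nat.mul_le_mul_right n' hs2
        omega
      obtain ⟨t', ht'0, ht'lt, ht'cond⟩ :=
        ih n' hn'lt D' hD'pos A' B' hA'sub h0A' h0B' hsum'' htile'' h2D'
      refine ⟨s * t', Nat.mul_pos hs0 ht'0, ?_, ?_⟩
      · rw [hn']; exact mul_lt_mul_of_pos_left ht'lt hs0
      · intro a ha b hb hbt
        obtain ⟨bc, hbc⟩ := hBdiv b hb
        have hbB' : bc ∈ B' :=
          Finset.mem_image.2 ⟨b, hb, by rw [hbc, Nat.mul_div_cancel_left _ hs0]⟩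
        have hbclt : bc < t' := by
          have h1 : s * bc < s * t' := by omega
          exact Nat.lt_of_mul_lt_mul_left h1
        have hda := Nat.div_add_mod a s
        have hmas : a % s < s := Nat.mod_lt _ hs0
        have hblka : a / s = (s * (a / s)) / s := by
          rw [Nat.mul_div_cancel_left _ hs0]
        have habase : s * (a / s) ∈ A := (phiS _).2 a ha hblka
        have haA' : a / s ∈ A' :=
          Finset.mem_image.2 ⟨s * (a / s), Finset.mem_filter.2 ⟨habase, ⟨a / s, rfl⟩⟩,
            by rw [Nat.mul_div_cancel_left _ hs0]⟩
        have hrec := ht'cond (a / s) haA' bc hbB' hbclt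
        have hkey : s * (a / s + bc + 1) ≤ s * t' := Nat.mul_le_mul_left s (by omega)
        have hexp : s * (a / s + bc + 1) = s * (a / s) + s * bc + s := by ring
        omega
  · -- 1 ∈ B : quotient by s = min positive element of A
    have hAfne : (A.filter (0 < ·)).Nonempty :=
      ⟨a₀, Finset.mem_filter.2 ⟨ha₀A, Nat.pos_of_ne_zero ha₀⟩⟩
    set s := (A.filter (0 < ·)).min' hAfne with hsdef
    have hsmem := Finset.mem_filter.1 ((A.filter (0 < ·)).min'_mem hAfne)
    have hsA : s ∈ A := hsmem.1
    have hs0 : 0 < s := hsmem.2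
    have hsmin : ∀ a ∈ A, a ≠ 0 → s ≤ a := fun a ha ha0 =>
      Finset.min'_le _ _ (Finset.mem_filter.2 ⟨ha, Nat.pos_of_ne_zero ha0⟩)
    have hs2 : 2 ≤ s := by
      rcases Nat.lt_or_ge s 2 with h | h
      · exfalso
        have : s = 1 := by omega
        exact hnotboth ⟨this ▸ hsA, h1B⟩
      · exact h
    have phiA := phi_lemma hsum htile h0A h0B hsA hs0 hsmin
    have hAdiv : ∀ a ∈ A, s ∣ a := fun a ha => (phiA a).1 ha
    obtain ⟨n', hn', hsum', htile'⟩ := descend hsum htile h0A h0B hsA hs0 hsmin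
    set A' := A.image (· / s) with hA'def
    set B' := (B.filter (s ∣ ·)).image (· / s) with hB'def
    have h0A' : 0 ∈ A' := Finset.mem_image.2 ⟨0, h0A, Nat.zero_div s⟩
    have h0B' : 0 ∈ B' :=
      Finset.mem_image.2 ⟨0, Finset.mem_filter.2 ⟨h0B, dvd_zero s⟩, Nat.zero_div s⟩
    have hsM : s ≤ M := hMmax s hsA
    have hMdvd : s ∣ M := hAdiv M hMA
    have hMexact : s * (M / s) = M := Nat.mul_div_cancel' hMdvd
    set D' := M / s with hD'def
    have hD'pos : 0 < D' := Nat.div_pos hsM hs0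
    have hA'sub : A' ⊆ Finset.range (D' + 1) := by
      intro x hx
      obtain ⟨a, ha, rfl⟩ := Finset.mem_image.1 hx
      exact Finset.mem_range.2 (by
        have := Nat.div_le_div_right (c := s) (hMmax a ha); omega)
    have h2D' : 2 * D' < n' := by
      have hx2 : s * (2 * D') = 2 * (s * D') := by ring
      have h1 : s * (2 * D') < s * n' := by omega
      exact Nat.lt_of_mul_lt_mul_left h1
    have hn'lt : n' < n := by
      have h2 : 2 * n' ≤ s * n' := Nat.mul_le_mul_right n' hs2
      omega
    obtain ⟨t', ht'0, ht'lt, ht'cond⟩ :=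
      ih n' hn'lt D' hD'pos A' B' hA'sub h0A' h0B' hsum' htile' h2D'
    refine ⟨s * t', Nat.mul_pos hs0 ht'0, ?_, ?_⟩
    · rw [hn']; exact mul_lt_mul_of_pos_left ht'lt hs0
    · intro a ha b hb hbt
      obtain ⟨ac, hac⟩ := hAdiv a ha
      have haA' : a / s ∈ A' :=
        Finset.mem_image.2 ⟨a, ha, rfl⟩
      have hdb := Nat.div_add_mod b s
      have hmbs : b % s < s := Nat.mod_lt _ hs0
      have hblkb : b / s = (s * (b / s)) / s := by
        rw [Nat.mul_div_cancel_left _ hs0]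
      have hbbase : s * (b / s) ∈ B := (phiA _).2 b hb hblkb
      have hbB' : b / s ∈ B' :=
        Finset.mem_image.2 ⟨s * (b / s), Finset.mem_filter.2 ⟨hbbase, ⟨b / s, rfl⟩⟩,
          by rw [Nat.mul_div_cancel_left _ hs0]⟩
      have hbslt : b / s < t' := by
        have h1 : s * (b / s) < s * t' := by omega
        exact Nat.lt_of_mul_lt_mul_left h1
      have hrec := ht'cond (a / s) haA' (b / s) hbB' hbslt
      have hkey : s * (a / s + b / s + 1) ≤ s * t' := Nat.mul_le_mul_left s (by omega)
      have hexp : s * (a / s + b / s + 1) = s * (a / s) + s * (b / s) + s := by ring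
      have hexa : s * (a / s) = a := Nat.mul_div_cancel' ⟨ac, hac⟩
      omega
/-- a tiling of `[n]` with `n > 2D` by a tile `A ⊆ {0,…,D}` contains
a sub-tiling of a shorter interval `[t]`. -/
theorem stmt_4 (D n : ℕ) (hD : 0 < D) (A B : Finset ℕ)
    (hA : A ⊆ Finset.range (D + 1))
    (h0A : 0 ∈ A) (h0B : 0 ∈ B)
    (hsum : ∀ a ∈ A, ∀ b ∈ B, a + b < n)
    (htile : ∀ m < n, ∃! p : ℕ × ℕ, p.1 ∈ A ∧ p.2 ∈ B ∧ p.1 + p.2 = m)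
    (hn : 2 * D < n) :
    ∃ t : ℕ, 0 < t ∧ t < n ∧
      (∀ a ∈ A, ∀ b ∈ B.filter (· < t), a + b < t) ∧
      (∀ m < t, ∃! p : ℕ × ℕ, p.1 ∈ A ∧ p.2 ∈ B.filter (· < t) ∧ p.1 + p.2 = m) := by
  obtain ⟨t, ht0, htn, hcond⟩ := key_tiling n D hD A B hA h0A h0B hsum htile hn
  refine ⟨t, ht0, htn, ?_, ?_⟩
  · intro a ha b hb
    obtain ⟨hbB, hbt⟩ := Finset.mem_filter.1 hb
    exact hcond a ha b hbB hbt
  · intro m hmt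
    obtain ⟨p, ⟨h1, h2, h3⟩, hu⟩ := htile m (by omega)
    refine ⟨p, ⟨h1, Finset.mem_filter.2 ⟨h2, by show p.2 < t; omega⟩, h3⟩, ?_⟩
    rintro q ⟨hq1, hq2, hq3⟩
    exact hu q ⟨hq1, (Finset.mem_filter.1 hq2).1, hq3⟩
end

section
/- (Long's lemma) Suppose n > 1, 0 ∈ A ∩ B, and A ⊕ B = {0,1,...,n-1}. Then there exists an integer m ≥ 2 dividing n and sets E, D ⊆ {0,...,n/m - 1} with E ⊕ D = {0,1,...,n/m - 1}, 0 ∈ E ∩ D, and {A, B} = {m·E ⊕ {0,...,m-1}, m·D} (i.e., one of A,B equals {me + r : e ∈ E, 0 ≤ r < m} and the other equals {md : d ∈ D}). -/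
private lemma long_key (n : ℕ) (hn : 1 < n) (A B : Finset ℕ)
    (h0A : 0 ∈ A) (h0B : 0 ∈ B) (h1A : 1 ∈ A)
    (hsum : ∀ a ∈ A, ∀ b ∈ B, a + b < n)
    (htile : ∀ k < n, ∃! p : ℕ × ℕ, p.1 ∈ A ∧ p.2 ∈ B ∧ p.1 + p.2 = k) :
    ∃ m : ℕ, 2 ≤ m ∧ m ∣ n ∧ ∃ E D : Finset ℕ,
      E ⊆ Finset.range (n / m) ∧ D ⊆ Finset.range (n / m) ∧
      0 ∈ E ∧ 0 ∈ D ∧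
      (∀ e ∈ E, ∀ d ∈ D, e + d < n / m) ∧
      (∀ k < n / m, ∃! p : ℕ × ℕ, p.1 ∈ E ∧ p.2 ∈ D ∧ p.1 + p.2 = k) ∧
      A = (E ×ˢ Finset.range m).image (fun p => m * p.1 + p.2) ∧
      B = D.image (fun d => m * d) := by
  have uniq : ∀ k, k < n → ∀ a b a' b', a ∈ A → b ∈ B → a + b = k →
      a' ∈ A → b' ∈ B → a' + b' = k → a = a' ∧ b = b' := by
    intro k hk a b a' b' ha hb hs ha' hb' hs'
    obtain ⟨p, -, hu⟩ := htile k hk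
    have h1 := hu (a, b) ⟨ha, hb, hs⟩
    have h2 := hu (a', b') ⟨ha', hb', hs'⟩
    have h3 := h1.trans h2.symm
    simpa [Prod.ext_iff] using h3
  by_cases hB0 : ∀ b ∈ B, b = 0
  · -- B = {0}, take m = n, E = D = {0}
    have hAeq : A = Finset.range n := by
      ext a
      simp only [Finset.mem_range]
      constructor
      · intro ha; simpa using hsum a ha 0 h0B
      · intro ha
        obtain ⟨⟨x, y⟩, ⟨hx, hy, hxy⟩, -⟩ := htile a ha
        have hy0 := hB0 y hy
        have hxa : x = a := by omega
        exact hxa ▸ hx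
    have hnn : n / n = 1 := Nat.div_self (by omega)
    refine ⟨n, by omega, dvd_refl n, {0}, {0}, ?_, ?_, Finset.mem_singleton_self 0,
      Finset.mem_singleton_self 0, ?_, ?_, ?_, ?_⟩
    · rw [hnn]; intro x hx; simp only [Finset.mem_singleton] at hx
      simp [hx]
    · rw [hnn]; intro x hx; simp only [Finset.mem_singleton] at hx
      simp [hx]
    · intro e he d hd
      simp only [Finset.mem_singleton] at he hd
      subst he; subst hd; rw [hnn]; omega
    · intro k hk
      rw [hnn] at hk
      have hk0 : k = 0 := by omega
      subst hk0
      refine ⟨(0, 0), ⟨Finset.mem_singleton_self 0, Finset.mem_singleton_self 0, rfl⟩, ?_⟩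
      rintro ⟨e, d⟩ ⟨he, hd, hed⟩
      simp only [Finset.mem_singleton] at he hd
      simp [he, hd]
    · rw [hAeq]; ext x
      simp only [Finset.mem_range, Finset.mem_image, Finset.mem_product, Finset.mem_singleton]
      constructor
      · intro hx; exact ⟨(0, x), ⟨rfl, hx⟩, by simp⟩
      · rintro ⟨⟨a, b⟩, ⟨ha0, hb⟩, heq⟩
        simp only at ha0 hb heq
        subst ha0
        omega
    · ext b
      simp only [Finset.mem_image, Finset.mem_singleton]
      constructor
      · intro hb; exact ⟨0, rfl, by rw [Nat.mul_zero]; exact (hB0 b hb).symm⟩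
      · rintro ⟨d, rfl, rfl⟩
        simpa using h0B
  · -- main case: B has a positive element; m = least positive element of B
    push_neg at hB0
    obtain ⟨b₀, hb₀B, hb₀⟩ := hB0
    have hBpne : (B.filter fun b => 0 < b).Nonempty :=
      ⟨b₀, Finset.mem_filter.mpr ⟨hb₀B, by omega⟩⟩
    set m := (B.filter fun b => 0 < b).min' hBpne with hmdef
    have hmmem := Finset.mem_filter.mp ((B.filter fun b => 0 < b).min'_mem hBpne)
    have hmB : m ∈ B := hmmem.1
    have hm0 : 0 < m := hmmem.2
    have hmin : ∀ b ∈ B, 0 < b → m ≤ b := fun b hb hb0 =>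
      Finset.min'_le _ b (Finset.mem_filter.mpr ⟨hb, hb0⟩)
    have hmn : m < n := by simpa using hsum 0 h0A m hmB
    have h1B : (1 : ℕ) ∉ B := by
      intro h1B
      have := uniq 1 hn 1 0 0 1 h1A h0B rfl h0A h1B rfl
      omega
    have hm2 : 2 ≤ m := by
      by_contra h
      have hm1 : m = 1 := by omega
      exact h1B (hm1 ▸ hmB)
    have hlow : ∀ j, j < m → j ∈ A := by
      intro j hj
      obtain ⟨⟨a, b⟩, ⟨ha, hb, hab⟩, -⟩ := htile j (by omega)
      have hb0 : b = 0 := by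
        by_contra hb0
        have := hmin b hb (by omega)
        omega
      have : a = j := by omega
      exact this ▸ ha
    have main : ∀ k, k < n →
        ((k ∈ B → m ∣ k) ∧ (k ∈ A → m * (k / m) ∈ A) ∧ (m * (k / m) ∈ A → k ∈ A)) := by
      intro k
      induction k using Nat.strong_induction_on with
      | _ k ih =>
        intro hkn
        have hdm : m * (k / m) + k % m = k := Nat.div_add_mod k m
        have hrm : k % m < m := Nat.mod_lt _ hm0
        have q1 : k ∈ B → m ∣ k := by
          intro hkB
          by_contra hnd
          have hr : k % m ≠ 0 := fun h => hnd (Nat.dvd_of_mod_eq_zero h)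
          have hkm : m ≤ k := hmin k hkB (by omega)
          have hmq_lt : m * (k / m) < k := by omega
          obtain ⟨⟨a, b⟩, ⟨haA, hbB, hab⟩, -⟩ := htile (m * (k / m)) (by omega)
          have hmb : m ∣ b := (ih b (by omega) (by omega)).1 hbB
          have hma : m ∣ a := by
            have h2 : m ∣ a + b := by rw [hab]; exact dvd_mul_right m (k / m)
            exact (Nat.dvd_add_iff_left hmb).mpr h2
          rcases Nat.lt_or_ge (a + k % m) k with hlt | hge
          · have hbase : m * ((a + k % m) / m) = a := by
              obtain ⟨a', rfl⟩ := hma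
              rw [Nat.mul_add_div hm0, Nat.div_eq_of_lt hrm, Nat.add_zero]
            have haR : a + k % m ∈ A :=
              (ih _ hlt (by omega)).2.2 (by rw [hbase]; exact haA)
            have := uniq k hkn (a + k % m) b 0 k haR hbB (by omega) h0A hkB (by omega)
            omega
          · have ha_eq : a = m * (k / m) := by omega
            have hAq : m * (k / m) ∈ A := ha_eq ▸ haA
            have hlt2 : m * (k / m) + m < n := hsum _ hAq m hmB
            have h5 := uniq (m * (k / m) + m) hlt2 (m * (k / m)) m (m - k % m) k hAq hmB rfl
              (hlow (m - k % m) (by omega)) hkB (by omega)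
            exact hnd ⟨1, by omega⟩
        have q2 : k ∈ A → m * (k / m) ∈ A := by
          intro hkA
          by_cases hr0 : k % m = 0
          · have h6 : m * (k / m) = k := by omega
            rw [h6]; exact hkA
          · have hmq_lt : m * (k / m) < k := by omega
            obtain ⟨⟨a, b⟩, ⟨haA, hbB, hab⟩, -⟩ := htile (m * (k / m)) (by omega)
            have hmb : m ∣ b := (ih b (by omega) (by omega)).1 hbB
            have hma : m ∣ a := by
              have h2 : m ∣ a + b := by rw [hab]; exact dvd_mul_right m (k / m)
              exact (Nat.dvd_add_iff_left hmb).mpr h2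
            rcases Nat.lt_or_ge (a + k % m) k with hlt | hge
            · have hbase : m * ((a + k % m) / m) = a := by
                obtain ⟨a', rfl⟩ := hma
                rw [Nat.mul_add_div hm0, Nat.div_eq_of_lt hrm, Nat.add_zero]
              have haR : a + k % m ∈ A :=
                (ih _ hlt (by omega)).2.2 (by rw [hbase]; exact haA)
              have := uniq k hkn (a + k % m) b k 0 haR hbB (by omega) hkA h0B (by omega)
              have ha_eq : a = m * (k / m) := by omega
              exact ha_eq ▸ haA
            · have ha_eq : a = m * (k / m) := by omega
              exact ha_eq ▸ haA
        have q3 : m * (k / m) ∈ A → k ∈ A := by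
          intro hbase
          by_cases hr0 : k % m = 0
          · have h6 : m * (k / m) = k := by omega
            rw [← h6]; exact hbase
          · obtain ⟨⟨a, b⟩, ⟨haA, hbB, hab⟩, -⟩ := htile k hkn
            by_cases hb0 : b = 0
            · have : a = k := by omega
              exact this ▸ haA
            · exfalso
              have hbk : b < k := by
                rcases Nat.lt_or_ge b k with h | h
                · exact h
                · exfalso
                  have hbek : b = k := by omega
                  have hdk : m ∣ k := q1 (hbek ▸ hbB)
                  obtain ⟨t, ht⟩ := hdk
                  have : k % m = 0 := by
                    rw [ht]
                    exact Nat.mul_mod_right m t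
                  exact hr0 this
              have hmb : m ∣ b := (ih b hbk (by omega)).1 hbB
              have hak : a < k := by omega
              have hbaseA : m * (a / m) ∈ A := (ih a hak (by omega)).2.1 haA
              have hda : m * (a / m) + a % m = a := Nat.div_add_mod a m
              have hamod : a % m = k % m := by
                obtain ⟨t, rfl⟩ := hmb
                rw [← hab, Nat.add_mul_mod_self_left]
              have hsum2 : m * (a / m) + b = m * (k / m) := by omega
              have := uniq (m * (k / m)) (by omega) (m * (a / m)) b (m * (k / m)) 0
                hbaseA hbB hsum2 hbase h0B (by omega)
              omega
        exact ⟨q1, q2, q3⟩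
    have hA_lt : ∀ a ∈ A, a < n := fun a ha => by simpa using hsum a ha 0 h0B
    have hB_lt : ∀ b ∈ B, b < n := fun b hb => by simpa using hsum 0 h0A b hb
    -- m ∣ n
    have hAne : A.Nonempty := ⟨0, h0A⟩
    have hBne : B.Nonempty := ⟨0, h0B⟩
    have haMA : A.max' hAne ∈ A := A.max'_mem hAne
    have hbMB : B.max' hBne ∈ B := B.max'_mem hBne
    set aM := A.max' hAne
    set bM := B.max' hBne
    have hMle : aM + bM < n := hsum _ haMA _ hbMB
    have hMsum : aM + bM = n - 1 := by
      obtain ⟨⟨a, b⟩, ⟨haA, hbB, hab⟩, -⟩ := htile (n - 1) (by omega)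
      have haaM : a ≤ aM := A.le_max' a haA
      have hbbM : b ≤ bM := B.le_max' b hbB
      omega
    have hmbM : m ∣ bM := (main bM (by omega)).1 hbMB
    have hbMm : m ≤ bM := B.le_max' m hmB
    have haMmod : aM % m = m - 1 := by
      by_contra hne
      have hmlt := Nat.mod_lt aM hm0
      have hlt : aM % m < m - 1 := by omega
      have hdmA : m * (aM / m) + aM % m = aM := Nat.div_add_mod aM m
      have h1 : aM + 1 < n := by omega
      have e1 : 1 % m = 1 := Nat.mod_eq_of_lt (by omega)
      have hmod1 : (aM + 1) % m = aM % m + 1 := by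
        rw [Nat.add_mod, e1]
        exact Nat.mod_eq_of_lt (by omega)
      have hdm1 : m * ((aM + 1) / m) + (aM + 1) % m = aM + 1 := Nat.div_add_mod _ m
      have hbase1 : m * ((aM + 1) / m) = m * (aM / m) := by omega
      have hbA : m * (aM / m) ∈ A := (main aM (by omega)).2.1 haMA
      have hsucc : aM + 1 ∈ A := (main (aM + 1) h1).2.2 (by rw [hbase1]; exact hbA)
      have := A.le_max' _ hsucc
      omega
    have hdvd_n : m ∣ n := by
      have hdmA : m * (aM / m) + aM % m = aM := Nat.div_add_mod aM m
      obtain ⟨t, ht⟩ := hmbM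
      refine ⟨aM / m + t + 1, ?_⟩
      have hexp : m * (aM / m + t + 1) = m * (aM / m) + m * t + m := by ring
      omega
    have hQm : m * (n / m) = n := Nat.mul_div_cancel' hdvd_n
    set Efin := (A.filter fun a => a % m = 0).image (· / m) with hEdef
    set Dfin := B.image (· / m) with hDdef
    have hEmem : ∀ e : ℕ, e ∈ Efin ↔ m * e ∈ A := by
      intro e
      rw [hEdef]
      simp only [Finset.mem_image, Finset.mem_filter]
      constructor
      · rintro ⟨a, ⟨haA, hmod⟩, rfl⟩
        rwa [Nat.mul_div_cancel' (Nat.dvd_of_mod_eq_zero hmod)]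
      · intro h
        exact ⟨m * e, ⟨h, Nat.mul_mod_right m e⟩, by rw [Nat.mul_div_cancel_left e hm0]⟩
    have hDmem : ∀ d : ℕ, d ∈ Dfin ↔ m * d ∈ B := by
      intro d
      rw [hDdef]
      simp only [Finset.mem_image]
      constructor
      · rintro ⟨b, hbB, rfl⟩
        rwa [Nat.mul_div_cancel' ((main b (hB_lt b hbB)).1 hbB)]
      · intro h
        exact ⟨m * d, h, by rw [Nat.mul_div_cancel_left d hm0]⟩
    have hfc : ∀ e j : ℕ, m * e ∈ A → j < m → m * e + j ∈ A := by
      intro e j he hj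
      have h1 : m * e < n := hA_lt _ he
      have h2 : m * e + j < n := by
        have hlt : m * e < m * (n / m) := by omega
        have he' : e < n / m := Nat.lt_of_mul_lt_mul_left hlt
        have he'' : e + 1 ≤ n / m := he'
        have h3 : m * (e + 1) ≤ m * (n / m) := Nat.mul_le_mul_left m he''
        have h4 : m * (e + 1) = m * e + m := by ring
        omega
      have hdiv : (m * e + j) / m = e := by
        rw [Nat.mul_add_div hm0, Nat.div_eq_of_lt hj, Nat.add_zero]
      refine (main (m * e + j) h2).2.2 ?_
      rw [hdiv]; exact he
    refine ⟨m, hm2, hdvd_n, Efin, Dfin, ?_, ?_, ?_, ?_, ?_, ?_, ?_, ?_⟩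
    · intro e he
      rw [Finset.mem_range]
      have h1 : m * e < n := hA_lt _ ((hEmem e).mp he)
      have hlt : m * e < m * (n / m) := by omega
      exact Nat.lt_of_mul_lt_mul_left hlt
    · intro d hd
      rw [Finset.mem_range]
      have h1 : m * d < n := hB_lt _ ((hDmem d).mp hd)
      have hlt : m * d < m * (n / m) := by omega
      exact Nat.lt_of_mul_lt_mul_left hlt
    · exact (hEmem 0).mpr (by rw [Nat.mul_zero]; exact h0A)
    · exact (hDmem 0).mpr (by rw [Nat.mul_zero]; exact h0B)
    · intro e he d hd
      have h1 : m * e + m * d < n := hsum _ ((hEmem e).mp he) _ ((hDmem d).mp hd)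
      have h2 : m * (e + d) < m * (n / m) := by rw [Nat.mul_add, hQm]; exact h1
      exact Nat.lt_of_mul_lt_mul_left h2
    · intro k hk
      have hmk : m * k < n := by
        have h3 : m * (k + 1) ≤ m * (n / m) := Nat.mul_le_mul_left m hk
        have h4 : m * (k + 1) = m * k + m := by ring
        omega
      obtain ⟨⟨a, b⟩, ⟨haA, hbB, hab⟩, -⟩ := htile (m * k) hmk
      have hmb : m ∣ b := (main b (by omega)).1 hbB
      have hma : m ∣ a := by
        have h2 : m ∣ a + b := by rw [hab]; exact dvd_mul_right m k
        exact (Nat.dvd_add_iff_left hmb).mpr h2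
      have hea : m * (a / m) = a := Nat.mul_div_cancel' hma
      have hdb : m * (b / m) = b := Nat.mul_div_cancel' hmb
      refine ⟨(a / m, b / m), ⟨(hEmem _).mpr (by rw [hea]; exact haA),
        (hDmem _).mpr (by rw [hdb]; exact hbB), ?_⟩, ?_⟩
      · have h5 : m * (a / m + b / m) = m * k := by rw [Nat.mul_add, hea, hdb]; exact hab
        exact Nat.eq_of_mul_eq_mul_left hm0 h5
      · rintro ⟨e, d⟩ ⟨heE, hdD, hed⟩
        simp only at heE hdD hed
        have hea' : m * e ∈ A := (hEmem e).mp heE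
        have hdb' : m * d ∈ B := (hDmem d).mp hdD
        have hsum3 : m * e + m * d = m * k := by
          rw [← Nat.mul_add, hed]
        have h6 := uniq (m * k) hmk (m * e) (m * d) a b hea' hdb' hsum3 haA hbB hab
        have he1 : e = a / m := by
          rw [← h6.1, Nat.mul_div_cancel_left e hm0]
        have hd1 : d = b / m := by
          rw [← h6.2, Nat.mul_div_cancel_left d hm0]
        simp [he1, hd1]
    · ext x
      simp only [Finset.mem_image, Finset.mem_product, Finset.mem_range]
      constructor
      · intro hx
        refine ⟨(x / m, x % m), ⟨(hEmem _).mpr ((main x (hA_lt x hx)).2.1 hx),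
          Nat.mod_lt _ hm0⟩, Nat.div_add_mod x m⟩
      · rintro ⟨⟨e, j⟩, ⟨heE, hj⟩, rfl⟩
        exact hfc e j ((hEmem e).mp heE) hj
    · ext x
      simp only [Finset.mem_image]
      constructor
      · intro hx
        have hmx : m ∣ x := (main x (hB_lt x hx)).1 hx
        exact ⟨x / m, (hDmem _).mpr (by rwa [Nat.mul_div_cancel' hmx]),
          Nat.mul_div_cancel' hmx⟩
      · rintro ⟨d, hd, rfl⟩
        exact (hDmem d).mp hd

/-- Long's lemma: a tiling `A ⊕ B = [n]`, `n > 1`, `0 ∈ A ∩ B`,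
decomposes as `{A, B} = {mE ⊕ [m], mD}` for some `m ≥ 2`, `m ∣ n`, where
`E ⊕ D = [n/m]` with `0 ∈ E ∩ D`. -/
theorem stmt_5 (n : ℕ) (hn : 1 < n) (A B : Finset ℕ)
    (h0A : 0 ∈ A) (h0B : 0 ∈ B)
    (hsum : ∀ a ∈ A, ∀ b ∈ B, a + b < n)
    (htile : ∀ k < n, ∃! p : ℕ × ℕ, p.1 ∈ A ∧ p.2 ∈ B ∧ p.1 + p.2 = k) :
    ∃ m : ℕ, 2 ≤ m ∧ m ∣ n ∧ ∃ E D : Finset ℕ,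
      E ⊆ Finset.range (n / m) ∧ D ⊆ Finset.range (n / m) ∧
      0 ∈ E ∧ 0 ∈ D ∧
      (∀ e ∈ E, ∀ d ∈ D, e + d < n / m) ∧
      (∀ k < n / m, ∃! p : ℕ × ℕ, p.1 ∈ E ∧ p.2 ∈ D ∧ p.1 + p.2 = k) ∧
      ((A = (E ×ˢ Finset.range m).image (fun p => m * p.1 + p.2) ∧
          B = D.image (fun d => m * d)) ∨
       (B = (E ×ˢ Finset.range m).image (fun p => m * p.1 + p.2) ∧
          A = D.image (fun d => m * d))) := by
  obtain ⟨⟨x, y⟩, ⟨hx, hy, hxy⟩, -⟩ := htile 1 hn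
  simp only at hx hy hxy
  rcases (show x = 1 ∧ y = 0 ∨ x = 0 ∧ y = 1 by omega) with ⟨hx1, -⟩ | ⟨-, hy1⟩
  · rw [hx1] at hx
    obtain ⟨m, hm2, hmn, E, D, hE, hD, h0E, h0D, hs, ht, hAE, hBD⟩ :=
      long_key n hn A B h0A h0B hx hsum htile
    exact ⟨m, hm2, hmn, E, D, hE, hD, h0E, h0D, hs, ht, Or.inl ⟨hAE, hBD⟩⟩
  · rw [hy1] at hy
    have hsum' : ∀ b ∈ B, ∀ a ∈ A, b + a < n := fun b hb a ha => by
      rw [Nat.add_comm]; exact hsum a ha b hb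
    have htile' : ∀ k < n, ∃! p : ℕ × ℕ, p.1 ∈ B ∧ p.2 ∈ A ∧ p.1 + p.2 = k := by
      intro k hk
      obtain ⟨⟨a, b⟩, ⟨ha, hb, hab⟩, hu⟩ := htile k hk
      refine ⟨(b, a), ⟨hb, ha, by omega⟩, ?_⟩
      rintro ⟨b', a'⟩ ⟨hb', ha', hab'⟩
      have h7 := hu (a', b') ⟨ha', hb', by omega⟩
      simp only [Prod.ext_iff] at h7 ⊢
      exact ⟨h7.2, h7.1⟩
    obtain ⟨m, hm2, hmn, E, D, hE, hD, h0E, h0D, hs, ht, hBE, hAD⟩ :=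
      long_key n hn B A h0B h0A hy hsum' htile'
    exact ⟨m, hm2, hmn, E, D, hE, hD, h0E, h0D, hs, ht, Or.inr ⟨hBE, hAD⟩⟩
end

section
/- Suppose A, B ⊆ ℤ_M with A ⊕ B = ℤ_M a tiling. Then for every divisor d of M with d > 1, the d-th cyclotomic polynomial Φ_d(x) divides the polynomial A(x) = Σ_{a∈A} x^a or the polynomial B(x) = Σ_{b∈B} x^b (where A, B are viewed as subsets of {0,...,M-1}). -/
open Polynomial

/-- in a tiling `A ⊕ B = ℤ_M`, every cyclotomic polynomial `Φ_d` with
`d ∣ M`, `d > 1`, divides `A(x)` or `B(x)`. -/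
theorem stmt_6 (M : ℕ) (hM : 0 < M) (A B : Finset ℕ)
    (hA : A ⊆ Finset.range M) (hB : B ⊆ Finset.range M)
    (htile : ∀ x : ZMod M, ∃! p : ℕ × ℕ,
      p.1 ∈ A ∧ p.2 ∈ B ∧ ((p.1 : ZMod M) + (p.2 : ZMod M) = x)) :
    ∀ d : ℕ, d ∣ M → 1 < d →
      (Polynomial.cyclotomic d ℤ ∣ ∑ a ∈ A, (X : ℤ[X]) ^ a) ∨
      (Polynomial.cyclotomic d ℤ ∣ ∑ b ∈ B, (X : ℤ[X]) ^ b) := by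
  haveI : NeZero M := ⟨hM.ne'⟩
  intro d hdM hd1
  -- the reduced sum equals the geometric sum
  have hcast : ∀ k l : ℕ, k < M → l < M → (k : ZMod M) = (l : ZMod M) → k = l := by
    intro k l hk hl h
    have := congrArg ZMod.val h
    rwa [ZMod.val_cast_of_lt hk, ZMod.val_cast_of_lt hl] at this
  have hbij : ∑ p ∈ A ×ˢ B, (X : ℤ[X]) ^ ((p.1 + p.2) % M)
      = ∑ k ∈ Finset.range M, (X : ℤ[X]) ^ k := by
    refine Finset.sum_bij (fun p _ => (p.1 + p.2) % M) ?_ ?_ ?_ ?_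
    · intro p _; exact Finset.mem_range.mpr (Nat.mod_lt _ hM)
    · intro p hp q hq h
      rw [Finset.mem_product] at hp hq
      have hx : ((p.1 : ZMod M) + p.2) = ((q.1 : ZMod M) + q.2) := by
        have := congrArg (fun n : ℕ => (n : ZMod M)) h
        simpa [Nat.cast_add] using this
      obtain ⟨r, -, huniq⟩ := htile ((p.1 : ZMod M) + p.2)
      have h1 := huniq p ⟨hp.1, hp.2, rfl⟩
      have h2 := huniq q ⟨hq.1, hq.2, hx.symm⟩
      rw [h1, h2]
    · intro k hk
      obtain ⟨p, ⟨hp1, hp2, hpx⟩, -⟩ := htile (k : ZMod M)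
      refine ⟨p, Finset.mem_product.mpr ⟨hp1, hp2⟩, ?_⟩
      apply hcast _ _ (Nat.mod_lt _ hM) (Finset.mem_range.mp hk)
      rw [ZMod.natCast_mod, Nat.cast_add, hpx]
    · intro p _; rfl
  -- X^M - 1 divides the difference between the product and the geometric sum
  have hdiff : ((X : ℤ[X]) ^ M - 1) ∣
      ((∑ a ∈ A, (X : ℤ[X]) ^ a) * (∑ b ∈ B, (X : ℤ[X]) ^ b)
        - ∑ k ∈ Finset.range M, (X : ℤ[X]) ^ k) := by
    rw [Finset.sum_mul_sum, ← hbij, ← Finset.sum_product', ← Finset.sum_sub_distrib]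
    apply Finset.dvd_sum
    intro p _
    have : (X : ℤ[X]) ^ (p.1 + p.2) - X ^ ((p.1 + p.2) % M)
        = X ^ ((p.1 + p.2) % M) * ((X ^ M) ^ ((p.1 + p.2) / M) - 1) := by
      rw [mul_sub, mul_one, ← pow_mul, ← pow_add]
      rw [Nat.mod_add_div]
    rw [← pow_add, this]
    exact Dvd.dvd.mul_left
      (by simpa using sub_dvd_pow_sub_pow ((X : ℤ[X]) ^ M) 1 ((p.1 + p.2) / M)) _
  have hcyc_pow : Polynomial.cyclotomic d ℤ ∣ (X : ℤ[X]) ^ M - 1 := by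
    obtain ⟨k, rfl⟩ := hdM
    exact dvd_trans (cyclotomic.dvd_X_pow_sub_one d ℤ)
      (by simpa [pow_mul] using sub_dvd_pow_sub_pow ((X : ℤ[X]) ^ d) 1 k)
  have hgeom : Polynomial.cyclotomic d ℤ ∣ ∑ k ∈ Finset.range M, (X : ℤ[X]) ^ k :=
    Polynomial.cyclotomic_dvd_geom_sum_of_dvd ℤ hdM (by omega)
  have hprod : Polynomial.cyclotomic d ℤ ∣
      (∑ a ∈ A, (X : ℤ[X]) ^ a) * (∑ b ∈ B, (X : ℤ[X]) ^ b) := by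
    have := dvd_add (dvd_trans hcyc_pow hdiff) hgeom
    simpa using this
  have hprime : Prime (Polynomial.cyclotomic d ℤ) :=
    (UniqueFactorizationMonoid.irreducible_iff_prime).mp
      (Polynomial.cyclotomic.irreducible (by omega))
  exact hprime.2.2 _ _ hprod
end

section
/- Let B ⊆ {0,...,M-1} and 0 < t < M. Then t is a period of B modulo M (i.e., (B + t) mod M = B) if and only if x^M - 1 divides (x^t - 1)·B(x) in ℤ[x], where B(x) = Σ_{b∈B} x^b. -/
open Polynomial Finset

/-!
Modulo `x ^ M - 1` every monomial `x ^ n` may be replaced by `x ^ (n % M)`, so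
`(x ^ t - 1) B(x) ≡ B'(x) - B(x)`, where `B'` is the image of `B` under `b ↦ (b + t) % M`.
Both `B(x)` and `B'(x)` have degree `< M`, so the congruence `≡ 0` holds iff `B'(x) = B(x)`,
i.e. iff `B' = B`; and through the cast `ℕ → ZMod M`, injective on `[0, M)`, the equation
`B' = B` says that `B` is invariant under translation by `t` in `ZMod M`.
-/

theorem pow_sub_one_dvd_pow_sub_pow_mod {R : Type*} [CommRing R] (x : R) (M n : ℕ) :
    x ^ M - 1 ∣ x ^ n - x ^ (n % M) := by
  have h : x ^ n - x ^ (n % M) = x ^ (n % M) * (x ^ (M * (n / M)) - 1) := by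
    rw [mul_sub, mul_one, ← pow_add, Nat.mod_add_div]
  rw [h]
  exact (pow_one_sub_dvd_pow_mul_sub_one x M _).mul_left _

theorem X_pow_sub_one_dvd_sub_iff {R : Type*} [CommRing R] [Nontrivial R] {M : ℕ} (hM : 0 < M)
    {p q : R[X]} (hp : p.degree < M) (hq : q.degree < M) : X ^ M - 1 ∣ p - q ↔ p = q := by
  have hmonic : (X ^ M - 1 : R[X]).Monic := by simpa using monic_X_pow_sub_C (1 : R) hM.ne'
  have hdeg : (X ^ M - 1 : R[X]).degree = M := by simpa using degree_X_pow_sub_C hM (1 : R)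
  have hlt : (p - q).degree < (X ^ M - 1 : R[X]).degree :=
    hdeg ▸ (degree_sub_le p q).trans_lt (max_lt hp hq)
  rw [← modByMonic_eq_zero_iff_dvd hmonic, (modByMonic_eq_self_iff hmonic).2 hlt, sub_eq_zero]

noncomputable def genPoly (R : Type*) [Semiring R] (S : Finset ℕ) : R[X] := ∑ b ∈ S, X ^ b

section genPoly

variable {R : Type*} [Semiring R]

theorem coeff_genPoly (S : Finset ℕ) (n : ℕ) :
    (genPoly R S).coeff n = if n ∈ S then 1 else 0 := by
  simp [genPoly, finsetSum_coeff, coeff_X_pow]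

theorem genPoly_injective [Nontrivial R] : Function.Injective (genPoly R) := by
  intro S T h
  ext n
  have h := congrArg (coeff · n) h
  by_cases hS : n ∈ S <;> by_cases hT : n ∈ T <;> simp [coeff_genPoly, hS, hT] at h ⊢

theorem degree_genPoly_lt {S : Finset ℕ} {M : ℕ} (hS : S ⊆ range M) :
    (genPoly R S).degree < M := by
  refine (degree_sum_le _ _).trans_lt ((Finset.sup_lt_iff (WithBot.bot_lt_coe M)).2 fun b hb => ?_)
  exact (degree_X_pow_le b).trans_lt (WithBot.coe_lt_coe.2 (mem_range.1 (hS hb)))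

end genPoly

def rotateMod (M t : ℕ) (S : Finset ℕ) : Finset ℕ := S.image fun b => (b + t) % M

theorem rotateMod_subset_range {M : ℕ} (hM : 0 < M) (t : ℕ) (S : Finset ℕ) :
    rotateMod M t S ⊆ range M := by
  intro c hc
  obtain ⟨b, -, rfl⟩ := mem_image.1 hc
  exact mem_range.2 (Nat.mod_lt _ hM)

theorem genPoly_rotateMod {R : Type*} [Semiring R] {M : ℕ} (t : ℕ) {S : Finset ℕ}
    (hS : S ⊆ range M) : genPoly R (rotateMod M t S) = ∑ b ∈ S, X ^ ((b + t) % M) := by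
  refine sum_image fun a ha b hb hab => ?_
  have := Nat.ModEq.add_right_cancel' t hab
  rwa [Nat.ModEq, Nat.mod_eq_of_lt (mem_range.1 (hS ha)),
    Nat.mod_eq_of_lt (mem_range.1 (hS hb))] at this

theorem X_pow_sub_one_dvd_mul_genPoly_iff {R : Type*} [CommRing R] [Nontrivial R] {M : ℕ}
    (hM : 0 < M) (t : ℕ) {S : Finset ℕ} (hS : S ⊆ range M) :
    X ^ M - 1 ∣ (X ^ t - 1) * genPoly R S ↔ rotateMod M t S = S := by
  have hsplit : (X ^ t - 1) * genPoly R S =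
      ∑ b ∈ S, (X ^ (b + t) - X ^ ((b + t) % M)) +
        (genPoly R (rotateMod M t S) - genPoly R S) := by
    rw [genPoly_rotateMod t hS, sum_sub_distrib, genPoly, sub_mul, one_mul, mul_sum]
    simp only [← pow_add, add_comm t]
    abel
  have hrot : X ^ M - 1 ∣ ∑ b ∈ S, (X ^ (b + t) - X ^ ((b + t) % M) : R[X]) :=
    dvd_sum fun b _ => pow_sub_one_dvd_pow_sub_pow_mod X M (b + t)
  rw [hsplit, dvd_add_right hrot,
    X_pow_sub_one_dvd_sub_iff hM (degree_genPoly_lt (rotateMod_subset_range hM t S))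
      (degree_genPoly_lt hS), genPoly_injective.eq_iff]

theorem ZMod.natCast_injOn_range (M : ℕ) : Set.InjOn (Nat.cast : ℕ → ZMod M) (range M) := by
  intro a ha b hb h
  rwa [ZMod.natCast_eq_natCast_iff', Nat.mod_eq_of_lt (mem_range.1 ha),
    Nat.mod_eq_of_lt (mem_range.1 hb)] at h

theorem Finset.image_add_right_eq_self_iff {G : Type*} [AddGroup G] [DecidableEq G]
    (T : Finset G) (g : G) :
    T.image (· + g) = T ↔ ∀ x, x ∈ T ↔ x + g ∈ T := by
  rw [image_add_right, Finset.ext_iff]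
  simp only [mem_preimage]
  refine ⟨fun h x => ?_, fun h x => ?_⟩
  · simpa using h (x + g)
  · simpa using h (x + -g)

theorem rotateMod_eq_self_iff {M : ℕ} (hM : 0 < M) (t : ℕ) {S : Finset ℕ} (hS : S ⊆ range M) :
    rotateMod M t S = S ↔ ∀ x : ZMod M, x ∈ S.image Nat.cast ↔ x + t ∈ S.image Nat.cast := by
  have hcast : (rotateMod M t S).image (Nat.cast : ℕ → ZMod M) =
      (S.image Nat.cast).image (· + (t : ZMod M)) := by
    simp [rotateMod, image_image, Function.comp_def, ZMod.natCast_mod]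
  rw [← image_eq_image_iff_of_injOn (ZMod.natCast_injOn_range M)
    (rotateMod_subset_range hM t S) hS, hcast, image_add_right_eq_self_iff]

theorem stmt_8_general (M t : ℕ) (B : Finset ℕ) (hB : B ⊆ Finset.range M) :
    (∀ x : ZMod M, x ∈ B.image (Nat.cast : ℕ → ZMod M) ↔
        x + (t : ZMod M) ∈ B.image (Nat.cast : ℕ → ZMod M)) ↔
      ((X : ℤ[X]) ^ M - 1) ∣ ((X : ℤ[X]) ^ t - 1) * ∑ b ∈ B, (X : ℤ[X]) ^ b := by
  rcases Nat.eq_zero_or_pos M with rfl | hM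
  · obtain rfl : B = ∅ := by simpa using hB
    simp
  rw [← rotateMod_eq_self_iff hM t hB, ← X_pow_sub_one_dvd_mul_genPoly_iff (R := ℤ) hM t hB,
    genPoly]

/-- `t` is a period of `B` mod `M` iff `x^M - 1 ∣ (x^t - 1)·B(x)`. -/
theorem stmt_8 (M t : ℕ) (B : Finset ℕ) (hB : B ⊆ Finset.range M)
    (ht : 0 < t) (htM : t < M) :
    (∀ x : ZMod M, x ∈ B.image (Nat.cast : ℕ → ZMod M) ↔
        x + (t : ZMod M) ∈ B.image (Nat.cast : ℕ → ZMod M)) ↔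
      ((X : ℤ[X]) ^ M - 1) ∣ ((X : ℤ[X]) ^ t - 1) * ∑ b ∈ B, (X : ℤ[X]) ^ b :=
  stmt_8_general M t B hB
end

section
/- There is an absolute constant C > 0 such that if s_1 < s_2 < ... < s_k are distinct integers greater than 1 with φ(s_1) + ... + φ(s_k) ≤ D (for D ≥ 3), then s_1 + ... + s_k ≤ C·D·log log D. -/
open Finset Real
open Nat (primesLE)
open scoped Nat

/-!
Chebyshev's bound `θ(N) ≤ N log 4` and Legendre's formula for `N!` give
`∑_{p ≤ N} log p / p ≤ log N + log 4`, and partial summation turns this into Mertens' estimate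
`∑_{p ≤ N} 1 / p ≤ log log N + O(1)`. Since
`n / φ(n) = ∏_{p ∣ n} (1 - 1/p)⁻¹ ≤ exp ∑_{p ∣ n} 1/(p-1)` and the prime factors above `ω(n)`
contribute at most `1` to that sum, `n ≤ C φ(n) log (ω(n) + 2)`. Finally
`2^ω(n) ≤ 2 φ(n) ≤ 2D`, so `log (ω(n) + 2) = O(log log D)`; apply this to every `s_i` and sum.
-/

theorem Nat.div_le_factorization_factorial {p : ℕ} (hp : p.Prime) (n : ℕ) :
    n / p ≤ (n !).factorization p := by
  rw [Nat.factorization_factorial hp (Nat.lt_add_of_pos_right two_pos)]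
  calc n / p = n / p ^ 1 := by rw [pow_one]
    _ ≤ ∑ i ∈ Ico 1 (Nat.log p n + 2), n / p ^ i :=
      single_le_sum (f := fun i => n / p ^ i) (fun _ _ => Nat.zero_le _) (by simp)

theorem log_factorial_eq_sum_primesLE (N : ℕ) :
    log (N ! : ℕ) = ∑ p ∈ primesLE N, ((N !).factorization p : ℝ) * log p := by
  rw [log_nat_eq_sum_factorization]
  refine Finsupp.sum_of_support_subset _ (fun p hp => ?_) _ (fun _ _ => by simp)
  have hp' := Nat.prime_of_mem_primeFactors hp
  exact Nat.mem_primesLE.2 ⟨hp'.dvd_factorial.1 (Nat.dvd_of_mem_primeFactors hp), hp'⟩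

theorem sum_primesLE_div_mul_log_le_log_factorial (N : ℕ) :
    ∑ p ∈ primesLE N, ((N / p : ℕ) : ℝ) * log p ≤ log (N ! : ℕ) := by
  rw [log_factorial_eq_sum_primesLE]
  gcongr with p hp
  exact Nat.div_le_factorization_factorial (Nat.prime_of_mem_primesLE hp) N

theorem sum_primesLE_log_div_le (N : ℕ) :
    ∑ p ∈ primesLE N, log p / p ≤ log N + log 4 := by
  rcases N.eq_zero_or_pos with rfl | hN
  · simpa using log_nonneg (by norm_num : (1 : ℝ) ≤ 4)
  have hN' : (0 : ℝ) < N := by exact_mod_cast hN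
  have hterm : ∀ p ∈ primesLE N, N * (log p / p) ≤ ((N / p : ℕ) : ℝ) * log p + log p := by
    intro p hp
    have hlog : 0 ≤ log p := log_nonneg (by exact_mod_cast (Nat.prime_of_mem_primesLE hp).one_le)
    have hdiv : (N : ℝ) / p ≤ ((N / p : ℕ) : ℝ) + 1 := by
      rw [← Nat.floor_div_eq_div (K := ℝ)]
      exact (Nat.lt_floor_add_one _).le
    calc N * (log p / p) = N / p * log p := by ring
      _ ≤ (((N / p : ℕ) : ℝ) + 1) * log p := by gcongr
      _ = _ := by ring
  have hfactorial : log (N ! : ℕ) ≤ N * log N := by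
    calc log (N ! : ℕ) ≤ log (N ^ N : ℕ) :=
          log_le_log (by positivity) (by exact_mod_cast Nat.factorial_le_pow N)
      _ = N * log N := by push_cast; rw [log_pow]
  have htheta : ∑ p ∈ primesLE N, log p ≤ N * log 4 := by
    rw [← Chebyshev.theta_eq_sum_primesLE_log]
    linarith [Chebyshev.theta_le_log4_mul_x hN'.le]
  refine le_of_mul_le_mul_left ?_ hN'
  calc N * ∑ p ∈ primesLE N, log p / p
      ≤ ∑ p ∈ primesLE N, (((N / p : ℕ) : ℝ) * log p + log p) := by
        rw [mul_sum]; exact sum_le_sum hterm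
    _ = ∑ p ∈ primesLE N, ((N / p : ℕ) : ℝ) * log p + ∑ p ∈ primesLE N, log p :=
        sum_add_distrib
    _ ≤ N * log N + N * log 4 :=
        add_le_add ((sum_primesLE_div_mul_log_le_log_factorial N).trans hfactorial) htheta
    _ = N * (log N + log 4) := by ring

/-- Partial summation of `∑ (log p / p) · (1 / log p)`; this is nonincreasing for `N ≥ 2`. -/
noncomputable def mertensRemainder (N : ℕ) : ℝ :=
  ∑ p ∈ primesLE N, (p : ℝ)⁻¹ - (∑ p ∈ primesLE N, log p / p - log 4) / log N - log (log N)

theorem mertensRemainder_succ_le {N : ℕ} (hN : 2 ≤ N) :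
    mertensRemainder (N + 1) ≤ mertensRemainder N := by
  unfold mertensRemainder
  set L := log N
  set L' := log (N + 1 : ℕ)
  set S := ∑ p ∈ primesLE N, log p / p
  have hL : 0 < L := log_pos (by exact_mod_cast hN)
  have hLL' : L ≤ L' := log_le_log (by positivity) (by exact_mod_cast N.le_succ)
  have hL' : 0 < L' := hL.trans_le hLL'
  -- a new prime `p = N + 1` changes the left side by `1 / p - (log p / p) / log p = 0`
  have hnew : ∑ p ∈ primesLE (N + 1), (p : ℝ)⁻¹ - (∑ p ∈ primesLE (N + 1), log p / p) / L' =
      ∑ p ∈ primesLE N, (p : ℝ)⁻¹ - S / L' := by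
    rw [Nat.primesLE_succ]
    split_ifs
    · rw [sum_insert (Nat.notMem_primesLE N), sum_insert (Nat.notMem_primesLE N)]
      field_simp
      ring
    · rfl
  have hS : S - log 4 ≤ L := by linarith [sum_primesLE_log_div_le N]
  have hmul : S / L - S / L' - (log 4 / L - log 4 / L') ≤ 1 - L / L' :=
    calc S / L - S / L' - (log 4 / L - log 4 / L') = (S - log 4) * (L⁻¹ - L'⁻¹) := by ring
      _ ≤ L * (L⁻¹ - L'⁻¹) := mul_le_mul_of_nonneg_right hS (sub_nonneg.2 (inv_anti₀ hL hLL'))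
      _ = 1 - L / L' := by field_simp
  have hloglog : 1 - L / L' ≤ log L' - log L := by
    rw [← log_div hL'.ne' hL.ne']
    simpa using one_sub_inv_le_log_of_pos (div_pos hL' hL)
  simp only [sub_div]
  linarith

theorem mertensRemainder_two_le : mertensRemainder 2 ≤ 3 := by
  have hlog2 : 1 / 2 < log 2 := by linarith [log_two_gt_d9]
  have hlog4 : log 4 = 2 * log 2 := by
    rw [show (4 : ℝ) = 2 ^ 2 by norm_num, log_pow]; norm_num
  have hloglog2 : -1 ≤ log (log 2) := by
    have := one_sub_inv_le_log_of_pos (by positivity : 0 < log 2)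
    have : (log 2)⁻¹ ≤ 2 := by rw [inv_le_comm₀ (by positivity) two_pos]; linarith
    linarith
  have hprimes : primesLE 2 = {2} := rfl
  simp only [mertensRemainder, hprimes, sum_singleton, Nat.cast_ofNat, hlog4]
  have : (log 2 / 2 - 2 * log 2) / log 2 = -3 / 2 := by field_simp; ring
  rw [this]
  linarith

theorem sum_primesLE_inv_le {N : ℕ} (hN : 2 ≤ N) :
    ∑ p ∈ primesLE N, (p : ℝ)⁻¹ ≤ log (log N) + 4 := by
  have hrem : mertensRemainder N ≤ 3 := by
    induction N, hN using Nat.le_induction with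
    | base => exact mertensRemainder_two_le
    | succ N hN ih => exact (mertensRemainder_succ_le hN).trans ih
  have hL : 0 < log N := log_pos (by exact_mod_cast hN)
  have hS : (∑ p ∈ primesLE N, log p / p - log 4) / log N ≤ 1 := by
    rw [div_le_one hL]; linarith [sum_primesLE_log_div_le N]
  unfold mertensRemainder at hrem
  linarith

theorem sum_inv_sub_one_le_sum_inv_add_four {s : Finset ℕ} (hs : ∀ p ∈ s, 2 ≤ p) :
    ∑ p ∈ s, ((p : ℝ) - 1)⁻¹ ≤ ∑ p ∈ s, (p : ℝ)⁻¹ + 4 := by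
  have hterm : ∀ p ∈ s, ((p : ℝ) - 1)⁻¹ ≤ (p : ℝ)⁻¹ + 2 * (1 / (p : ℝ) ^ 2) := by
    intro p hp
    have hp2 : (2 : ℝ) ≤ p := by exact_mod_cast hs p hp
    have hp1 : (0 : ℝ) < p - 1 := by linarith
    rw [inv_le_iff_one_le_mul₀ hp1]
    field_simp
    nlinarith
  have hzeta : ∑ p ∈ s, 1 / (p : ℝ) ^ 2 ≤ π ^ 2 / 6 :=
    sum_le_hasSum s (fun _ _ => by positivity) hasSum_zeta_two
  have hpi : π ^ 2 / 6 ≤ 2 := by nlinarith [pi_lt_d2, pi_pos]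
  calc ∑ p ∈ s, ((p : ℝ) - 1)⁻¹ ≤ ∑ p ∈ s, ((p : ℝ)⁻¹ + 2 * (1 / (p : ℝ) ^ 2)) :=
        sum_le_sum hterm
    _ = ∑ p ∈ s, (p : ℝ)⁻¹ + 2 * ∑ p ∈ s, 1 / (p : ℝ) ^ 2 := by rw [sum_add_distrib, mul_sum]
    _ ≤ ∑ p ∈ s, (p : ℝ)⁻¹ + 4 := by linarith

theorem sum_primeFactors_inv_le {n M : ℕ} (hM : 2 ≤ M) (hω : #n.primeFactors ≤ M) :
    ∑ p ∈ n.primeFactors, (p : ℝ)⁻¹ ≤ log (log M) + 5 := by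
  rw [← sum_filter_add_sum_filter_not n.primeFactors (· ≤ M)]
  have hsmall : ∑ p ∈ n.primeFactors with p ≤ M, (p : ℝ)⁻¹ ≤ log (log M) + 4 := by
    refine (sum_le_sum_of_subset_of_nonneg (fun p hp => ?_) fun _ _ _ => by positivity).trans
      (sum_primesLE_inv_le hM)
    rw [mem_filter] at hp
    exact Nat.mem_primesLE.2 ⟨hp.2, Nat.prime_of_mem_primeFactors hp.1⟩
  have hM' : (0 : ℝ) < M := by exact_mod_cast (two_pos.trans_le hM)
  have hlarge : ∑ p ∈ n.primeFactors with ¬p ≤ M, (p : ℝ)⁻¹ ≤ 1 :=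
    calc ∑ p ∈ n.primeFactors with ¬p ≤ M, (p : ℝ)⁻¹
        ≤ ∑ p ∈ n.primeFactors with ¬p ≤ M, (M : ℝ)⁻¹ := by
          refine sum_le_sum fun p hp => inv_anti₀ hM' ?_
          exact_mod_cast (not_le.1 (mem_filter.1 hp).2).le
      _ ≤ M * (M : ℝ)⁻¹ := by
          rw [sum_const, nsmul_eq_mul]
          gcongr
          exact_mod_cast (card_filter_le _ _).trans hω
      _ = 1 := mul_inv_cancel₀ hM'.ne'
  linarith

theorem natCast_le_totient_mul_exp (n : ℕ) :
    (n : ℝ) ≤ φ n * exp (∑ p ∈ n.primeFactors, ((p : ℝ) - 1)⁻¹) := by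
  have hφ : (φ n : ℝ) = n * ∏ p ∈ n.primeFactors, (1 - (p : ℝ)⁻¹) := by
    have h := congrArg (Rat.cast : ℚ → ℝ) (Nat.totient_eq_mul_prod_factors n)
    push_cast at h
    exact h
  have hfactor : ∀ p ∈ n.primeFactors, 1 ≤ (1 - (p : ℝ)⁻¹) * exp ((p : ℝ) - 1)⁻¹ := by
    intro p hp
    have hp2 : (2 : ℝ) ≤ p := by exact_mod_cast (Nat.prime_of_mem_primeFactors hp).two_le
    have hp1 : (0 : ℝ) < p - 1 := by linarith
    calc (1 : ℝ) = (1 - (p : ℝ)⁻¹) * (((p : ℝ) - 1)⁻¹ + 1) := by field_simp; ring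
      _ ≤ (1 - (p : ℝ)⁻¹) * exp ((p : ℝ) - 1)⁻¹ := by
          gcongr
          · rw [sub_nonneg]; exact inv_le_one_of_one_le₀ (by linarith)
          · exact add_one_le_exp _
  calc (n : ℝ) = n * ∏ p ∈ n.primeFactors, (1 : ℝ) := by simp
    _ ≤ n * ∏ p ∈ n.primeFactors, ((1 - (p : ℝ)⁻¹) * exp ((p : ℝ) - 1)⁻¹) := by
        gcongr with p hp
        exact hfactor p hp
    _ = φ n * exp (∑ p ∈ n.primeFactors, ((p : ℝ) - 1)⁻¹) := by
        rw [prod_mul_distrib, exp_sum, hφ, mul_assoc]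

theorem two_pow_card_primeFactors_le (n : ℕ) (hn : n ≠ 0) :
    2 ^ #n.primeFactors ≤ 2 * φ n := by
  have hprod : ∏ p ∈ n.primeFactors, (p - 1) ≤ φ n := by
    rw [Nat.totient_eq_div_primeFactors_mul n]
    refine Nat.le_mul_of_pos_left _ (Nat.div_pos (Nat.le_of_dvd (Nat.pos_of_ne_zero hn)
      (Nat.prod_primeFactors_dvd n)) (prod_pos fun p hp => Nat.pos_of_mem_primeFactors hp))
  -- every odd prime factor contributes `p - 1 ≥ 2`, the prime `2` contributes `1`
  have hodd : 2 ^ #(n.primeFactors.erase 2) ≤ ∏ p ∈ n.primeFactors, (p - 1) := by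
    rw [← prod_erase (f := fun p => p - 1) _ (show 2 - 1 = 1 from rfl), ← prod_const]
    refine prod_le_prod' fun p hp => ?_
    have := (Nat.prime_of_mem_primeFactors (mem_of_mem_erase hp)).two_le
    have := ne_of_mem_erase hp
    omega
  calc 2 ^ #n.primeFactors ≤ 2 ^ (#(n.primeFactors.erase 2) + 1) :=
        Nat.pow_le_pow_right two_pos
          (by have := pred_card_le_card_erase (s := n.primeFactors) (a := 2); omega)
    _ = 2 * 2 ^ #(n.primeFactors.erase 2) := by ring
    _ ≤ 2 * φ n := by gcongr; exact hodd.trans hprod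

theorem card_primeFactors_le_one_add_two_mul_log_totient (n : ℕ) (hn : n ≠ 0) :
    (#n.primeFactors : ℝ) ≤ 1 + 2 * log (φ n) := by
  have hpow : (2 : ℝ) ^ #n.primeFactors ≤ 2 * φ n := by
    exact_mod_cast two_pow_card_primeFactors_le n hn
  have hφ : (0 : ℝ) < φ n := by exact_mod_cast Nat.totient_pos.2 (Nat.pos_of_ne_zero hn)
  have hlog : #n.primeFactors * log 2 ≤ log 2 + log (φ n) := by
    rw [← log_pow, ← log_mul two_ne_zero hφ.ne']
    exact log_le_log (by positivity) hpow
  have hlog2 : 1 / 2 < log 2 := by linarith [log_two_gt_d9]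
  have hlogφ : 0 ≤ log (φ n) := log_nonneg (by exact_mod_cast hφ)
  nlinarith

theorem one_lt_log_of_three_le {x : ℝ} (hx : 3 ≤ x) : 1 < log x := by
  rw [lt_log_iff_exp_lt (by linarith)]
  linarith [exp_one_lt_d9]

theorem natCast_le_mul_totient_mul_log_log {n D : ℕ} (hn : n ≠ 0) (hD : 3 ≤ D) (hφ : φ n ≤ D) :
    (n : ℝ) ≤ exp 9 * (log 5 / log (log 3) + 1) * φ n * log (log D) := by
  have hD' : (3 : ℝ) ≤ D := by exact_mod_cast hD
  have hlogD : 1 < log D := one_lt_log_of_three_le hD'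
  have hlog3 : 1 < log 3 := one_lt_log_of_three_le le_rfl
  have hloglog3 : 0 < log (log 3) := log_pos hlog3
  have hloglog : log (log 3) ≤ log (log D) :=
    log_le_log (by linarith) (log_le_log (by norm_num) hD')
  set M := #n.primeFactors + 2
  have hM : (M : ℝ) ≤ 5 * log D := by
    have := card_primeFactors_le_one_add_two_mul_log_totient n hn
    have : log (φ n) ≤ log D := log_le_log
      (by exact_mod_cast Nat.totient_pos.2 (Nat.pos_of_ne_zero hn)) (by exact_mod_cast hφ)
    push_cast [M]
    linarith
  have hlogM : log M ≤ (log 5 / log (log 3) + 1) * log (log D) := by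
    calc log M ≤ log (5 * log D) := log_le_log (by positivity) hM
      _ = log 5 + log (log D) := log_mul (by norm_num) (by positivity)
      _ ≤ log 5 / log (log 3) * log (log D) + log (log D) := by
          gcongr
          rw [div_mul_eq_mul_div, le_div_iff₀ hloglog3]
          exact mul_le_mul_of_nonneg_left hloglog (log_nonneg (by norm_num))
      _ = _ := by ring
  have hsum : ∑ p ∈ n.primeFactors, ((p : ℝ) - 1)⁻¹ ≤ log (log M) + 9 := by
    have := sum_inv_sub_one_le_sum_inv_add_four (s := n.primeFactors)
      fun p hp => (Nat.prime_of_mem_primeFactors hp).two_le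
    have := sum_primeFactors_inv_le (n := n) (M := M) (by omega) (by omega)
    linarith
  have hM0 : 0 < log M := log_pos (by exact_mod_cast (by omega : 1 < M))
  calc (n : ℝ) ≤ φ n * exp (∑ p ∈ n.primeFactors, ((p : ℝ) - 1)⁻¹) :=
        natCast_le_totient_mul_exp n
    _ ≤ φ n * exp (log (log M) + 9) := by gcongr
    _ = exp 9 * φ n * log M := by rw [exp_add, exp_log hM0]; ring
    _ ≤ exp 9 * φ n * ((log 5 / log (log 3) + 1) * log (log D)) := by gcongr
    _ = _ := by ring

/-- if distinct integers `s₁ < ⋯ < s_k`, all `> 1`, satisfy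
`φ(s₁) + ⋯ + φ(s_k) ≤ D`, then `s₁ + ⋯ + s_k ≤ C·D·log log D`. -/
theorem stmt_10 : ∃ C : ℝ, 0 < C ∧ ∀ D : ℕ, 3 ≤ D →
    ∀ k : ℕ, ∀ s : Fin k → ℕ, StrictMono s → (∀ i, 1 < s i) →
      (∑ i, Nat.totient (s i) ≤ D) →
      ((∑ i, s i : ℕ) : ℝ) ≤ C * D * Real.log (Real.log D) := by
  have hloglog3 : 0 < log (log 3) := log_pos (one_lt_log_of_three_le le_rfl)
  refine ⟨exp 9 * (log 5 / log (log 3) + 1), by positivity, fun D hD k s _ hs hsum => ?_⟩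
  have hφ : ∀ i, φ (s i) ≤ D := fun i =>
    (single_le_sum (f := fun j => φ (s j)) (fun _ _ => Nat.zero_le _) (mem_univ i)).trans hsum
  have hloglogD : 0 ≤ log (log D) :=
    log_nonneg (one_lt_log_of_three_le (by exact_mod_cast hD)).le
  calc ((∑ i, s i : ℕ) : ℝ) = ∑ i, (s i : ℝ) := Nat.cast_sum _ _
    _ ≤ ∑ i, exp 9 * (log 5 / log (log 3) + 1) * φ (s i) * log (log D) :=
        sum_le_sum fun i _ => natCast_le_mul_totient_mul_log_log (hs i).ne_bot hD (hφ i)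
    _ = exp 9 * (log 5 / log (log 3) + 1) * (∑ i, φ (s i) : ℕ) * log (log D) := by
        rw [Nat.cast_sum, mul_sum, sum_mul]
    _ ≤ exp 9 * (log 5 / log (log 3) + 1) * D * log (log D) := by
        gcongr
end

section
/- There exist absolute constants C, c > 0 such that the following holds: if A ⊆ {0,...,D}, B ⊆ ℤ, A ⊕ B = ℤ is a tiling, and B is M-periodic with M its least positive period, then M ≤ C·exp(c·√D·(log D)·√(log log D)) for D ≥ 3. -/
/-!
Reduce modulo the least period `M`: let `g : ZMod M → ℚ` be the indicator of `B mod M` and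
`G(X) = ∑ₓ g x X ^ x`. The tiling says `∑ a ∈ A, g (x - a) = 1`, so at every `M`-th root of
unity `ζ ≠ 1` the product `A(ζ) G(ζ)` is a full character sum and vanishes: for each divisor
`e > 1` of `M`, the cyclotomic polynomial `Φ_e` divides `A(X)` or `G(X)`. If for some prime
`p ∣ M` no `Φ_e` with `e ∣ M`, `e ∤ M / p` divided `A(X)`, then `(ζ ^ (M / p) - 1) G(ζ)` would
vanish at all `M`-th roots of unity and `B` would be `M / p`-periodic. So every prime power
`p ^ a ∥ M` divides some `e` with `Φ_e ∣ A(X)`; these are coprime factors of a polynomial of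
degree `≤ D`, so `∑ φ e ≤ D`. Hence `p ^ a ≤ 2 D` and `∑_{p ∣ M} (p - 1) ≤ 2 D`, so `M` has
`R ≤ 1 + 2 √D` prime factors and `M ≤ (2 D) ^ R ≤ exp (6 √D log D)`.
-/

open Polynomial Finset
open scoped Nat

theorem cyclotomic_dvd_iff_aeval_eq_zero {e : ℕ} {ζ : ℂ} (hζ : IsPrimitiveRoot ζ e) (he : 0 < e)
    {P : ℚ[X]} : cyclotomic e ℚ ∣ P ↔ aeval ζ P = 0 := by
  rw [cyclotomic_eq_minpoly_rat hζ he, minpoly.dvd_iff]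

theorem X_pow_sub_one_dvd_of_aeval_eq_zero {m : ℕ} (hm : 0 < m) {P : ℚ[X]}
    (h : ∀ ζ : ℂ, ζ ^ m = 1 → aeval ζ P = 0) : X ^ m - 1 ∣ P := by
  rw [← prod_cyclotomic_eq_X_pow_sub_one hm]
  refine prod_dvd_of_coprime (fun a _ b _ hab => cyclotomic.isCoprime_rat hab) fun e he => ?_
  have he0 := Nat.pos_of_mem_divisors he
  have hζ := Complex.isPrimitiveRoot_exp e he0.ne'
  exact (cyclotomic_dvd_iff_aeval_eq_zero hζ he0).2 <|
    h _ ((hζ.pow_eq_one_iff_dvd m).2 (Nat.dvd_of_mem_divisors he))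

section CyclicPoly

variable {m : ℕ} [NeZero m]

noncomputable def cyclicPoly (f : ZMod m → ℚ) : ℚ[X] := ∑ x, C (f x) * X ^ x.val

theorem coeff_cyclicPoly_val (f : ZMod m → ℚ) (x : ZMod m) :
    (cyclicPoly f).coeff x.val = f x := by
  simp [cyclicPoly, (ZMod.val_injective m).eq_iff]

theorem degree_cyclicPoly_lt (f : ZMod m → ℚ) : (cyclicPoly f).degree < m := by
  refine (degree_sum_le _ _).trans_lt <| (Finset.sup_lt_iff (WithBot.bot_lt_coe m)).2 fun x _ => ?_
  exact (degree_C_mul_X_pow_le _ _).trans_lt (WithBot.coe_lt_coe.2 (ZMod.val_lt x))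

theorem cyclicPoly_sub (f g : ZMod m → ℚ) : cyclicPoly (f - g) = cyclicPoly f - cyclicPoly g := by
  simp [cyclicPoly, sub_mul, sum_sub_distrib]

theorem aeval_cyclicPoly {ζ : ℂ} (hζ : ζ ^ m = 1) (f : ZMod m → ℚ) :
    aeval ζ (cyclicPoly f) = ∑ x, (f x : ℂ) * AddChar.zmodChar m hζ x := by
  simp [cyclicPoly, AddChar.zmodChar_apply]

theorem aeval_cyclicPoly_comp_sub {ζ : ℂ} (hζ : ζ ^ m = 1) (f : ZMod m → ℚ) (k : ℕ) :
    aeval ζ (cyclicPoly fun x => f (x - (k : ZMod m))) = ζ ^ k * aeval ζ (cyclicPoly f) := by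
  rw [aeval_cyclicPoly hζ, aeval_cyclicPoly hζ, mul_sum]
  refine Fintype.sum_equiv (Equiv.subRight (k : ZMod m)) _ _ fun x => ?_
  rw [Equiv.subRight_apply, ← AddChar.zmodChar_apply' hζ k, mul_left_comm,
    ← AddChar.map_add_eq_mul, add_sub_cancel]

theorem eq_zero_of_aeval_cyclicPoly_eq_zero {f : ZMod m → ℚ}
    (h : ∀ ζ : ℂ, ζ ^ m = 1 → aeval ζ (cyclicPoly f) = 0) : f = 0 := by
  have h0 : cyclicPoly f = 0 :=
    eq_zero_of_dvd_of_degree_lt (X_pow_sub_one_dvd_of_aeval_eq_zero (NeZero.pos m) h) <| by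
      rw [← C_1, degree_X_pow_sub_C (NeZero.pos m)]
      exact degree_cyclicPoly_lt f
  funext x
  rw [← coeff_cyclicPoly_val f x, h0, coeff_zero, Pi.zero_apply]

theorem periodic_of_cyclotomic_dvd_cyclicPoly {f : ZMod m → ℚ} {k : ℕ}
    (h : ∀ e ∈ m.divisors, ¬ e ∣ k → cyclotomic e ℚ ∣ cyclicPoly f) : Function.Periodic f k := by
  have hshift : (fun x => f (x - (k : ZMod m))) - f = 0 :=
    eq_zero_of_aeval_cyclicPoly_eq_zero fun ζ hζ => by
      rw [cyclicPoly_sub, map_sub, aeval_cyclicPoly_comp_sub hζ, ← sub_one_mul, mul_eq_zero]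
      have hm : orderOf ζ ∣ m := orderOf_dvd_of_pow_eq_one hζ
      by_cases hk : orderOf ζ ∣ k
      · left
        rw [orderOf_dvd_iff_pow_eq_one.1 hk, sub_self]
      · right
        exact (cyclotomic_dvd_iff_aeval_eq_zero (IsPrimitiveRoot.orderOf ζ)
          (Nat.pos_of_dvd_of_pos hm (NeZero.pos m))).1
            (h _ (Nat.mem_divisors.2 ⟨hm, NeZero.ne m⟩) hk)
  intro x
  have hx := congr_fun hshift (x + k)
  rw [Pi.sub_apply, add_sub_cancel_right, Pi.zero_apply, sub_eq_zero] at hx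
  exact hx.symm

variable {A : Finset ℕ} {g : ZMod m → ℚ} {c : ℚ}

theorem sum_addChar_mul_sum_eq_zero (hg : ∀ x, ∑ a ∈ A, g (x - a) = c)
    {ψ : AddChar (ZMod m) ℂ} (hψ : ψ ≠ 1) : (∑ a ∈ A, ψ a) * ∑ x, (g x : ℂ) * ψ x = 0 :=
  calc (∑ a ∈ A, ψ a) * ∑ x, (g x : ℂ) * ψ x
      = ∑ a ∈ A, ∑ x, (g x : ℂ) * ψ (x + a) := by
        rw [sum_mul]
        refine sum_congr rfl fun a _ => ?_
        rw [mul_sum]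
        exact sum_congr rfl fun x _ => by rw [AddChar.map_add_eq_mul]; ring
    _ = ∑ a ∈ A, ∑ y, (g (y - a) : ℂ) * ψ y := sum_congr rfl fun a _ =>
        Fintype.sum_equiv (Equiv.addRight (a : ZMod m)) _ _ fun x => by simp
    _ = ∑ y, (c : ℂ) * ψ y := by
        rw [sum_comm]
        simp [← sum_mul, ← Rat.cast_sum, hg]
    _ = 0 := by rw [← mul_sum, AddChar.sum_eq_zero_of_ne_one hψ, mul_zero]

theorem cyclotomic_dvd_or_cyclotomic_dvd_cyclicPoly (hg : ∀ x, ∑ a ∈ A, g (x - a) = c) {e : ℕ}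
    (he : e ∣ m) (he1 : 1 < e) :
    cyclotomic e ℚ ∣ ∑ a ∈ A, X ^ a ∨ cyclotomic e ℚ ∣ cyclicPoly g := by
  have he0 : 0 < e := by omega
  obtain ⟨ζ, hζ⟩ : ∃ ζ : ℂ, IsPrimitiveRoot ζ e := ⟨_, Complex.isPrimitiveRoot_exp e he0.ne'⟩
  simp only [cyclotomic_dvd_iff_aeval_eq_zero hζ he0]
  have hζm : ζ ^ m = 1 := (hζ.pow_eq_one_iff_dvd m).2 he
  have hψ : AddChar.zmodChar m hζm ≠ 1 := AddChar.ne_one_iff.2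
    ⟨(1 : ℕ), by rw [AddChar.zmodChar_apply', pow_one]; exact hζ.ne_one he1⟩
  rw [aeval_cyclicPoly hζm, ← mul_eq_zero, ← sum_addChar_mul_sum_eq_zero hg hψ]
  simp [AddChar.zmodChar_apply']

theorem periodic_of_not_cyclotomic_dvd (hg : ∀ x, ∑ a ∈ A, g (x - a) = c) {k : ℕ}
    (hA : ∀ e ∈ m.divisors, ¬ e ∣ k → ¬ cyclotomic e ℚ ∣ ∑ a ∈ A, X ^ a) :
    Function.Periodic g k :=
  periodic_of_cyclotomic_dvd_cyclicPoly fun e he hek =>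
    (cyclotomic_dvd_or_cyclotomic_dvd_cyclicPoly hg (Nat.dvd_of_mem_divisors he)
      (Nat.one_lt_iff_ne_zero_and_ne_one.2 ⟨Nat.ne_of_gt (Nat.pos_of_mem_divisors he),
        by rintro rfl; exact hek (one_dvd k)⟩)).resolve_left (hA e he hek)

end CyclicPoly

theorem sum_totient_le_natDegree {P : ℚ[X]} (hP : P ≠ 0) {E : Finset ℕ}
    (hE : ∀ e ∈ E, cyclotomic e ℚ ∣ P) : ∑ e ∈ E, φ e ≤ P.natDegree := by
  have h := natDegree_le_of_dvd (prod_dvd_of_coprime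
    (fun a _ b _ hab => cyclotomic.isCoprime_rat hab) hE) hP
  simpa only [natDegree_prod _ _ fun e _ => cyclotomic_ne_zero e ℚ, natDegree_cyclotomic] using h

theorem sum_X_pow_ne_zero {A : Finset ℕ} (hA : A.Nonempty) : (∑ a ∈ A, X ^ a : ℚ[X]) ≠ 0 :=
  fun h => by simpa [eval_finsetSum, hA.ne_empty] using congr_arg (eval 1) h

theorem natDegree_sum_X_pow_le {A : Finset ℕ} {D : ℕ} (hA : A ⊆ range (D + 1)) :
    (∑ a ∈ A, X ^ a : ℚ[X]).natDegree ≤ D :=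
  natDegree_sum_le_of_forall_le _ _ fun a ha => by
    rw [natDegree_X_pow]
    exact Nat.lt_succ_iff.1 (mem_range.1 (hA ha))

section NumberTheory

theorem Nat.ordProj_dvd_of_not_dvd_div {p e m : ℕ} (hp : p.Prime) (he : e ∣ m)
    (h : ¬ e ∣ m / p) : p ^ m.factorization p ∣ e := by
  rcases eq_or_ne m 0 with rfl | hm
  · simp at h
  have he0 : e ≠ 0 := ne_zero_of_dvd_ne_zero hm he
  by_contra hpe
  have hlt : e.factorization p < m.factorization p := by
    rwa [hp.pow_dvd_iff_le_factorization he0, not_le] at hpe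
  have hpm : p ∣ m := (hp.dvd_iff_one_le_factorization hm).2 (by omega)
  refine h ((Nat.factorization_le_iff_dvd he0
    ((Nat.div_ne_zero_iff_of_dvd hpm).2 ⟨hm, hp.ne_zero⟩)).1 fun q => ?_)
  have hq := (Nat.factorization_le_iff_dvd he0 hm).2 he q
  rw [Nat.factorization_div hpm, hp.factorization, Finsupp.tsub_apply, Finsupp.single_apply]
  split_ifs with hpq
  · subst hpq
    omega
  · omega

theorem Nat.pow_le_two_mul_totient {p : ℕ} (hp : p.Prime) (k : ℕ) : p ^ k ≤ 2 * φ (p ^ k) := by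
  cases k with
  | zero => simp
  | succ k =>
    rw [Nat.totient_prime_pow_succ hp, pow_succ]
    have := hp.two_le
    calc p ^ k * p ≤ p ^ k * (2 * (p - 1)) := Nat.mul_le_mul_left _ (by omega)
      _ = 2 * (p ^ k * (p - 1)) := by ring

theorem Nat.prod_primeFactors_sub_one_le_totient {n : ℕ} (hn : n ≠ 0) :
    ∏ p ∈ n.primeFactors, (p - 1) ≤ φ n := by
  refine Nat.le_of_mul_le_mul_left ?_ (Nat.pos_of_ne_zero hn)
  rw [← Nat.totient_mul_prod_primeFactors, mul_comm n]
  exact Nat.mul_le_mul_left _ (Nat.le_of_dvd (Nat.pos_of_ne_zero hn) (Nat.prod_primeFactors_dvd n))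

theorem Finset.sum_sub_one_le_two_mul_prod_sub_one {s : Finset ℕ} (hs : ∀ p ∈ s, 2 ≤ p) :
    ∑ p ∈ s, (p - 1) ≤ 2 * ∏ p ∈ s, (p - 1) := by
  induction s using Finset.induction_on_max with
  | empty => simp
  | insert q s hlt ih =>
    have hqs : q ∉ s := fun h => lt_irrefl q (hlt q h)
    rw [sum_insert hqs, prod_insert hqs]
    have ih := ih fun p hp => hs p (mem_insert_of_mem hp)
    rcases s.eq_empty_or_nonempty with rfl | ⟨p, hp⟩
    · have := hs q (mem_insert_self q ∅)
      simp only [sum_empty, prod_empty]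
      omega
    have hq : 2 ≤ q - 1 := by
      have := (hs p (mem_insert_of_mem hp)).trans_lt (hlt p hp)
      omega
    have hP : 1 ≤ ∏ p ∈ s, (p - 1) :=
      one_le_prod' fun p hp => by have := hs p (mem_insert_of_mem hp); omega
    generalize q - 1 = a at hq ⊢
    nlinarith

theorem Nat.sum_primeFactors_sub_one_le_two_mul_totient {n : ℕ} (hn : n ≠ 0) :
    ∑ p ∈ n.primeFactors, (p - 1) ≤ 2 * φ n :=
  (sum_sub_one_le_two_mul_prod_sub_one fun _ hp => (Nat.prime_of_mem_primeFactors hp).two_le).trans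
    (Nat.mul_le_mul_left 2 (Nat.prod_primeFactors_sub_one_le_totient hn))

theorem Finset.card_mul_card_sub_one_le_two_mul_sum (s : Finset ℕ) :
    #s * (#s - 1) ≤ 2 * ∑ i ∈ s, i := by
  induction s using Finset.induction_on_max with
  | empty => simp
  | insert a s hlt ih =>
    have ha : a ∉ s := fun h => lt_irrefl a (hlt a h)
    have hcard : #s ≤ a := by
      simpa using card_le_card (fun x hx => mem_range.2 (hlt x hx) : s ⊆ range a)
    rw [card_insert_of_notMem ha, sum_insert ha, Nat.add_sub_cancel]
    cases h : #s with
    | zero => simp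
    | succ r =>
      rw [h] at ih hcard
      simp only [Nat.add_sub_cancel] at ih
      nlinarith

theorem Nat.le_pow_card_primeFactors {m n : ℕ} (hm : m ≠ 0)
    (h : ∀ p ∈ m.primeFactors, p ^ m.factorization p ≤ n) : m ≤ n ^ #m.primeFactors := by
  conv_lhs => rw [← Nat.prod_factorization_pow_eq_self hm, Finsupp.prod, Nat.support_factorization]
  exact prod_le_pow_card _ _ _ h

variable {E : Finset ℕ} {D m : ℕ}

theorem ordProj_le_two_mul_of_cover (hE : ∀ e ∈ E, e ≠ 0) (hED : ∑ e ∈ E, φ e ≤ D)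
    (hcov : ∀ p ∈ m.primeFactors, ∃ e ∈ E, p ^ m.factorization p ∣ e)
    {p : ℕ} (hp : p ∈ m.primeFactors) : p ^ m.factorization p ≤ 2 * D := by
  obtain ⟨e, he, hdvd⟩ := hcov p hp
  calc p ^ m.factorization p ≤ 2 * φ (p ^ m.factorization p) :=
        Nat.pow_le_two_mul_totient (Nat.prime_of_mem_primeFactors hp) _
    _ ≤ 2 * φ e := Nat.mul_le_mul_left 2 <| Nat.le_of_dvd
        (Nat.totient_pos.2 (Nat.pos_of_ne_zero (hE e he))) (Nat.totient_dvd_of_dvd hdvd)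
    _ ≤ 2 * D := Nat.mul_le_mul_left 2 ((single_le_sum (fun _ _ => Nat.zero_le _) he).trans hED)

theorem sum_primeFactors_sub_one_le_of_cover (hE : ∀ e ∈ E, e ≠ 0) (hED : ∑ e ∈ E, φ e ≤ D)
    (hcov : ∀ p ∈ m.primeFactors, ∃ e ∈ E, p ∣ e) : ∑ p ∈ m.primeFactors, (p - 1) ≤ 2 * D := by
  choose! ε hεE hεdvd using hcov
  calc ∑ p ∈ m.primeFactors, (p - 1)
      = ∑ e ∈ E, ∑ p ∈ m.primeFactors with ε p = e, (p - 1) :=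
        (sum_fiberwise_of_maps_to hεE _).symm
    _ ≤ ∑ e ∈ E, ∑ p ∈ e.primeFactors, (p - 1) := sum_le_sum fun e he => by
        refine sum_le_sum_of_subset fun p hp => ?_
        obtain ⟨hpm, rfl⟩ := mem_filter.1 hp
        exact Nat.mem_primeFactors.2 ⟨Nat.prime_of_mem_primeFactors hpm, hεdvd p hpm, hE _ he⟩
    _ ≤ ∑ e ∈ E, 2 * φ e :=
        sum_le_sum fun e he => Nat.sum_primeFactors_sub_one_le_two_mul_totient (hE e he)
    _ ≤ 2 * D := by rw [← mul_sum]; omega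

theorem card_primeFactors_mul_le_of_cover (hE : ∀ e ∈ E, e ≠ 0) (hED : ∑ e ∈ E, φ e ≤ D)
    (hcov : ∀ p ∈ m.primeFactors, ∃ e ∈ E, p ∣ e) :
    #m.primeFactors * (#m.primeFactors - 1) ≤ 4 * D := by
  have hinj : Set.InjOn (· - 1) (m.primeFactors : Set ℕ) := fun p hp q hq hpq => by
    have := (Nat.prime_of_mem_primeFactors hp).two_le
    have := (Nat.prime_of_mem_primeFactors hq).two_le
    simp only at hpq
    omega
  have h := card_mul_card_sub_one_le_two_mul_sum (m.primeFactors.image (· - 1))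
  rw [card_image_of_injOn hinj, sum_image hinj] at h
  have := sum_primeFactors_sub_one_le_of_cover hE hED hcov
  omega

end NumberTheory

section Tiling

def IsTiling_s12 (A : Finset ℕ) (B : Set ℤ) : Prop :=
  ∀ n : ℤ, ∃! p : ℕ × ℤ, p.1 ∈ A ∧ p.2 ∈ B ∧ (p.1 : ℤ) + p.2 = n

variable {A : Finset ℕ} {B : Set ℤ} {m : ℕ}

theorem IsTiling_s12.existsUnique_sub_mem (hT : IsTiling_s12 A B) (n : ℤ) :
    ∃! a, a ∈ A ∧ n - a ∈ B := by
  obtain ⟨⟨a, b⟩, ⟨ha, hb, rfl⟩, huniq⟩ := hT n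
  refine ⟨a, ⟨ha, by simpa using hb⟩, fun a' ⟨ha', hb'⟩ => ?_⟩
  exact congr_arg Prod.fst (huniq (a', a + b - a') ⟨ha', hb', by ring⟩)

theorem IsTiling_s12.nonempty (hT : IsTiling_s12 A B) : A.Nonempty :=
  let ⟨a, ⟨ha, _⟩, _⟩ := hT.existsUnique_sub_mem 0
  ⟨a, ha⟩

theorem intCast_mem_image_intCast_iff (hB : ∀ n : ℤ, n ∈ B ↔ n + m ∈ B) (n : ℤ) :
    (n : ZMod m) ∈ ((↑) '' B : Set (ZMod m)) ↔ n ∈ B := by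
  refine ⟨?_, fun h => ⟨n, h, rfl⟩⟩
  rintro ⟨n', hn', heq⟩
  obtain ⟨k, hk⟩ := (ZMod.intCast_eq_intCast_iff_dvd_sub n' n m).1 heq
  have hper : Function.Periodic (· ∈ B) (m : ℤ) := fun n => propext (hB n).symm
  rw [show n = n' + k * m by linarith]
  exact (hper.int_mul k n').mpr hn'

theorem IsTiling_s12.sum_indicator_sub (hT : IsTiling_s12 A B) (hB : ∀ n : ℤ, n ∈ B ↔ n + m ∈ B)
    (x : ZMod m) :
    ∑ a ∈ A, ((↑) '' B : Set (ZMod m)).indicator (1 : ZMod m → ℚ) (x - a) = 1 := by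
  classical
  obtain ⟨n, rfl⟩ := ZMod.intCast_surjective x
  obtain ⟨a₀, ⟨ha₀, hb₀⟩, huniq⟩ := hT.existsUnique_sub_mem n
  have hterm : ∀ a : ℕ, ((↑) '' B : Set (ZMod m)).indicator (1 : ZMod m → ℚ) (n - a) =
      if n - a ∈ B then 1 else 0 := fun a => by
    rw [← intCast_mem_image_intCast_iff hB, Set.indicator_apply]
    push_cast
    rfl
  simp only [hterm]
  rw [sum_eq_single a₀ (fun a ha hne => if_neg fun hb => hne (huniq a ⟨ha, hb⟩))
    (fun h => absurd ha₀ h), if_pos hb₀]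

theorem mem_iff_add_mem_of_periodic_indicator (hB : ∀ n : ℤ, n ∈ B ↔ n + m ∈ B) {k : ℤ}
    (h : Function.Periodic (((↑) '' B : Set (ZMod m)).indicator (1 : ZMod m → ℚ)) (k : ZMod m))
    (n : ℤ) : n ∈ B ↔ n + k ∈ B := by
  rw [← intCast_mem_image_intCast_iff hB, ← intCast_mem_image_intCast_iff hB,
    ← Set.indicator_eq_one_iff_mem ℚ, ← Set.indicator_eq_one_iff_mem ℚ, Int.cast_add, h]

theorem IsTiling_s12.exists_cyclotomic_dvd (hT : IsTiling_s12 A B)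
    (hM : IsLeast {t : ℤ | 0 < t ∧ ∀ n, n ∈ B ↔ n + t ∈ B} m) {k : ℕ} (hk : 0 < k) (hkm : k < m) :
    ∃ e ∈ m.divisors, ¬ e ∣ k ∧ cyclotomic e ℚ ∣ ∑ a ∈ A, X ^ a := by
  have : NeZero m := ⟨by omega⟩
  by_contra! hA
  have hper := periodic_of_not_cyclotomic_dvd (hT.sum_indicator_sub hM.1.2) hA
  have := hM.2 ⟨by exact_mod_cast hk, mem_iff_add_mem_of_periodic_indicator hM.1.2 (k := k)
    (by exact_mod_cast hper)⟩
  omega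

theorem IsTiling_s12.exists_cyclotomic_dvd_ordProj_dvd (hT : IsTiling_s12 A B)
    (hM : IsLeast {t : ℤ | 0 < t ∧ ∀ n, n ∈ B ↔ n + t ∈ B} m) {p : ℕ} (hp : p ∈ m.primeFactors) :
    ∃ e ∈ m.divisors, cyclotomic e ℚ ∣ ∑ a ∈ A, X ^ a ∧ p ^ m.factorization p ∣ e := by
  have hpp := Nat.prime_of_mem_primeFactors hp
  have hpm := Nat.dvd_of_mem_primeFactors hp
  obtain ⟨e, he, hek, hdvd⟩ := hT.exists_cyclotomic_dvd hM
    (Nat.div_pos (Nat.le_of_dvd (by exact_mod_cast hM.1.1) hpm) hpp.pos)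
    (Nat.div_lt_self (by exact_mod_cast hM.1.1) hpp.one_lt)
  exact ⟨e, he, hdvd, Nat.ordProj_dvd_of_not_dvd_div hpp (Nat.dvd_of_mem_divisors he) hek⟩

theorem IsTiling_s12.period_bound {D : ℕ} (hT : IsTiling_s12 A B) (hA : A ⊆ range (D + 1))
    (hM : IsLeast {t : ℤ | 0 < t ∧ ∀ n, n ∈ B ↔ n + t ∈ B} m) :
    #m.primeFactors * (#m.primeFactors - 1) ≤ 4 * D ∧ m ≤ (2 * D) ^ #m.primeFactors := by
  classical
  set E := m.divisors.filter (cyclotomic · ℚ ∣ ∑ a ∈ A, X ^ a)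
  have hm : m ≠ 0 := by have := hM.1.1; omega
  have hE : ∀ e ∈ E, e ≠ 0 := fun e he => (Nat.pos_of_mem_divisors (mem_filter.1 he).1).ne'
  have hED : ∑ e ∈ E, φ e ≤ D :=
    (sum_totient_le_natDegree (sum_X_pow_ne_zero hT.nonempty) fun e he =>
      (mem_filter.1 he).2).trans (natDegree_sum_X_pow_le hA)
  have hcov : ∀ p ∈ m.primeFactors, ∃ e ∈ E, p ^ m.factorization p ∣ e := fun p hp =>
    let ⟨e, he, hdvd, hpe⟩ := hT.exists_cyclotomic_dvd_ordProj_dvd hM hp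
    ⟨e, mem_filter.2 ⟨he, hdvd⟩, hpe⟩
  refine ⟨card_primeFactors_mul_le_of_cover hE hED fun p hp => ?_,
    Nat.le_pow_card_primeFactors hm fun p hp => ordProj_le_two_mul_of_cover hE hED hcov hp⟩
  obtain ⟨e, he, hpe⟩ := hcov p hp
  have hpos := (Nat.prime_of_mem_primeFactors hp).factorization_pos_of_dvd hm
    (Nat.dvd_of_mem_primeFactors hp)
  exact ⟨e, he, (dvd_pow_self p hpos.ne').trans hpe⟩

end Tiling

open Real

theorem natCast_le_one_add_two_mul_sqrt {R D : ℕ} (h : R * (R - 1) ≤ 4 * D) :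
    (R : ℝ) ≤ 1 + 2 * √D := by
  rcases Nat.eq_zero_or_pos R with rfl | hR
  · simp only [Nat.cast_zero]
    positivity
  have h' : (R : ℝ) * (R - 1) ≤ 4 * D := by
    have := (Nat.cast_le (α := ℝ)).2 h
    push_cast [Nat.cast_sub hR] at this
    exact this
  nlinarith [sq_sqrt (Nat.cast_nonneg D : (0 : ℝ) ≤ D), sqrt_nonneg (D : ℝ)]

theorem two_mul_pow_le_exp {R D : ℕ} (hD : 2 ≤ D) (h : R * (R - 1) ≤ 4 * D) :
    ((2 * D : ℕ) : ℝ) ^ R ≤ exp (6 * √D * log D) := by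
  have hD' : (2 : ℝ) ≤ D := by exact_mod_cast hD
  have hsqrt : 1 ≤ √(D : ℝ) := one_le_sqrt.2 (by linarith)
  have hlog : log (2 * D) ≤ 2 * log D := by
    rw [log_mul two_ne_zero (by positivity)]
    linarith [log_le_log two_pos hD']
  have hlog0 : 0 ≤ log (2 * D) := log_nonneg (by linarith)
  rw [← exp_log (by positivity : (0 : ℝ) < (2 * D : ℕ)), ← exp_nat_mul, exp_le_exp]
  push_cast
  calc R * log (2 * D) ≤ (1 + 2 * √D) * (2 * log D) :=
        mul_le_mul (natCast_le_one_add_two_mul_sqrt h) hlog hlog0 (by positivity)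
    _ ≤ 6 * √D * log D := by nlinarith [log_nonneg (by linarith : (1 : ℝ) ≤ D)]

theorem one_le_log_log {x : ℝ} (hx : 16 ≤ x) : 1 ≤ log (log x) := by
  have h16 : exp 1 ≤ log 16 := by
    rw [show (16 : ℝ) = 2 ^ 4 by norm_num, log_pow]
    push_cast
    linarith [exp_one_lt_d9, log_two_gt_d9]
  rw [← log_exp 1]
  exact log_le_log (exp_pos 1) (h16.trans (log_le_log (by norm_num) hx))

-- `4 * log 16 = √16 * log 16`: below `16` use monotonicity, above it `log (log x) ≥ 1`.
theorem sqrt_mul_log_le {x : ℝ} (hx : 1 ≤ x) :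
    √x * log x ≤ 4 * log 16 + √x * log x * √(log (log x)) := by
  have hlog : 0 ≤ log x := log_nonneg hx
  rcases le_total x 16 with hx16 | hx16
  · have : √x * log x ≤ √16 * log 16 :=
      mul_le_mul (sqrt_le_sqrt hx16) (log_le_log (by linarith) hx16) hlog (sqrt_nonneg _)
    rw [show √(16 : ℝ) = 4 by rw [show (16 : ℝ) = 4 ^ 2 by norm_num, sqrt_sq (by norm_num)]] at this
    have := mul_nonneg (mul_nonneg (sqrt_nonneg x) hlog) (sqrt_nonneg (log (log x)))
    linarith
  · have h1 : 1 ≤ √(log (log x)) := one_le_sqrt.2 (one_le_log_log hx16)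
    have := log_nonneg (by norm_num : (1 : ℝ) ≤ 16)
    nlinarith [mul_nonneg (sqrt_nonneg x) hlog]

/-- upper bound: if `A ⊆ {0,…,D}` tiles `ℤ` with complement `B` of
least period `M`, then `M ≤ C·exp(c·√D·log D·√(log log D))`. -/
theorem stmt_12 : ∃ C c : ℝ, 0 < C ∧ 0 < c ∧
    ∀ D : ℕ, 3 ≤ D → ∀ A : Finset ℕ, A ⊆ Finset.range (D + 1) →
    ∀ B : Set ℤ,
      (∀ n : ℤ, ∃! p : ℕ × ℤ, p.1 ∈ A ∧ p.2 ∈ B ∧ (p.1 : ℤ) + p.2 = n) →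
    ∀ M : ℤ, IsLeast {t : ℤ | 0 < t ∧ ∀ n : ℤ, n ∈ B ↔ n + t ∈ B} M →
      (M : ℝ) ≤ C * Real.exp (c * Real.sqrt D * Real.log D *
        Real.sqrt (Real.log (Real.log D))) := by
  refine ⟨16 ^ 24, 6, by positivity, by norm_num, ?_⟩
  intro D hD A hA B hT M hM
  lift M to ℕ using hM.1.1.le
  obtain ⟨hR, hMR⟩ := IsTiling_s12.period_bound hT hA hM
  have hD1 : (1 : ℝ) ≤ D := by exact_mod_cast (by omega : 1 ≤ D)
  calc ((M : ℤ) : ℝ) ≤ ((2 * D : ℕ) : ℝ) ^ #M.primeFactors := by exact_mod_cast hMR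
    _ ≤ exp (6 * √D * log D) := two_mul_pow_le_exp (by omega) hR
    _ ≤ exp (24 * log 16 + 6 * √D * log D * √(log (log D))) := by
        rw [exp_le_exp]
        nlinarith [sqrt_mul_log_le hD1]
    _ = 16 ^ 24 * exp (6 * √D * log D * √(log (log D))) := by
        rw [exp_add, show (24 : ℝ) = (24 : ℕ) by norm_num, exp_nat_mul, exp_log (by norm_num)]
end

section
/- Let A ⊆ {0,...,D}, B ⊆ {0,...,M-1}, with A ⊕ B = ℤ_M a tiling. Let t be the product of all integers s > 1 dividing M such that Φ_s divides A(x). If t < M, then t is a period of B mod M, i.e., (B + t) mod M = B. -/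
open Polynomial
open scoped Classical

/-- `X^M - 1` divides `X^n - X^(n % M)` over `ℚ`. -/
lemma aux_dvd_mod (M n : ℕ) : (X ^ M - 1 : ℚ[X]) ∣ X ^ n - X ^ (n % M) := by
  have h : (X : ℚ[X]) ^ n - X ^ (n % M) = ((X ^ M) ^ (n / M) - 1) * X ^ (n % M) := by
    rw [sub_mul, one_mul, ← pow_mul, ← pow_add, Nat.div_add_mod]
  rw [h]
  refine Dvd.dvd.mul_right ?_ _
  have := sub_dvd_pow_sub_pow ((X : ℚ[X]) ^ M) 1 (n / M)
  rwa [one_pow] at this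

/-- Two finsets with equal "indicator polynomials" are equal. -/
lemma aux_set_eq (S T : Finset ℕ) (h : ∑ c ∈ S, (X : ℚ[X]) ^ c = ∑ c ∈ T, X ^ c) : S = T := by
  ext k
  have h2 := congrArg (fun p : ℚ[X] => p.coeff k) h
  simp only [finset_sum_coeff, coeff_X_pow] at h2
  rw [Finset.sum_ite_eq S k (fun _ => (1 : ℚ)), Finset.sum_ite_eq T k (fun _ => (1 : ℚ))] at h2
  by_cases hS : k ∈ S <;> by_cases hT : k ∈ T <;> simp_all

/-- in a tiling `A ⊕ B = ℤ_M`, the product `t` of all `s ∣ M`, `s > 1`,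
with `Φ_s ∣ A(x)` is a period of `B` mod `M`, provided `t < M`. -/
theorem stmt_13 (M D : ℕ) (hM : 0 < M) (A B : Finset ℕ)
    (hA : A ⊆ Finset.range (D + 1)) (hB : B ⊆ Finset.range M)
    (htile : ∀ x : ZMod M, ∃! p : ℕ × ℕ,
      p.1 ∈ A ∧ p.2 ∈ B ∧ ((p.1 : ZMod M) + (p.2 : ZMod M) = x))
    (t : ℕ)
    (ht : t = ∏ s ∈ M.divisors.filter
      (fun s => 1 < s ∧ Polynomial.cyclotomic s ℤ ∣ ∑ a ∈ A, (X : ℤ[X]) ^ a), s)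
    (htM : t < M) :
    ∀ x : ZMod M, x ∈ B.image (Nat.cast : ℕ → ZMod M) ↔
      x + (t : ZMod M) ∈ B.image (Nat.cast : ℕ → ZMod M) := by
  haveI : NeZero M := ⟨hM.ne'⟩
  set PA : ℚ[X] := ∑ a ∈ A, X ^ a with hPA
  set PB : ℚ[X] := ∑ b ∈ B, X ^ b with hPB
  -- Step B : the tiling identity `A(x) B(x) ≡ 1 + x + ⋯ + x^(M-1) (mod x^M - 1)`
  have hprod : PA * PB = ∑ p ∈ A ×ˢ B, (X : ℚ[X]) ^ (p.1 + p.2) := by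
    rw [hPA, hPB, Finset.sum_mul_sum]
    simp [Finset.sum_product, pow_add]
  have hbij : ∑ p ∈ A ×ˢ B, (X : ℚ[X]) ^ ((p.1 + p.2) % M)
      = ∑ k ∈ Finset.range M, X ^ k := by
    apply Finset.sum_bij (fun p _ => (p.1 + p.2) % M)
    · intro p _; exact Finset.mem_range.mpr (Nat.mod_lt _ hM)
    · intro p hp q hq hpq
      have hp' := Finset.mem_product.mp hp
      have hq' := Finset.mem_product.mp hq
      have hc : ((p.1 : ZMod M) + p.2) = ((q.1 : ZMod M) + q.2) := by
        have := congrArg (Nat.cast : ℕ → ZMod M) hpq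
        rwa [ZMod.natCast_mod, ZMod.natCast_mod, Nat.cast_add, Nat.cast_add] at this
      obtain ⟨r, _, hru⟩ := htile ((p.1 : ZMod M) + p.2)
      have h1 : p = r := hru p ⟨hp'.1, hp'.2, rfl⟩
      have h2 : q = r := hru q ⟨hq'.1, hq'.2, hc.symm⟩
      rw [h1, h2]
    · intro k hk
      obtain ⟨p, ⟨hp1, hp2, hps⟩, -⟩ := htile (k : ZMod M)
      refine ⟨p, Finset.mem_product.mpr ⟨hp1, hp2⟩, ?_⟩
      have hcast : ((p.1 + p.2 : ℕ) : ZMod M) = (k : ZMod M) := by push_cast; exact hps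
      have hval := congrArg ZMod.val hcast
      rwa [ZMod.val_natCast, ZMod.val_natCast,
        Nat.mod_eq_of_lt (Finset.mem_range.mp hk)] at hval
    · intro p _; rfl
  have hAB : (X ^ M - 1 : ℚ[X]) ∣ PA * PB - ∑ k ∈ Finset.range M, X ^ k := by
    rw [hprod, ← hbij, ← Finset.sum_sub_distrib]
    exact Finset.dvd_sum fun p _ => aux_dvd_mod M _
  -- each cyclotomic `Φ_d`, `d ∣ M`, divides `(X^t - 1) * B(x)`
  have hkey : ∀ d ∈ M.divisors, cyclotomic d ℚ ∣ (X ^ t - 1) * PB := by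
    intro d hd
    have hd0 : 0 < d := Nat.pos_of_mem_divisors hd
    by_cases hcase : d = 1 ∨ (1 < d ∧ cyclotomic d ℤ ∣ ∑ a ∈ A, (X : ℤ[X]) ^ a)
    · have hdt : d ∣ t := by
        rcases hcase with h1 | h2
        · simp [h1]
        · rw [ht]; exact Finset.dvd_prod_of_mem _ (Finset.mem_filter.mpr ⟨hd, h2⟩)
      refine Dvd.dvd.mul_right ?_ PB
      refine (cyclotomic.dvd_X_pow_sub_one d ℚ).trans ?_
      obtain ⟨c, hc⟩ := hdt
      have h3 := sub_dvd_pow_sub_pow ((X : ℚ[X]) ^ d) 1 c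
      rwa [one_pow, ← pow_mul, ← hc] at h3
    · push_neg at hcase
      obtain ⟨hd1, hdvd⟩ := hcase
      have hd1' : 1 < d := lt_of_le_of_ne hd0 (Ne.symm hd1)
      have hgeom : cyclotomic d ℚ ∣ ∑ k ∈ Finset.range M, (X : ℚ[X]) ^ k := by
        rw [← prod_cyclotomic_eq_geom_sum hM ℚ]
        exact Finset.dvd_prod_of_mem _ (Finset.mem_erase.mpr ⟨hd1'.ne', hd⟩)
      have hdM : cyclotomic d ℚ ∣ (X ^ M - 1 : ℚ[X]) := by
        rw [← prod_cyclotomic_eq_X_pow_sub_one hM ℚ]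
        exact Finset.dvd_prod_of_mem _ hd
      have hPAB : cyclotomic d ℚ ∣ PA * PB := by
        have h4 := dvd_add (hdM.trans hAB) hgeom
        simpa using h4
      have hprime : Prime (cyclotomic d ℚ) := (cyclotomic.irreducible_rat hd0).prime
      rcases hprime.dvd_mul.mp hPAB with hA' | hB'
      · exfalso
        apply hdvd hd1'
        have hmap : ((∑ a ∈ A, (X : ℤ[X]) ^ a).map (Int.castRingHom ℚ)) = PA := by
          rw [hPA]; simp [Polynomial.map_sum]
        rw [← map_dvd_map (Int.castRingHom ℚ) Int.cast_injective
          (cyclotomic.monic d ℤ)]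
        rwa [map_cyclotomic, hmap]
      · exact hB'.mul_left _
  have hdvd2 : (X ^ M - 1 : ℚ[X]) ∣ (X ^ t - 1) * PB := by
    rw [← prod_cyclotomic_eq_X_pow_sub_one hM ℚ]
    exact Finset.prod_dvd_of_coprime
      (fun a _ b _ hab => cyclotomic.isCoprime_rat hab) hkey
  -- Step C : deduce the polynomial identity `∑ X^((b+t)%M) = ∑ X^b`
  have hXt : (X : ℚ[X]) ^ t * PB = ∑ b ∈ B, X ^ (b + t) := by
    rw [hPB, Finset.mul_sum]
    exact Finset.sum_congr rfl fun b _ => by rw [← pow_add, add_comm]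
  have hBt : (X ^ t - 1 : ℚ[X]) * PB = (∑ b ∈ B, X ^ (b + t)) - PB := by
    rw [sub_mul, one_mul, hXt]
  have hred : (X ^ M - 1 : ℚ[X]) ∣ (∑ b ∈ B, X ^ ((b + t) % M)) - PB := by
    have h1 : (X ^ M - 1 : ℚ[X]) ∣
        (∑ b ∈ B, X ^ (b + t)) - ∑ b ∈ B, X ^ ((b + t) % M) := by
      rw [← Finset.sum_sub_distrib]
      exact Finset.dvd_sum fun b _ => aux_dvd_mod M _
    have h2 : (X ^ M - 1 : ℚ[X]) ∣ (∑ b ∈ B, X ^ (b + t)) - PB := hBt ▸ hdvd2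
    have h3 := dvd_sub h2 h1
    have h4 : (∑ b ∈ B, (X : ℚ[X]) ^ (b + t)) - PB -
        ((∑ b ∈ B, X ^ (b + t)) - ∑ b ∈ B, X ^ ((b + t) % M))
        = (∑ b ∈ B, X ^ ((b + t) % M)) - PB := by ring
    rwa [h4] at h3
  have heq : (∑ b ∈ B, (X : ℚ[X]) ^ ((b + t) % M)) = PB := by
    by_contra hne
    have hne' : (∑ b ∈ B, (X : ℚ[X]) ^ ((b + t) % M)) - PB ≠ 0 := sub_ne_zero.mpr hne
    have hdeg := Polynomial.natDegree_le_of_dvd hred hne'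
    have hdegM : (X ^ M - 1 : ℚ[X]).natDegree = M := by
      rw [← Polynomial.C_1, natDegree_X_pow_sub_C]
    rw [hdegM] at hdeg
    have hle : ((∑ b ∈ B, (X : ℚ[X]) ^ ((b + t) % M)) - PB).natDegree ≤ M - 1 := by
      refine le_trans (natDegree_sub_le _ _) (max_le ?_ ?_)
      · refine natDegree_sum_le_of_forall_le _ _ fun b _ => ?_
        rw [natDegree_X_pow]
        exact Nat.le_pred_of_lt (Nat.mod_lt _ hM)
      · rw [hPB]
        refine natDegree_sum_le_of_forall_le _ _ fun b hb => ?_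
        rw [natDegree_X_pow]
        exact Nat.le_pred_of_lt (Finset.mem_range.mp (hB hb))
    omega
  -- turn the polynomial identity into a finset identity
  have hinj : ∀ b ∈ B, ∀ b' ∈ B, (b + t) % M = (b' + t) % M → b = b' := by
    intro b hb b' hb' h
    have hbM := Finset.mem_range.mp (hB hb)
    have hb'M := Finset.mem_range.mp (hB hb')
    have hmod : b % M = b' % M := Nat.ModEq.add_right_cancel' t h
    rwa [Nat.mod_eq_of_lt hbM, Nat.mod_eq_of_lt hb'M] at hmod
  have himg : B.image (fun b => (b + t) % M) = B := by
    apply aux_set_eq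
    rw [Finset.sum_image hinj, heq, hPB]
  -- conclude
  intro x
  have hcast : ∀ b : ℕ, (((b + t) % M : ℕ) : ZMod M) = (b : ZMod M) + (t : ZMod M) := by
    intro b; rw [ZMod.natCast_mod]; push_cast; ring
  constructor
  · intro hx
    obtain ⟨b, hb, rfl⟩ := Finset.mem_image.mp hx
    have hgb : (b + t) % M ∈ B := himg ▸ Finset.mem_image_of_mem _ hb
    exact Finset.mem_image.mpr ⟨(b + t) % M, hgb, hcast b⟩
  · intro hx
    obtain ⟨c, hc, hxc⟩ := Finset.mem_image.mp hx
    rw [← himg] at hc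
    obtain ⟨b, hb, rfl⟩ := Finset.mem_image.mp hc
    rw [hcast b] at hxc
    have hxb : (b : ZMod M) = x := add_right_cancel hxc
    exact hxb ▸ Finset.mem_image_of_mem _ hb
end

section
/- For every sufficiently large D there exist a set X ⊆ {0,...,D} and a set Y ⊆ ℤ such that X ⊕ Y = ℤ is a tiling and the least period of Y is at least c·D² for an absolute constant c > 0. Moreover X can be taken of cardinality 15. -/
namespace Stmt14Aux

/-- The tiling complement: `15ℤ` with the elements of `15·(2u)·ℤ` moved by `+10u` and
the elements of `15·(2v)·ℤ + 15v` moved by `+6v`, where `u = 30T+1`, `v = 30T+3`.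
Here `900T+30 = 30u`, `900T+90 = 30v`, `300T+10 = 10u`, `450T+45 = 15v`, `630T+63 = 21v`. -/
def Yset (T : ℤ) : Set ℤ :=
  {n | (15 ∣ n ∧ ¬ ((900*T+30) ∣ n) ∧ ¬ ((900*T+90) ∣ (n - (450*T+45)))) ∨
       ((900*T+30) ∣ (n - (300*T+10))) ∨
       ((900*T+90) ∣ (n - (630*T+63)))}

lemma parity_excl (T y0 : ℤ) (h1 : (900*T+30) ∣ y0)
    (h2 : (900*T+90) ∣ (y0 - (450*T+45))) : False := by
  have e1 : (2:ℤ) ∣ y0 := dvd_trans ⟨450*T+15, by ring⟩ h1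
  have e2 : (2:ℤ) ∣ (y0 - (450*T+45)) := dvd_trans ⟨450*T+45, by ring⟩ h2
  omega

lemma ref (T n : ℤ) : ∃ i0 j0 : ℤ, 0 ≤ i0 ∧ i0 < 3 ∧ 0 ≤ j0 ∧ j0 < 5 ∧
    (15:ℤ) ∣ n - ((300*T+10)*i0 + (180*T+18)*j0) := by
  refine ⟨n % 3, (2*(n - 10*(n % 3))) % 5, by omega, by omega, by omega, by omega, ?_⟩
  set i0 := n % 3 with hi0
  set j0 := (2*(n - 10*i0)) % 5 with hj0
  have h3 : (3:ℤ) ∣ n - i0 := by omega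
  have h5 : (5:ℤ) ∣ 2*(n - 10*i0) - j0 := by omega
  obtain ⟨k, hk⟩ := h3
  obtain ⟨m, hm⟩ := h5
  have hd3 : (3:ℤ) ∣ n - ((300*T+10)*i0 + (180*T+18)*j0) :=
    ⟨k - (100*T+3)*i0 - (60*T+6)*j0, by linear_combination hk⟩
  have hd5 : (5:ℤ) ∣ n - ((300*T+10)*i0 + (180*T+18)*j0) :=
    ⟨3*m - (n - 10*i0) - ((60*T)*i0 + (36*T+3)*j0), by linear_combination 3*hm⟩
  omega

lemma sol_classify (T : ℤ) (n i0 j0 : ℤ)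
    (hi0l : 0 ≤ i0) (hi0u : i0 < 3) (hj0l : 0 ≤ j0) (hj0u : j0 < 5)
    (h15 : (15:ℤ) ∣ n - ((300*T+10)*i0 + (180*T+18)*j0))
    (i j y : ℤ) (hil : 0 ≤ i) (hiu : i < 3) (hjl : 0 ≤ j) (hju : j < 5)
    (hy : y ∈ Yset T) (hsum : (300*T+10)*i + (180*T+18)*j + y = n) :
    (¬((900*T+30) ∣ (n - ((300*T+10)*i0 + (180*T+18)*j0))) ∧
     ¬((900*T+90) ∣ (n - ((300*T+10)*i0 + (180*T+18)*j0) - (450*T+45))) ∧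
     i = i0 ∧ j = j0) ∨
    (((900*T+30) ∣ (n - ((300*T+10)*i0 + (180*T+18)*j0))) ∧
     i = (if i0 = 0 then 2 else i0 - 1) ∧ j = j0) ∨
    (((900*T+90) ∣ (n - ((300*T+10)*i0 + (180*T+18)*j0) - (450*T+45))) ∧
     i = i0 ∧ j = (if j0 = 0 then 4 else j0 - 1)) := by
  have hrw : n - ((300*T+10)*i0 + (180*T+18)*j0) - y
      = 15*(20*T*(i-i0) + (12*T+1)*(j-j0)) + (10*(i-i0)+3*(j-j0)) := by
    linear_combination -hsum
  rcases hy with ⟨hA15, hAp, hAq⟩ | hC | hB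
  · have h1 : (15:ℤ) ∣ 15*(20*T*(i-i0) + (12*T+1)*(j-j0)) + (10*(i-i0)+3*(j-j0)) := by
      rw [← hrw]; exact dvd_sub h15 hA15
    have hi : i = i0 := by omega
    have hj : j = j0 := by omega
    have hyy : y = n - ((300*T+10)*i0 + (180*T+18)*j0) := by
      linear_combination hsum - (300*T+10)*hi - (180*T+18)*hj
    exact Or.inl ⟨by rw [← hyy]; exact hAp, by rw [← hyy]; exact hAq, hi, hj⟩
  · have h10 : (15:ℤ) ∣ y - 10 :=
      (by omega : (15:ℤ) ∣ y - (300*T+10) → (15:ℤ) ∣ y - 10)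
        (dvd_trans ⟨60*T+2, by ring⟩ hC)
    have h1 : (15:ℤ) ∣ 15*(20*T*(i-i0) + (12*T+1)*(j-j0)) + (10*(i-i0)+3*(j-j0)) + 10 := by
      have hh : 15*(20*T*(i-i0) + (12*T+1)*(j-j0)) + (10*(i-i0)+3*(j-j0)) + 10
          = (n - ((300*T+10)*i0 + (180*T+18)*j0)) - (y - 10) := by linear_combination -hrw
      rw [hh]; exact dvd_sub h15 h10
    have hj : j = j0 := by omega
    have he1 : i - i0 = -1 ∨ i - i0 = 2 := by omega
    refine Or.inr (Or.inl ⟨?_, ?_, hj⟩)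
    · rcases he1 with h | h
      · have hyy : n - ((300*T+10)*i0 + (180*T+18)*j0) = y - (300*T+10) := by
          linear_combination -hsum + (300*T+10)*h + (180*T+18)*hj
        rw [hyy]; exact hC
      · have hyy : n - ((300*T+10)*i0 + (180*T+18)*j0) = (y - (300*T+10)) + (900*T+30) := by
          linear_combination -hsum + (300*T+10)*h + (180*T+18)*hj
        rw [hyy]; exact dvd_add hC ⟨1, by ring⟩
    · split_ifs with h0 <;> omega
  · have h3 : (15:ℤ) ∣ y - 3 :=
      (by omega : (15:ℤ) ∣ y - (630*T+63) → (15:ℤ) ∣ y - 3)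
        (dvd_trans ⟨60*T+6, by ring⟩ hB)
    have h1 : (15:ℤ) ∣ 15*(20*T*(i-i0) + (12*T+1)*(j-j0)) + (10*(i-i0)+3*(j-j0)) + 3 := by
      have hh : 15*(20*T*(i-i0) + (12*T+1)*(j-j0)) + (10*(i-i0)+3*(j-j0)) + 3
          = (n - ((300*T+10)*i0 + (180*T+18)*j0)) - (y - 3) := by linear_combination -hrw
      rw [hh]; exact dvd_sub h15 h3
    have hi : i = i0 := by omega
    have he2 : j - j0 = -1 ∨ j - j0 = 4 := by omega
    refine Or.inr (Or.inr ⟨?_, hi, ?_⟩)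
    · rcases he2 with h | h
      · have hyy : n - ((300*T+10)*i0 + (180*T+18)*j0) - (450*T+45) = y - (630*T+63) := by
          linear_combination -hsum + (300*T+10)*hi + (180*T+18)*h
        rw [hyy]; exact hB
      · have hyy : n - ((300*T+10)*i0 + (180*T+18)*j0) - (450*T+45)
            = (y - (630*T+63)) + (900*T+90) := by
          linear_combination -hsum + (300*T+10)*hi + (180*T+18)*h
        rw [hyy]; exact dvd_add hB ⟨1, by ring⟩
    · split_ifs with h0 <;> omega

lemma exists_sol (T n : ℤ) (i0 j0 : ℤ)
    (hi0l : 0 ≤ i0) (hi0u : i0 < 3) (hj0l : 0 ≤ j0) (hj0u : j0 < 5)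
    (h15 : (15:ℤ) ∣ n - ((300*T+10)*i0 + (180*T+18)*j0)) :
    ∃ i j y : ℤ, 0 ≤ i ∧ i < 3 ∧ 0 ≤ j ∧ j < 5 ∧ y ∈ Yset T ∧
      (300*T+10)*i + (180*T+18)*j + y = n := by
  by_cases hP : (900*T+30) ∣ n - ((300*T+10)*i0 + (180*T+18)*j0)
  · by_cases h0 : i0 = 0
    · refine ⟨2, j0, n - ((300*T+10)*2 + (180*T+18)*j0), by norm_num, by norm_num,
        hj0l, hj0u, Or.inr (Or.inl ?_), by ring⟩
      have hyy : n - ((300*T+10)*2 + (180*T+18)*j0) - (300*T+10)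
          = (n - ((300*T+10)*i0 + (180*T+18)*j0)) - (900*T+30) := by
        rw [h0]; ring
      rw [hyy]; exact dvd_sub hP ⟨1, by ring⟩
    · refine ⟨i0 - 1, j0, n - ((300*T+10)*(i0-1) + (180*T+18)*j0), by omega, by omega,
        hj0l, hj0u, Or.inr (Or.inl ?_), by ring⟩
      have hyy : n - ((300*T+10)*(i0-1) + (180*T+18)*j0) - (300*T+10)
          = n - ((300*T+10)*i0 + (180*T+18)*j0) := by ring
      rw [hyy]; exact hP
  · by_cases hQ : (900*T+90) ∣ n - ((300*T+10)*i0 + (180*T+18)*j0) - (450*T+45)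
    · by_cases h0 : j0 = 0
      · refine ⟨i0, 4, n - ((300*T+10)*i0 + (180*T+18)*4), hi0l, hi0u, by norm_num,
          by norm_num, Or.inr (Or.inr ?_), by ring⟩
        have hyy : n - ((300*T+10)*i0 + (180*T+18)*4) - (630*T+63)
            = (n - ((300*T+10)*i0 + (180*T+18)*j0) - (450*T+45)) - (900*T+90) := by
          rw [h0]; ring
        rw [hyy]; exact dvd_sub hQ ⟨1, by ring⟩
      · refine ⟨i0, j0 - 1, n - ((300*T+10)*i0 + (180*T+18)*(j0-1)), hi0l, hi0u,
          by omega, by omega, Or.inr (Or.inr ?_), by ring⟩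
        have hyy : n - ((300*T+10)*i0 + (180*T+18)*(j0-1)) - (630*T+63)
            = n - ((300*T+10)*i0 + (180*T+18)*j0) - (450*T+45) := by ring
        rw [hyy]; exact hQ
    · exact ⟨i0, j0, n - ((300*T+10)*i0 + (180*T+18)*j0), hi0l, hi0u, hj0l, hj0u,
        Or.inl ⟨h15, hP, hQ⟩, by ring⟩

lemma uniq_sol (T n : ℤ) (i j y : ℤ)
    (hil : 0 ≤ i) (hiu : i < 3) (hjl : 0 ≤ j) (hju : j < 5)
    (hy : y ∈ Yset T) (hsum : (300*T+10)*i + (180*T+18)*j + y = n)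
    (i' j' y' : ℤ)
    (hil' : 0 ≤ i') (hiu' : i' < 3) (hjl' : 0 ≤ j') (hju' : j' < 5)
    (hy' : y' ∈ Yset T) (hsum' : (300*T+10)*i' + (180*T+18)*j' + y' = n) :
    i = i' ∧ j = j' ∧ y = y' := by
  obtain ⟨i0, j0, h1, h2, h3, h4, h15⟩ := ref T n
  have c1 := sol_classify T n i0 j0 h1 h2 h3 h4 h15 i j y hil hiu hjl hju hy hsum
  have c2 := sol_classify T n i0 j0 h1 h2 h3 h4 h15 i' j' y' hil' hiu' hjl' hju' hy' hsum'
  have key : i = i' ∧ j = j' := by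
    rcases c1 with ⟨hp1, hq1, hi1, hj1⟩ | ⟨hp1, hi1, hj1⟩ | ⟨hq1, hi1, hj1⟩ <;>
      rcases c2 with ⟨hp2, hq2, hi2, hj2⟩ | ⟨hp2, hi2, hj2⟩ | ⟨hq2, hi2, hj2⟩
    · exact ⟨hi1.trans hi2.symm, hj1.trans hj2.symm⟩
    · exact absurd hp2 hp1
    · exact absurd hq2 hq1
    · exact absurd hp1 hp2
    · exact ⟨hi1.trans hi2.symm, hj1.trans hj2.symm⟩
    · exact (parity_excl T _ hp1 hq2).elim
    · exact absurd hq1 hq2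
    · exact (parity_excl T _ hp2 hq1).elim
    · exact ⟨hi1.trans hi2.symm, hj1.trans hj2.symm⟩
  obtain ⟨hii, hjj⟩ := key
  refine ⟨hii, hjj, ?_⟩
  linear_combination hsum - hsum' - (300*T+10)*hii - (180*T+18)*hjj

lemma period_lb (T : ℤ) (hT : 1 ≤ T) (T' : ℤ) (hpos : 0 < T')
    (hper : ∀ n : ℤ, n ∈ Yset T ↔ n + T' ∈ Yset T) :
    30*(30*T+1)*(30*T+3) ≤ T' := by
  have hcls : ∀ m : ℤ, m ∈ Yset T →
      (15 ∣ m) ∨ ((900*T+30) ∣ (m - (300*T+10))) ∨ ((900*T+90) ∣ (m - (630*T+63))) := by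
    rintro m (⟨h, -, -⟩ | h | h)
    exacts [Or.inl h, Or.inr (Or.inl h), Or.inr (Or.inr h)]
  have hPdvd15 : ∀ m : ℤ, (900*T+30) ∣ m → (15:ℤ) ∣ m := fun m h => dvd_trans ⟨60*T+2, by ring⟩ h
  have hQdvd15 : ∀ m : ℤ, (900*T+90) ∣ m → (15:ℤ) ∣ m := fun m h => dvd_trans ⟨60*T+6, by ring⟩ h
  have mem15 : (15:ℤ) ∈ Yset T := by
    refine Or.inl ⟨dvd_refl 15, fun h => ?_, fun h => ?_⟩
    · have := Int.le_of_dvd (by norm_num) h; omega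
    · have h2 : (900*T+90) ∣ (450*T+30) := by
        rw [show (450*T+30 : ℤ) = -(15 - (450*T+45)) by ring]; exact dvd_neg.mpr h
      have := Int.le_of_dvd (by omega) h2; omega
  have mem30 : (30:ℤ) ∈ Yset T := by
    refine Or.inl ⟨⟨2, by norm_num⟩, fun h => ?_, fun h => ?_⟩
    · have := Int.le_of_dvd (by norm_num) h; omega
    · have h2 : (900*T+90) ∣ (450*T+15) := by
        rw [show (450*T+15 : ℤ) = -(30 - (450*T+45)) by ring]; exact dvd_neg.mpr h
      have := Int.le_of_dvd (by omega) h2; omega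
  have h15T : (15:ℤ) ∣ T' := by
    have h1 := hcls _ ((hper 15).mp mem15)
    have h2 := hcls _ ((hper 30).mp mem30)
    rcases h1 with h1 | h1 | h1 <;> rcases h2 with h2 | h2 | h2
    · omega
    · have := hPdvd15 _ h2; omega
    · have := hQdvd15 _ h2; omega
    · have := hPdvd15 _ h1; omega
    · have h3 : (900*T+30) ∣ (15:ℤ) := by
        have := dvd_sub h2 h1
        rw [show (30 + T' - (300*T+10)) - (15 + T' - (300*T+10)) = (15:ℤ) by ring] at this
        exact this
      have := Int.le_of_dvd (by norm_num) h3; omega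
    · have := hPdvd15 _ h1; have := hQdvd15 _ h2; omega
    · have := hQdvd15 _ h1; omega
    · have := hQdvd15 _ h1; have := hPdvd15 _ h2; omega
    · have h3 : (900*T+90) ∣ (15:ℤ) := by
        have := dvd_sub h2 h1
        rw [show (30 + T' - (630*T+63)) - (15 + T' - (630*T+63)) = (15:ℤ) by ring] at this
        exact this
      have := Int.le_of_dvd (by norm_num) h3; omega
  have memU : (300*T+10 : ℤ) ∈ Yset T := Or.inr (Or.inl (by simp))
  have hPT : (900*T+30) ∣ T' := by
    have h1 := hcls _ ((hper _).mp memU)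
    rcases h1 with h1 | h1 | h1
    · omega
    · rw [show (300*T+10 + T') - (300*T+10) = T' by ring] at h1; exact h1
    · have := hQdvd15 _ h1; omega
  have memB : (630*T+63 : ℤ) ∈ Yset T := Or.inr (Or.inr (by simp))
  have hQT : (900*T+90) ∣ T' := by
    have h1 := hcls _ ((hper _).mp memB)
    rcases h1 with h1 | h1 | h1
    · omega
    · have := hPdvd15 _ h1; omega
    · rw [show (630*T+63 + T') - (630*T+63) = T' by ring] at h1; exact h1
  obtain ⟨a, ha⟩ := hPT
  obtain ⟨b, hb⟩ := hQT
  have hco : IsCoprime (30*T+3 : ℤ) (30*T+1) := ⟨-(15*T), 1+15*T, by ring⟩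
  have hva : (30*T+3 : ℤ) ∣ (30*T+1) * a := by
    have h30 : (30 : ℤ) * ((30*T+1) * a) = 30 * ((30*T+3) * b) := by
      rw [show (30:ℤ) * ((30*T+1)*a) = (900*T+30)*a by ring,
          show (30:ℤ) * ((30*T+3)*b) = (900*T+90)*b by ring, ← ha, ← hb]
    exact ⟨b, mul_left_cancel₀ (by norm_num : (30:ℤ) ≠ 0) h30⟩
  obtain ⟨c, hc⟩ := hco.dvd_of_dvd_mul_left hva
  exact Int.le_of_dvd hpos ⟨c, by rw [ha, hc]; ring⟩

end Stmt14Aux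

open Stmt14Aux in
/-- lower bound: for all large `D` there is a 15-element tile
`X ⊆ {0,…,D}` tiling `ℤ` with a complement `Y` of least period at least `c·D²`. -/
theorem stmt_14 : ∃ c : ℝ, 0 < c ∧ ∃ D₀ : ℕ, ∀ D : ℕ, D₀ ≤ D →
    ∃ X : Finset ℕ, X ⊆ Finset.range (D + 1) ∧ X.card = 15 ∧
      ∃ Y : Set ℤ,
        (∀ n : ℤ, ∃! p : ℕ × ℤ, p.1 ∈ X ∧ p.2 ∈ Y ∧ (p.1 : ℤ) + p.2 = n) ∧
        ∀ T : ℤ, 0 < T → (∀ n : ℤ, n ∈ Y ↔ n + T ∈ Y) → c * (D : ℝ) ^ 2 ≤ (T : ℝ) := by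
  refine ⟨1/300, by norm_num, 1412, fun D hD => ?_⟩
  set t : ℕ := (D - 92) / 1320 with htdef
  have ht1 : 1 ≤ t := by rw [htdef, Nat.one_le_div_iff (by norm_num)]; omega
  have hub : 1320 * t + 92 ≤ D := by
    have h := Nat.div_mul_le_self (D - 92) 1320
    rw [← htdef] at h; omega
  have hub2 : D ≤ 1320 * t + 1411 := by
    have h1 := Nat.div_add_mod (D - 92) 1320
    have h2 : (D - 92) % 1320 < 1320 := Nat.mod_lt _ (by norm_num)
    rw [← htdef] at h1; omega
  have hT : (1:ℤ) ≤ (t:ℤ) := by exact_mod_cast ht1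
  refine ⟨(Finset.range 3 ×ˢ Finset.range 5).image
      (fun p => (300*t+10)*p.1 + (180*t+18)*p.2), ?_, ?_, Yset (t:ℤ), ?_, ?_⟩
  · -- X ⊆ range (D+1)
    intro x hx
    simp only [Finset.mem_image, Finset.mem_product, Finset.mem_range] at hx
    obtain ⟨⟨i, j⟩, ⟨hi, hj⟩, rfl⟩ := hx
    simp only [Finset.mem_range]
    have h1 : (300*t+10)*i ≤ (300*t+10)*2 := Nat.mul_le_mul_left _ (by omega)
    have h2 : (180*t+18)*j ≤ (180*t+18)*4 := Nat.mul_le_mul_left _ (by omega)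
    omega
  · -- card
    rw [Finset.card_image_of_injOn, Finset.card_product, Finset.card_range, Finset.card_range]
    intro p hp q hq hpq
    simp only [Finset.mem_coe, Finset.mem_product, Finset.mem_range] at hp hq
    have hz : (300*(t:ℤ)+10)*(p.1:ℤ) + (180*(t:ℤ)+18)*(p.2:ℤ)
        = (300*(t:ℤ)+10)*(q.1:ℤ) + (180*(t:ℤ)+18)*(q.2:ℤ) := by exact_mod_cast hpq
    have h0 : 15*(20*(t:ℤ)*((p.1:ℤ)-(q.1:ℤ)) + (12*(t:ℤ)+1)*((p.2:ℤ)-(q.2:ℤ)))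
        + (10*((p.1:ℤ)-(q.1:ℤ)) + 3*((p.2:ℤ)-(q.2:ℤ))) = 0 := by linear_combination hz
    have b1 : (p.1:ℤ) < 3 := by exact_mod_cast hp.1
    have b2 : (p.2:ℤ) < 5 := by exact_mod_cast hp.2
    have b3 : (q.1:ℤ) < 3 := by exact_mod_cast hq.1
    have b4 : (q.2:ℤ) < 5 := by exact_mod_cast hq.2
    have b5 : (0:ℤ) ≤ (p.1:ℤ) := Int.natCast_nonneg _
    have b6 : (0:ℤ) ≤ (p.2:ℤ) := Int.natCast_nonneg _
    have b7 : (0:ℤ) ≤ (q.1:ℤ) := Int.natCast_nonneg _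
    have b8 : (0:ℤ) ≤ (q.2:ℤ) := Int.natCast_nonneg _
    have e1 : (p.1:ℤ) = (q.1:ℤ) ∧ (p.2:ℤ) = (q.2:ℤ) := by omega
    have : p.1 = q.1 ∧ p.2 = q.2 := by exact_mod_cast e1
    exact Prod.ext this.1 this.2
  · -- tiling
    intro n
    obtain ⟨i0, j0, h1, h2, h3, h4, h15⟩ := ref (t:ℤ) n
    obtain ⟨i, j, y, hil, hiu, hjl, hju, hy, hsum⟩ := exists_sol (t:ℤ) n i0 j0 h1 h2 h3 h4 h15
    refine ⟨((300*t+10)*i.toNat + (180*t+18)*j.toNat, y), ⟨?_, hy, ?_⟩, ?_⟩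
    · exact Finset.mem_image.mpr ⟨(i.toNat, j.toNat), by
        simp only [Finset.mem_product, Finset.mem_range]; omega, rfl⟩
    · push_cast [Int.toNat_of_nonneg hil, Int.toNat_of_nonneg hjl]
      linarith [hsum]
    · rintro ⟨x', y'⟩ ⟨hx', hy', hsum'⟩
      simp only [Finset.mem_image, Finset.mem_product, Finset.mem_range] at hx'
      obtain ⟨⟨iN, jN⟩, ⟨hiN, hjN⟩, rfl⟩ := hx'
      have hsum'' : (300*(t:ℤ)+10)*(iN:ℤ) + (180*(t:ℤ)+18)*(jN:ℤ) + y' = n := by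
        push_cast at hsum' ⊢; linarith
      obtain ⟨e1, e2, e3⟩ := uniq_sol (t:ℤ) n (iN:ℤ) (jN:ℤ) y'
        (Int.natCast_nonneg _) (by exact_mod_cast hiN) (Int.natCast_nonneg _)
        (by exact_mod_cast hjN) hy' hsum'' i j y hil hiu hjl hju hy hsum
    -- e1 : (iN:ℤ) = i, e2 : (jN:ℤ) = j, e3 : y' = y
      have hi' : iN = i.toNat := by omega
      have hj' : jN = j.toNat := by omega
      have : (300*t+10)*iN + (180*t+18)*jN = (300*t+10)*i.toNat + (180*t+18)*j.toNat := by
        rw [hi', hj']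
      exact Prod.ext this e3
  · -- period bound
    intro T' hT' hperiod
    have hlb := period_lb (t:ℤ) hT T' hT' hperiod
    have hDle : (D:ℤ) ≤ 1320*(t:ℤ) + 1411 := by exact_mod_cast hub2
    have hD0 : (0:ℤ) ≤ (D:ℤ) := Int.natCast_nonneg D
    have h1 : (D:ℤ) ≤ 2731*(t:ℤ) := by nlinarith
    have hsq : (D:ℤ)^2 ≤ (2731*(t:ℤ))^2 := by nlinarith
    have h2 : ((D:ℤ))^2 ≤ 300*T' := by nlinarith [hlb, hT]
    have h3 : ((D:ℝ))^2 ≤ 300*(T':ℝ) := by exact_mod_cast h2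
    linarith
end

section
/- Let p, q be primes with p, q > 5, and consider the group G = ℤ_{3p} × ℤ_{5q} × ℤ_2. Let A = {(i,j,0) : 0 ≤ i < 3, 0 ≤ j < 5} ⊆ G. Then there exists a set B ⊆ G such that A ⊕ B = G is a tiling and B is not periodic in G (no nonzero t ∈ G satisfies B + t = B). -/
/-- in `G = ℤ_{3p} × ℤ_{5q} × ℤ_2` (`p, q > 5` primes), the `3×5`
rectangle `A` tiles `G` with a non-periodic complement. -/
theorem stmt_15 (p q : ℕ) (hp : p.Prime) (hq : q.Prime) (hp5 : 5 < p) (hq5 : 5 < q)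
    (A : Set (ZMod (3 * p) × ZMod (5 * q) × ZMod 2))
    (hA : A = {g | ∃ i : ℕ, i < 3 ∧ ∃ j : ℕ, j < 5 ∧
      g = ((i : ZMod (3 * p)), (j : ZMod (5 * q)), (0 : ZMod 2))}) :
    ∃ B : Set (ZMod (3 * p) × ZMod (5 * q) × ZMod 2),
      (∀ g : ZMod (3 * p) × ZMod (5 * q) × ZMod 2,
        ∃! ab : (ZMod (3 * p) × ZMod (5 * q) × ZMod 2) ×
                (ZMod (3 * p) × ZMod (5 * q) × ZMod 2),
          ab.1 ∈ A ∧ ab.2 ∈ B ∧ ab.1 + ab.2 = g) ∧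
      ¬ ∃ t : ZMod (3 * p) × ZMod (5 * q) × ZMod 2, t ≠ 0 ∧
        (∀ g, g ∈ B ↔ g + t ∈ B) := by
  haveI : NeZero (3*p) := ⟨by have := hp.two_le; positivity⟩
  haveI : NeZero (5*q) := ⟨by have := hq.two_le; positivity⟩
  have h3 : (3:ℕ) ∣ 3*p := ⟨p, rfl⟩
  have h5 : (5:ℕ) ∣ 5*q := ⟨q, rfl⟩
  set φ3 := ZMod.castHom h3 (ZMod 3) with hφ3def
  set φ5 := ZMod.castHom h5 (ZMod 5) with hφ5def
  set B : Set (ZMod (3 * p) × ZMod (5 * q) × ZMod 2) :=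
    {g | (φ3 g.1 = 0 ∧ g.2.2 = 0 ∧ φ5 g.2.1 = (if g.1 = 0 then 1 else 0)) ∨
         (φ5 g.2.1 = 0 ∧ g.2.2 = 1 ∧ φ3 g.1 = (if g.2.1 = 0 then 1 else 0))} with hBdef
  have hz2 : ∀ z : ZMod 2, z = 0 ∨ z = 1 := by decide
  have hval3 : ∀ u : ZMod 3, ((u.val : ℕ) : ZMod 3) = u := by
    intro u; simp [ZMod.natCast_val, ZMod.cast_id]
  have hval5 : ∀ u : ZMod 5, ((u.val : ℕ) : ZMod 5) = u := by
    intro u; simp [ZMod.natCast_val, ZMod.cast_id]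
  refine ⟨B, ?_, ?_⟩
  · -- tiling
    rintro ⟨x, y, z⟩
    rcases hz2 z with rfl | rfl
    · -- layer 0
      set i : ℕ := (φ3 x).val with hidef
      have hi : i < 3 := ZMod.val_lt _
      have hφi : ((i : ZMod 3)) = φ3 x := hval3 _
      set u : ZMod (3*p) := x - (i : ZMod (3*p)) with hudef
      have hu : φ3 u = 0 := by
        rw [hudef, map_sub, map_natCast, hφi, sub_self]
      set c : ZMod 5 := if u = 0 then 1 else 0 with hcdef
      set j : ℕ := (φ5 y - c).val with hjdef
      have hj : j < 5 := ZMod.val_lt _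
      have hφj : ((j : ZMod 5)) = φ5 y - c := hval5 _
      set v : ZMod (5*q) := y - (j : ZMod (5*q)) with hvdef
      have hv : φ5 v = c := by
        rw [hvdef, map_sub, map_natCast, hφj]; ring
      refine ⟨(((i : ZMod (3*p)), (j : ZMod (5*q)), 0), (u, v, 0)), ⟨?_, ?_, ?_⟩, ?_⟩
      · rw [hA]; exact ⟨i, hi, j, hj, rfl⟩
      · exact Or.inl ⟨hu, rfl, hv⟩
      · simp [hudef, hvdef, Prod.ext_iff, Prod.mk_add_mk]
      · rintro ⟨a₁, b₁⟩ ⟨ha₁, hb₁, hsum⟩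
        rw [hA] at ha₁
        obtain ⟨i', hi', j', hj', rfl⟩ := ha₁
        obtain ⟨u', v', w'⟩ := b₁
        simp only [Prod.mk_add_mk, Prod.mk.injEq] at hsum
        obtain ⟨hs1, hs2, hs3⟩ := hsum
        have hw' : w' = 0 := by
          have : (0 : ZMod 2) + w' = 0 := hs3
          simpa using this
        rcases hb₁ with ⟨hbu, -, hbv⟩ | ⟨-, hbw, -⟩
        · -- compute i', u', j', v'
          simp only at hbu hbv
          have hii : i' = i := by
            have : ((i' : ZMod 3)) = φ3 x := by
              have := congrArg φ3 hs1
              rw [map_add, map_natCast, hbu, add_zero] at this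
              exact this
            have h2 : ((i' : ZMod 3)).val = i := by rw [this]
            rwa [ZMod.val_cast_of_lt hi'] at h2
          subst hii
          have huu : u' = u := by
            rw [hudef, ← hs1]; ring
          subst huu
          have hjj : j' = j := by
            have hcv : φ5 v' = c := by rw [hbv, hcdef]
            have : ((j' : ZMod 5)) = φ5 y - c := by
              have := congrArg φ5 hs2
              rw [map_add, map_natCast, hcv] at this
              rw [← this]; ring
            have h2 : ((j' : ZMod 5)).val = j := by rw [this, hjdef]
            rwa [ZMod.val_cast_of_lt hj'] at h2
          subst hjj
          have hvv : v' = v := by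
            rw [hvdef, ← hs2]; ring
          subst hvv
          simp [hw']
        · exfalso
          simp only at hbw
          rw [hw'] at hbw
          exact absurd hbw (by decide)
    · -- layer 1
      set j : ℕ := (φ5 y).val with hjdef
      have hj : j < 5 := ZMod.val_lt _
      have hφj : ((j : ZMod 5)) = φ5 y := hval5 _
      set v : ZMod (5*q) := y - (j : ZMod (5*q)) with hvdef
      have hv : φ5 v = 0 := by
        rw [hvdef, map_sub, map_natCast, hφj, sub_self]
      set c : ZMod 3 := if v = 0 then 1 else 0 with hcdef
      set i : ℕ := (φ3 x - c).val with hidef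
      have hi : i < 3 := ZMod.val_lt _
      have hφi : ((i : ZMod 3)) = φ3 x - c := hval3 _
      set u : ZMod (3*p) := x - (i : ZMod (3*p)) with hudef
      have hu : φ3 u = c := by
        rw [hudef, map_sub, map_natCast, hφi]; ring
      refine ⟨(((i : ZMod (3*p)), (j : ZMod (5*q)), 0), (u, v, 1)), ⟨?_, ?_, ?_⟩, ?_⟩
      · rw [hA]; exact ⟨i, hi, j, hj, rfl⟩
      · exact Or.inr ⟨hv, rfl, hu⟩
      · simp [hudef, hvdef, Prod.ext_iff, Prod.mk_add_mk]
      · rintro ⟨a₁, b₁⟩ ⟨ha₁, hb₁, hsum⟩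
        rw [hA] at ha₁
        obtain ⟨i', hi', j', hj', rfl⟩ := ha₁
        obtain ⟨u', v', w'⟩ := b₁
        simp only [Prod.mk_add_mk, Prod.mk.injEq] at hsum
        obtain ⟨hs1, hs2, hs3⟩ := hsum
        have hw' : w' = 1 := by
          have : (0 : ZMod 2) + w' = 1 := hs3
          simpa using this
        rcases hb₁ with ⟨-, hbw, -⟩ | ⟨hbv, -, hbu⟩
        · exfalso
          simp only at hbw
          rw [hw'] at hbw
          exact absurd hbw (by decide)
        · simp only at hbu hbv
          have hjj : j' = j := by
            have : ((j' : ZMod 5)) = φ5 y := by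
              have := congrArg φ5 hs2
              rw [map_add, map_natCast, hbv, add_zero] at this
              exact this
            have h2 : ((j' : ZMod 5)).val = j := by rw [this]
            rwa [ZMod.val_cast_of_lt hj'] at h2
          subst hjj
          have hvv : v' = v := by
            rw [hvdef, ← hs2]; ring
          subst hvv
          have hii : i' = i := by
            have hcu : φ3 u' = c := by rw [hbu, hcdef]
            have : ((i' : ZMod 3)) = φ3 x - c := by
              have := congrArg φ3 hs1
              rw [map_add, map_natCast, hcu] at this
              rw [← this]; ring
            have h2 : ((i' : ZMod 3)).val = i := by rw [this, hidef]
            rwa [ZMod.val_cast_of_lt hi'] at h2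
          subst hii
          have huu : u' = u := by
            rw [hudef, ← hs1]; ring
          subst huu
          simp [hw']
  · -- nonperiodicity
    rintro ⟨⟨t₁, t₂, t₃⟩, ht, hBt⟩
    -- basic nonvanishing facts
    have h3ne : ((3:ℕ) : ZMod (3*p)) ≠ 0 := by
      rw [Ne, ZMod.natCast_eq_zero_iff]
      intro h; have := Nat.le_of_dvd (by norm_num) h; omega
    have h6ne : ((6:ℕ) : ZMod (3*p)) ≠ 0 := by
      rw [Ne, ZMod.natCast_eq_zero_iff]
      intro h; have := Nat.le_of_dvd (by norm_num) h; omega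
    have h36 : ((3:ℕ) : ZMod (3*p)) ≠ ((6:ℕ) : ZMod (3*p)) := by
      intro h
      have : ((6:ℕ) : ZMod (3*p)) - ((3:ℕ) : ZMod (3*p)) = 0 := by rw [h]; ring
      have h63 : ((6:ℕ) : ZMod (3*p)) - ((3:ℕ) : ZMod (3*p)) = ((3:ℕ) : ZMod (3*p)) := by
        push_cast; ring
      rw [h63] at this
      exact h3ne this
    -- membership facts
    have m01 : ((0 : ZMod (3*p)), (1 : ZMod (5*q)), (0 : ZMod 2)) ∈ B := by
      rw [hBdef]; left
      refine ⟨map_zero _, rfl, ?_⟩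
      rw [if_pos rfl, map_one]
    have m30 : (((3:ℕ) : ZMod (3*p)), (0 : ZMod (5*q)), (0 : ZMod 2)) ∈ B := by
      rw [hBdef]; left
      refine ⟨?_, rfl, ?_⟩
      · rw [map_natCast]; decide
      · rw [if_neg h3ne, map_zero]
    have m60 : (((6:ℕ) : ZMod (3*p)), (0 : ZMod (5*q)), (0 : ZMod 2)) ∈ B := by
      rw [hBdef]; left
      refine ⟨?_, rfl, ?_⟩
      · rw [map_natCast]; decide
      · rw [if_neg h6ne, map_zero]
    have m10 : ((1 : ZMod (3*p)), (0 : ZMod (5*q)), (1 : ZMod 2)) ∈ B := by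
      rw [hBdef]; right
      refine ⟨map_zero _, rfl, ?_⟩
      rw [if_pos rfl, map_one]
    have s01 := (hBt _).1 m01
    have s30 := (hBt _).1 m30
    have s60 := (hBt _).1 m60
    have s10 := (hBt _).1 m10
    rw [hBdef] at s01 s30 s60 s10
    simp only [Prod.mk_add_mk, Set.mem_setOf_eq, zero_add] at s01 s30 s60 s10
    rcases hz2 t₃ with rfl | rfl
    · -- t₃ = 0 : all shifted points stay in layer 0
      have e30 : φ5 t₂ = if ((3:ℕ) : ZMod (3*p)) + t₁ = 0 then 1 else 0 := by
        rcases s30 with ⟨-, -, h⟩ | ⟨-, h, -⟩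
        · simpa using h
        · exact absurd h (by decide)
      have e60 : φ5 t₂ = if ((6:ℕ) : ZMod (3*p)) + t₁ = 0 then 1 else 0 := by
        rcases s60 with ⟨-, -, h⟩ | ⟨-, h, -⟩
        · simpa using h
        · exact absurd h (by decide)
      have ht2five : φ5 t₂ = 0 := by
        by_cases hc : ((3:ℕ) : ZMod (3*p)) + t₁ = 0
        · have hc6 : ((6:ℕ) : ZMod (3*p)) + t₁ ≠ 0 := by
            intro h6
            apply h36
            have := hc.trans h6.symm
            exact add_right_cancel this
          rw [e60, if_neg hc6]
        · rw [e30, if_neg hc]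
      have e01 : φ5 (1 + t₂) = if t₁ = 0 then 1 else 0 := by
        rcases s01 with ⟨-, -, h⟩ | ⟨-, h, -⟩
        · simpa using h
        · exact absurd h (by decide)
      have hone : φ5 (1 + t₂) = 1 := by rw [map_add, map_one, ht2five, add_zero]
      have ht1 : t₁ = 0 := by
        by_contra hne
        rw [e01, if_neg hne] at hone
        exact absurd hone (by decide)
      have e10 : φ3 (1 + t₁) = if t₂ = 0 then 1 else 0 := by
        rcases s10 with ⟨-, h, -⟩ | ⟨-, -, h⟩
        · exact absurd h (by decide)
        · simpa using h
      have hone3 : φ3 (1 + t₁) = 1 := by rw [ht1, add_zero, map_one]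
      have ht2 : t₂ = 0 := by
        by_contra hne
        rw [e10, if_neg hne] at hone3
        exact absurd hone3 (by decide)
      exact ht (by rw [ht1, ht2]; rfl)
    · -- t₃ = 1 : shifted points land in layer 1
      have e30 : φ5 t₂ = 0 := by
        rcases s30 with ⟨-, h, -⟩ | ⟨h, -, -⟩
        · exact absurd h (by decide)
        · exact h
      have e01 : φ5 (1 + t₂) = 0 := by
        rcases s01 with ⟨-, h, -⟩ | ⟨h, -, -⟩
        · exact absurd h (by decide)
        · exact h
      rw [map_add, map_one, e30, add_zero] at e01
      exact absurd e01 (by decide)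
end

section
/- For every positive integer D, there exists a finite set A ⊆ {0,...,D} and B ⊆ ℤ with A ⊕ B = ℤ and least period of B at least 2D. (Lower bound 𝒯(D) ≥ 2D.) -/
private lemma shift_mem (D : ℕ) (hD : 0 < D) (n : ℤ) :
    (n - D) % (2 * D) < D ↔ ¬ (n % (2 * D) < D) := by
  have hm : (0:ℤ) < 2 * D := by positivity
  have hne : (2 * (D:ℤ)) ≠ 0 := by positivity
  -- (n - D) % m = (n + D) % m
  have h1 : (n - D) % (2 * D) = (n + D) % (2 * D) := by
    have := Int.add_mul_emod_self_left (a := n - D) (b := 2 * (D:ℤ)) (c := 1)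
    rw [← this]; ring_nf
  have hDmod : (D:ℤ) % (2 * D) = D := Int.emod_eq_of_lt (by positivity) (by omega)
  have h2 : (n + D) % (2 * D) = (n % (2 * D) + D) % (2 * D) := by
    rw [Int.add_emod, hDmod]
  set r := n % (2 * D) with hr
  have hr0 : 0 ≤ r := Int.emod_nonneg n hne
  have hr1 : r < 2 * D := Int.emod_lt_of_pos n hm
  rw [h1, h2]
  by_cases hc : r < D
  · have : (r + D) % (2 * D) = r + D := Int.emod_eq_of_lt (by omega) (by omega)
    rw [this]; constructor <;> intro h <;> omega
  · have e1 : (r + D) % (2 * D) = (r + D - 2 * D) % (2 * D) := by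
      have := Int.add_mul_emod_self_left (a := r + D - 2 * D) (b := 2 * (D:ℤ)) (c := 1)
      rw [← this]; ring_nf
    have e2 : (r + D - 2 * D) % (2 * D) = r + D - 2 * D :=
      Int.emod_eq_of_lt (by omega) (by omega)
    rw [e1, e2]; constructor <;> intro h <;> omega

/-- for every `D ≥ 1` some `A ⊆ {0,…,D}` tiles `ℤ` with a complement
whose least period is at least `2D`. -/
theorem stmt_18 (D : ℕ) (hD : 0 < D) :
    ∃ A : Finset ℕ, A ⊆ Finset.range (D + 1) ∧
      ∃ B : Set ℤ,
        (∀ n : ℤ, ∃! p : ℕ × ℤ, p.1 ∈ A ∧ p.2 ∈ B ∧ (p.1 : ℤ) + p.2 = n) ∧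
        ∀ t : ℤ, 0 < t → (∀ n : ℤ, n ∈ B ↔ n + t ∈ B) → (2 * D : ℤ) ≤ t := by
  have hm : (0:ℤ) < 2 * D := by positivity
  have hne : (2 * (D:ℤ)) ≠ 0 := by positivity
  refine ⟨{0, D}, ?_, {n : ℤ | n % (2 * D) < D}, ?_, ?_⟩
  · intro x hx
    simp only [Finset.mem_insert, Finset.mem_singleton] at hx
    rcases hx with rfl | rfl <;> simp [Finset.mem_range]
  · intro n
    by_cases hc : n % (2 * D) < D
    · refine ⟨(0, n), ⟨by simp, hc, by simp⟩, ?_⟩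
      rintro ⟨a, b⟩ ⟨ha, hb, hab⟩
      simp only [Finset.mem_insert, Finset.mem_singleton] at ha
      simp only [Set.mem_setOf_eq] at hb
      rcases ha with rfl | haD
      · simp only [Nat.cast_zero, zero_add] at hab; simp [hab]
      · exfalso
        have hb' : b = n - D := by rw [haD] at hab; push_cast at hab ⊢; omega
        rw [hb'] at hb
        exact ((shift_mem D hD n).mp hb) hc
    · refine ⟨(D, n - D), ⟨by simp, (shift_mem D hD n).mpr hc, by push_cast; ring⟩, ?_⟩
      rintro ⟨a, b⟩ ⟨ha, hb, hab⟩
      simp only [Finset.mem_insert, Finset.mem_singleton] at ha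
      simp only [Set.mem_setOf_eq] at hb
      rcases ha with rfl | haD
      · exfalso
        simp only [Nat.cast_zero, zero_add] at hab
        rw [hab] at hb; exact hc hb
      · have : b = n - D := by rw [haD] at hab; push_cast at hab ⊢; omega
        simp [haD, this]
  · intro t ht hper
    by_contra hlt
    push_neg at hlt
    have h0 : (0:ℤ) ∈ {n : ℤ | n % (2 * D) < D} := by
      simp only [Set.mem_setOf_eq, Int.zero_emod]; exact_mod_cast hD
    have ht' : (t:ℤ) ∈ {n : ℤ | n % (2 * D) < D} := by
      have := (hper 0).mp h0; simpa using this
    simp only [Set.mem_setOf_eq] at ht'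
    rw [Int.emod_eq_of_lt (by omega) (by omega)] at ht'
    have hD1 : ((D:ℤ) - 1) ∈ {n : ℤ | n % (2 * D) < D} := by
      simp only [Set.mem_setOf_eq]
      rw [Int.emod_eq_of_lt (by omega) (by omega)]; omega
    have h2 := (hper ((D:ℤ) - 1)).mp hD1
    simp only [Set.mem_setOf_eq] at h2
    rw [Int.emod_eq_of_lt (by omega) (by omega)] at h2
    omega
end

section
/- If A ⊆ {0,...,D} is finite, B ⊆ ℤ, and A ⊕ B = ℤ is a tiling, then B is periodic with some positive period at most 2^D. (Newman's bound.) -/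
/-!
If `A ⊕ B = ℤ`, then for every `n` exactly one of the points `n - a`, `a ∈ A`, lies in `B`.
Taking `a = min A` (resp. `max A`), membership of the point just right (resp. left) of a
window of `D` consecutive integers is therefore decided by the window itself, so any two
complements of `A` that agree on one window agree everywhere. Among the `2 ^ D + 1` windows
starting at `0, …, 2 ^ D` two carry the same pattern by pigeonhole; if they are `t` apart,
`B` and `B - t` are complements of `A` that agree on a window, hence `B = B - t`.
-/

open Set

theorem Int.exists_forall_Ico_mem_iff_add_mem (T : Set ℤ) (D : ℕ) :
    ∃ m t : ℤ, 0 < t ∧ t ≤ 2 ^ D ∧ ∀ k ∈ Ico m (m + D), k ∈ T ↔ k + t ∈ T := by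
  let pattern : Fin (2 ^ D + 1) → Set (Fin D) := fun j => {i | (j : ℤ) + i ∈ T}
  obtain ⟨j₁, j₂, hne, heq⟩ := Fintype.exists_ne_map_eq_of_card_lt pattern (by simp)
  wlog hlt : j₁ < j₂ generalizing j₁ j₂
  · exact this j₂ j₁ hne.symm heq.symm (lt_of_le_of_ne (not_lt.mp hlt) hne.symm)
  have hj₂ : (j₂ : ℤ) ≤ 2 ^ D := by exact_mod_cast Nat.lt_succ_iff.mp j₂.isLt
  refine ⟨j₁, j₂ - j₁, by simpa using hlt, by omega, fun k hk => ?_⟩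
  rw [mem_Ico] at hk
  obtain ⟨i, rfl⟩ : ∃ i : ℕ, k = j₁ + i := ⟨(k - j₁).toNat, by omega⟩
  rw [show (j₁ : ℤ) + i + (j₂ - j₁) = j₂ + i by ring]
  simpa [pattern] using Set.ext_iff.mp heq ⟨i, by omega⟩

namespace AddSubgroup.IsComplement

section AddCommGroup

variable {G : Type*} [AddCommGroup G] {S T T' : Set G}

theorem exists_sub_mem (hT : IsComplement S T) (g : G) : ∃ s ∈ S, g - s ∈ T := by
  obtain ⟨⟨s, hs⟩, hsT, -⟩ := isComplement_iff_existsUnique_neg_add_mem.mp hT g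
  exact ⟨s, hs, by rwa [← neg_add_eq_sub]⟩

theorem eq_of_sub_mem (hT : IsComplement S T) {g s₁ s₂ : G} (hs₁ : s₁ ∈ S) (hs₂ : s₂ ∈ S)
    (h₁ : g - s₁ ∈ T) (h₂ : g - s₂ ∈ T) : s₁ = s₂ := by
  have := (isComplement_iff_existsUnique_neg_add_mem.mp hT g).unique (y₁ := ⟨s₁, hs₁⟩)
    (y₂ := ⟨s₂, hs₂⟩) (by rwa [neg_add_eq_sub]) (by rwa [neg_add_eq_sub])
  exact congrArg Subtype.val this

theorem preimage_add_const (hT : IsComplement S T) (t : G) :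
    IsComplement S ((· + t) ⁻¹' T) := by
  refine isComplement_iff_existsUnique_neg_add_mem.mpr fun g => ?_
  simpa only [mem_preimage, add_assoc] using
    isComplement_iff_existsUnique_neg_add_mem.mp hT (g + t)

theorem sub_mem_of_forall_ne (hT : IsComplement S T) (hT' : IsComplement S T') {g s₀ : G}
    (hs₀ : s₀ ∈ S) (h : ∀ s ∈ S, s ≠ s₀ → g - s ∈ T' → g - s ∈ T) (hg : g - s₀ ∈ T) :
    g - s₀ ∈ T' := by
  obtain ⟨s, hs, hsT'⟩ := hT'.exists_sub_mem g
  obtain rfl : s = s₀ := by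
    by_contra hne
    exact hne (hT.eq_of_sub_mem hs hs₀ (h s hs hne hsT') hg)
  exact hsT'

theorem sub_mem_iff_of_forall_ne (hT : IsComplement S T) (hT' : IsComplement S T') {g s₀ : G}
    (hs₀ : s₀ ∈ S) (h : ∀ s ∈ S, s ≠ s₀ → (g - s ∈ T ↔ g - s ∈ T')) :
    g - s₀ ∈ T ↔ g - s₀ ∈ T' :=
  ⟨hT.sub_mem_of_forall_ne hT' hs₀ fun s hs hne => (h s hs hne).2,
    hT'.sub_mem_of_forall_ne hT hs₀ fun s hs hne => (h s hs hne).1⟩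

end AddCommGroup

section Int

variable {S T T' : Set ℤ} {D : ℕ} {m : ℤ}

theorem add_mem_iff_of_forall_Ico (hT : IsComplement S T) (hT' : IsComplement S T') {s₀ : ℤ}
    (hs₀ : s₀ ∈ S) (hS : S ⊆ Icc s₀ (s₀ + D)) (h : ∀ k ∈ Ico m (m + D), k ∈ T ↔ k ∈ T') :
    m + D ∈ T ↔ m + D ∈ T' := by
  have key := hT.sub_mem_iff_of_forall_ne hT' (g := m + D + s₀) hs₀ fun s hs hne =>
    h _ (by have := hS hs; simp only [mem_Icc, mem_Ico] at this ⊢; omega)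
  rwa [add_sub_cancel_right] at key

theorem sub_one_mem_iff_of_forall_Ico (hT : IsComplement S T) (hT' : IsComplement S T')
    {s₁ : ℤ} (hs₁ : s₁ ∈ S) (hS : S ⊆ Icc (s₁ - D) s₁)
    (h : ∀ k ∈ Ico m (m + D), k ∈ T ↔ k ∈ T') : m - 1 ∈ T ↔ m - 1 ∈ T' := by
  have key := hT.sub_mem_iff_of_forall_ne hT' (g := m - 1 + s₁) hs₁ fun s hs hne =>
    h _ (by have := hS hs; simp only [mem_Icc, mem_Ico] at this ⊢; omega)
  rwa [add_sub_cancel_right] at key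

theorem eq_of_forall_Ico (hT : IsComplement S T) (hT' : IsComplement S T')
    (hS : ∀ s ∈ S, ∀ s' ∈ S, s - s' ≤ D) (h : ∀ k ∈ Ico m (m + D), k ∈ T ↔ k ∈ T') :
    T = T' := by
  obtain ⟨s, hs⟩ := hT.nonempty_left
  obtain ⟨s₀, hs₀, hmin⟩ :=
    Int.exists_least_of_bdd ⟨s - D, fun z hz => by linarith [hS s hs z hz]⟩ ⟨s, hs⟩
  obtain ⟨s₁, hs₁, hmax⟩ :=
    Int.exists_greatest_of_bdd ⟨s + D, fun z hz => by linarith [hS z hz s hs]⟩ ⟨s, hs⟩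
  have hS₀ : S ⊆ Icc s₀ (s₀ + D) := fun z hz => ⟨hmin z hz, by linarith [hS z hz s₀ hs₀]⟩
  have hS₁ : S ⊆ Icc (s₁ - D) s₁ := fun z hz => ⟨by linarith [hS s₁ hs₁ z hz], hmax z hz⟩
  have window : ∀ j : ℤ, ∀ k ∈ Ico j (j + D), k ∈ T ↔ k ∈ T' := by
    intro j
    induction j using Int.inductionOn' (b := m) with
    | zero => exact h
    | succ j _ ih =>
      intro k hk
      rw [mem_Ico] at hk
      rcases (show k < j + D ∨ k = j + D by omega) with hlt | rfl
      · exact ih k ⟨by omega, hlt⟩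
      · exact hT.add_mem_iff_of_forall_Ico hT' hs₀ hS₀ ih
    | pred j _ ih =>
      intro k hk
      rw [mem_Ico] at hk
      rcases (show k = j - 1 ∨ j ≤ k by omega) with rfl | hle
      · exact hT.sub_one_mem_iff_of_forall_Ico hT' hs₁ hS₁ ih
      · exact ih k ⟨hle, by omega⟩
  ext k
  simpa using hT.add_mem_iff_of_forall_Ico hT' hs₀ hS₀ (window (k - D))

theorem exists_period_le_two_pow (hT : IsComplement S T) (hS : ∀ s ∈ S, ∀ s' ∈ S, s - s' ≤ D) :
    ∃ t : ℤ, 0 < t ∧ t ≤ 2 ^ D ∧ ∀ n, n ∈ T ↔ n + t ∈ T := by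
  obtain ⟨m, t, ht₀, ht, hwindow⟩ := Int.exists_forall_Ico_mem_iff_add_mem T D
  have hshift := hT.eq_of_forall_Ico (hT.preimage_add_const t) hS hwindow
  exact ⟨t, ht₀, ht, fun n => Set.ext_iff.mp hshift n⟩

end Int

end AddSubgroup.IsComplement

theorem AddSubgroup.isComplement_image_natCast_of_existsUnique {A : Set ℕ} {B : Set ℤ}
    (h : ∀ n : ℤ, ∃! p : ℕ × ℤ, p.1 ∈ A ∧ p.2 ∈ B ∧ (p.1 : ℤ) + p.2 = n) :
    IsComplement ((↑) '' A : Set ℤ) B := by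
  refine isComplement_iff_existsUnique_neg_add_mem.mpr fun n => ?_
  obtain ⟨⟨a, b⟩, ⟨ha, hb, rfl⟩, huniq⟩ := h n
  refine ⟨⟨a, a, ha, rfl⟩, by simpa using hb, ?_⟩
  rintro ⟨_, a', ha', rfl⟩ hb'
  have := huniq (a', -a' + (a + b)) ⟨ha', hb', by ring⟩
  exact Subtype.ext (congrArg (fun p : ℕ × ℤ => (p.1 : ℤ)) this)

/-- Newman's bound: if `A ⊆ {0,…,D}` tiles `ℤ` with complement `B`,
then `B` has a positive period at most `2^D`. -/
theorem stmt_19 (D : ℕ) (A : Finset ℕ) (hA : A ⊆ Finset.range (D + 1)) (B : Set ℤ)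
    (htile : ∀ n : ℤ, ∃! p : ℕ × ℤ, p.1 ∈ A ∧ p.2 ∈ B ∧ (p.1 : ℤ) + p.2 = n) :
    ∃ t : ℤ, 0 < t ∧ t ≤ 2 ^ D ∧ ∀ n : ℤ, n ∈ B ↔ n + t ∈ B := by
  refine (AddSubgroup.isComplement_image_natCast_of_existsUnique htile).exists_period_le_two_pow ?_
  rintro _ ⟨a, ha, rfl⟩ _ ⟨a', -, rfl⟩
  have := Finset.mem_range.mp (hA ha)
  omega
end
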